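/- arXiv:2011.10946 — 7 statements merged into one kernel-verified Lean document; each statement's English description precedes it below -/
import Mathlib

section
/- Assume the flux A satisfies (A-1)–(A-4) and (B-1)–(B-3), u₀ ∈ BV(ℝ) with u₀ − u_M compactly supported, and consider the Godunov scheme with numerical flux Ā(u,v,x,y) = max{A(x,max(u,u_M(x))), A(y,min(v,u_M(y)))}. Then the grid functions {k_ᾱ^−(x_j)}_{j∈ℤ} and {k_ᾱ^+(x_j)}_{j∈ℤ} are stationary solutions of the difference scheme: for all j ∈ ℤ, Ā(k_ᾱ^±(x_j), k_ᾱ^±(x_{j+1}), x_j, x_{j+1}) = ᾱ, and consequently one time step of the scheme applied to {k_ᾱ^±(x_j)}_j reproduces {k_ᾱ^±(x_j)}_j. -/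
open MeasureTheory Filter

/-- The midpoint `u_M(x) = (u_M^-(x) + u_M^+(x))/2` of the flat region. -/
noncomputable def uMid (uMm uMp : ℝ → ℝ) (x : ℝ) : ℝ := (uMm x + uMp x) / 2

/-- The generalized Godunov numerical flux
`Ā(u,v,x,y) = max{A(x, max(u,u_M(x))), A(y, min(v,u_M(y)))}`. -/
noncomputable def Abar (A : ℝ → ℝ → ℝ) (w : ℝ → ℝ) (u v x y : ℝ) : ℝ :=
  max (A x (max u (w x))) (A y (min v (w y)))

/-- (Lemma 3.4: the grid functions `k_ᾱ^±(x_j)` are stationary solutions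
of the Godunov difference scheme: the numerical flux is constantly `ᾱ` along them, and one
time step reproduces them.) -/
theorem kbar_stationary_for_scheme
    -- flux and its discontinuity set
    (A : ℝ → ℝ → ℝ) (Om : Set ℝ)
    -- (A-1)
    (hOm_closed : IsClosed Om) (hOm_null : volume Om = 0)
    (hA1 : ContinuousOn (Function.uncurry A) (Omᶜ ×ˢ (Set.univ : Set ℝ)))
    -- (A-2)
    (q : ℝ → ℝ) (hq_locbdd : ∀ r : ℝ, ∃ C, ∀ s ∈ Set.Icc (-r) r, |q s| ≤ C)
    (hA2 : ∀ M : ℝ, 0 < M → ∀ᵐ x ∂(volume : Measure ℝ),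
      ∀ u ∈ Set.Icc (-M) M, ∀ v ∈ Set.Icc (-M) M, |A x u - A x v| ≤ q M * |u - v|)
    -- (A-3)
    (uMm uMp : ℝ → ℝ)
    (huMm_cont : ContinuousOn uMm Omᶜ) (huMp_cont : ContinuousOn uMp Omᶜ)
    (huM_le : ∀ x, uMm x ≤ uMp x)
    (hA3_dec : ∀ x, AntitoneOn (A x) (Set.Iic (uMm x)))
    (hA3_inc : ∀ x, MonotoneOn (A x) (Set.Ici (uMp x)))
    (hA3_zero : ∀ x, ∀ z ∈ Set.Icc (uMm x) (uMp x), A x z = 0)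
    -- (A-4)
    (γ : ℝ → ℝ) (hγ_cont : ContinuousOn γ (Set.Ici 0))
    (hγ_mono : StrictMonoOn γ (Set.Ici 0)) (hγ_zero : γ 0 = 0)
    (hγ_top : Tendsto γ atTop atTop)
    (hA4p : ∀ x u, uMp x ≤ u → γ (u - uMp x) ≤ A x u)
    (hA4m : ∀ x u, u ≤ uMm x → γ (uMm x - u) ≤ A x u)
    -- (B-1): x ↦ A(x,u) is piecewise constant, with discontinuities contained in Om
    (hB1 : ∀ u : ℝ, ∀ x y : ℝ, Set.uIcc x y ⊆ Omᶜ → A x u = A y u)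
    -- (B-2)
    (η : ℝ → ℝ) (hη_cont : Continuous η)
    (a : ℝ → ℝ) (ha_BV : BoundedVariationOn a Set.univ)
    (hB2 : ∀ x y u, |A x u - A y u| ≤ η u * |a x - a y|)
    -- (B-3)
    (hB3m : BoundedVariationOn uMm Set.univ) (hB3p : BoundedVariationOn uMp Set.univ)
    -- initial data: u₀ ∈ BV(ℝ), u₀ - u_M compactly supported
    (u₀ : ℝ → ℝ) (hu₀_BV : BoundedVariationOn u₀ Set.univ)
    (hu₀_supp : HasCompactSupport (fun x => u₀ x - uMid uMm uMp x))
    -- ᾱ := sup_x A(x, u₀(x))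
    (abar : ℝ) (habar : IsLUB (Set.range fun x => A x (u₀ x)) abar)
    -- the stationary states k_ᾱ^±
    (km kp : ℝ → ℝ)
    (hkm : ∀ x, A x (km x) = abar ∧ km x ≤ uMm x)
    (hkp : ∀ x, A x (kp x) = abar ∧ uMp x ≤ kp x)
    -- the grid and ratio λ = Δt/Δx
    (Dx Dt lam : ℝ) (hDx : 0 < Dx) (hDt : 0 < Dt) (hlam : lam = Dt / Dx) :
    (∀ j : ℤ,
      Abar A (uMid uMm uMp) (km ((j : ℝ) * Dx)) (km (((j+1 : ℤ) : ℝ) * Dx))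
        ((j : ℝ) * Dx) (((j+1 : ℤ) : ℝ) * Dx) = abar) ∧
    (∀ j : ℤ,
      Abar A (uMid uMm uMp) (kp ((j : ℝ) * Dx)) (kp (((j+1 : ℤ) : ℝ) * Dx))
        ((j : ℝ) * Dx) (((j+1 : ℤ) : ℝ) * Dx) = abar) ∧
    (∀ j : ℤ,
      km ((j : ℝ) * Dx)
        - lam * (Abar A (uMid uMm uMp) (km ((j : ℝ) * Dx)) (km (((j+1 : ℤ) : ℝ) * Dx))
                  ((j : ℝ) * Dx) (((j+1 : ℤ) : ℝ) * Dx)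
               - Abar A (uMid uMm uMp) (km (((j-1 : ℤ) : ℝ) * Dx)) (km ((j : ℝ) * Dx))
                  (((j-1 : ℤ) : ℝ) * Dx) ((j : ℝ) * Dx))
        = km ((j : ℝ) * Dx)) ∧
    (∀ j : ℤ,
      kp ((j : ℝ) * Dx)
        - lam * (Abar A (uMid uMm uMp) (kp ((j : ℝ) * Dx)) (kp (((j+1 : ℤ) : ℝ) * Dx))
                  ((j : ℝ) * Dx) (((j+1 : ℤ) : ℝ) * Dx)
               - Abar A (uMid uMm uMp) (kp (((j-1 : ℤ) : ℝ) * Dx)) (kp ((j : ℝ) * Dx))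
                  (((j-1 : ℤ) : ℝ) * Dx) ((j : ℝ) * Dx))
        = kp ((j : ℝ) * Dx)) := by
  -- abar is nonnegative: abar = A 0 (km 0) ≥ γ(uMm 0 - km 0) ≥ γ 0 = 0
  have habar_nonneg : 0 ≤ abar := by
    obtain ⟨hA0, hle0⟩ := hkm 0
    have h1 : γ 0 ≤ γ (uMm 0 - km 0) :=
      (hγ_mono.monotoneOn) (le_refl (0:ℝ)) (by simp [sub_nonneg.mpr hle0])
        (sub_nonneg.mpr hle0)
    have h2 := hA4m 0 (km 0) hle0
    linarith [hγ_zero ▸ h1]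
  -- basic facts about uMid
  have hmid_mem : ∀ x, uMid uMm uMp x ∈ Set.Icc (uMm x) (uMp x) := by
    intro x
    have := huM_le x
    constructor <;> · simp only [uMid]; linarith
  have hmid_zero : ∀ x, A x (uMid uMm uMp x) = 0 := fun x =>
    hA3_zero x _ (hmid_mem x)
  -- the km flux identity
  have hm : ∀ x y : ℝ, Abar A (uMid uMm uMp) (km x) (km y) x y = abar := by
    intro x y
    have hx := hkm x; have hy := hkm y
    have h1 : max (km x) (uMid uMm uMp x) = uMid uMm uMp x :=
      max_eq_right (hx.2.trans (hmid_mem x).1)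
    have h2 : min (km y) (uMid uMm uMp y) = km y :=
      min_eq_left (hy.2.trans (hmid_mem y).1)
    simp [Abar, h1, h2, hmid_zero, hy.1, max_eq_right habar_nonneg]
  -- the kp flux identity
  have hp : ∀ x y : ℝ, Abar A (uMid uMm uMp) (kp x) (kp y) x y = abar := by
    intro x y
    have hx := hkp x; have hy := hkp y
    have h1 : max (kp x) (uMid uMm uMp x) = kp x :=
      max_eq_left ((hmid_mem x).2.trans hx.2)
    have h2 : min (kp y) (uMid uMm uMp y) = uMid uMm uMp y :=
      min_eq_right ((hmid_mem y).2.trans hy.2)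
    simp [Abar, h1, h2, hmid_zero, hx.1, max_eq_left habar_nonneg]
  refine ⟨fun j => hm _ _, fun j => hp _ _, fun j => ?_, fun j => ?_⟩
  · rw [hm, hm]; ring
  · rw [hp, hp]; ring
end

section
/- Assume the flux A satisfies (A-1)–(A-4) and (B-1)–(B-3), let ℳ := max(sup_x |k_ᾱ^−(x)|, sup_x |k_ᾱ^+(x)|), L := sup{|∂_u A(x,u)| : |u| ≤ ℳ, x ∈ ℝ}, and assume the CFL condition λL ≤ 1/2. Then the Godunov scheme is monotone on [−ℳ,ℳ]: if {v_j^n}_{j∈ℤ} and {w_j^n}_{j∈ℤ} satisfy |v_j^n|, |w_j^n| ≤ ℳ for all j, and v_j^n ≤ w_j^n for all j ∈ ℤ, then after one step of the scheme, v_j^{n+1} ≤ w_j^{n+1} for all j ∈ ℤ. -/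
open MeasureTheory Filter

/-- (Lemma 3.5: monotonicity of the Godunov scheme.) Under the CFL
condition `λL ≤ 1/2`, if two grid functions with values in `[-ℳ,ℳ]` are ordered,
then they remain ordered after one step of the scheme. -/
theorem godunov_scheme_monotone
    -- flux and its discontinuity set
    (A : ℝ → ℝ → ℝ) (Om : Set ℝ)
    -- (A-1)
    (hOm_closed : IsClosed Om) (hOm_null : volume Om = 0)
    (hA1 : ContinuousOn (Function.uncurry A) (Omᶜ ×ˢ (Set.univ : Set ℝ)))
    -- (A-2)
    (q : ℝ → ℝ) (hq_locbdd : ∀ r : ℝ, ∃ C, ∀ s ∈ Set.Icc (-r) r, |q s| ≤ C)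
    (hA2 : ∀ M : ℝ, 0 < M → ∀ᵐ x ∂(volume : Measure ℝ),
      ∀ u ∈ Set.Icc (-M) M, ∀ v ∈ Set.Icc (-M) M, |A x u - A x v| ≤ q M * |u - v|)
    -- (A-3)
    (uMm uMp : ℝ → ℝ)
    (huMm_cont : ContinuousOn uMm Omᶜ) (huMp_cont : ContinuousOn uMp Omᶜ)
    (huM_le : ∀ x, uMm x ≤ uMp x)
    (hA3_dec : ∀ x, AntitoneOn (A x) (Set.Iic (uMm x)))
    (hA3_inc : ∀ x, MonotoneOn (A x) (Set.Ici (uMp x)))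
    (hA3_zero : ∀ x, ∀ z ∈ Set.Icc (uMm x) (uMp x), A x z = 0)
    -- (A-4)
    (γ : ℝ → ℝ) (hγ_cont : ContinuousOn γ (Set.Ici 0))
    (hγ_mono : StrictMonoOn γ (Set.Ici 0)) (hγ_zero : γ 0 = 0)
    (hγ_top : Tendsto γ atTop atTop)
    (hA4p : ∀ x u, uMp x ≤ u → γ (u - uMp x) ≤ A x u)
    (hA4m : ∀ x u, u ≤ uMm x → γ (uMm x - u) ≤ A x u)
    -- (B-1): x ↦ A(x,u) is piecewise constant, with discontinuities contained in Om
    (hB1 : ∀ u : ℝ, ∀ x y : ℝ, Set.uIcc x y ⊆ Omᶜ → A x u = A y u)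
    -- (B-2)
    (η : ℝ → ℝ) (hη_cont : Continuous η)
    (a : ℝ → ℝ) (ha_BV : BoundedVariationOn a Set.univ)
    (hB2 : ∀ x y u, |A x u - A y u| ≤ η u * |a x - a y|)
    -- (B-3)
    (hB3m : BoundedVariationOn uMm Set.univ) (hB3p : BoundedVariationOn uMp Set.univ)
    -- initial data: u₀ ∈ BV(ℝ), u₀ - u_M compactly supported
    (u₀ : ℝ → ℝ) (hu₀_BV : BoundedVariationOn u₀ Set.univ)
    (hu₀_supp : HasCompactSupport (fun x => u₀ x - uMid uMm uMp x))
    -- ᾱ := sup_x A(x, u₀(x))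
    (abar : ℝ) (habar : IsLUB (Set.range fun x => A x (u₀ x)) abar)
    -- the stationary states k_ᾱ^±
    (km kp : ℝ → ℝ)
    (hkm : ∀ x, A x (km x) = abar ∧ km x ≤ uMm x)
    (hkp : ∀ x, A x (kp x) = abar ∧ uMp x ≤ kp x)
    -- ℳ bounds sup_x |k_ᾱ^-(x)| and sup_x |k_ᾱ^+(x)|
    (ℳ : ℝ) (hℳm : ∀ x, |km x| ≤ ℳ) (hℳp : ∀ x, |kp x| ≤ ℳ)
    -- L : Lipschitz constant of u ↦ A(x,u) on [-ℳ,ℳ]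
    (L : ℝ) (hL : ∀ x u v : ℝ, |u| ≤ ℳ → |v| ≤ ℳ → |A x u - A x v| ≤ L * |u - v|)
    -- the grid, the ratio λ = Δt/Δx and the CFL condition
    (Dx Dt lam : ℝ) (hDx : 0 < Dx) (hDt : 0 < Dt) (hlam : lam = Dt / Dx)
    (hCFL : lam * L ≤ 1/2) :
    ∀ v w : ℕ → ℤ → ℝ, ∀ n : ℕ,
      (∀ (m : ℕ) (j : ℤ), v (m+1) j = v m j
        - lam * (Abar A (uMid uMm uMp) (v m j) (v m (j+1)) ((j : ℝ) * Dx) (((j+1 : ℤ) : ℝ) * Dx)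
               - Abar A (uMid uMm uMp) (v m (j-1)) (v m j) (((j-1 : ℤ) : ℝ) * Dx) ((j : ℝ) * Dx))) →
      (∀ (m : ℕ) (j : ℤ), w (m+1) j = w m j
        - lam * (Abar A (uMid uMm uMp) (w m j) (w m (j+1)) ((j : ℝ) * Dx) (((j+1 : ℤ) : ℝ) * Dx)
               - Abar A (uMid uMm uMp) (w m (j-1)) (w m j) (((j-1 : ℤ) : ℝ) * Dx) ((j : ℝ) * Dx))) →
      (∀ j : ℤ, |v n j| ≤ ℳ) → (∀ j : ℤ, |w n j| ≤ ℳ) →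
      (∀ j : ℤ, v n j ≤ w n j) →
      ∀ j : ℤ, v (n+1) j ≤ w (n+1) j := by
  intro v w n hv hw hvB hwB hvw j
  have hM0 : 0 ≤ ℳ := le_trans (abs_nonneg _) (hℳm 0)
  have huMm_le : ∀ x, uMm x ≤ uMid uMm uMp x := by
    intro x; unfold uMid; linarith [huM_le x]
  have huMp_ge : ∀ x, uMid uMm uMp x ≤ uMp x := by
    intro x; unfold uMid; linarith [huM_le x]
  have hbMm : ∀ x, -ℳ ≤ uMm x := fun x => le_trans (abs_le.1 (hℳm x)).1 (hkm x).2
  have hbMp : ∀ x, uMp x ≤ ℳ := fun x => le_trans (hkp x).2 (abs_le.1 (hℳp x)).2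
  have huMb : ∀ x, |uMid uMm uMp x| ≤ ℳ := by
    intro x
    exact abs_le.2 ⟨le_trans (hbMm x) (huMm_le x), le_trans (huMp_ge x) (hbMp x)⟩
  -- A x is monotone on [uMm x, ∞) and antitone on (-∞, uMp x]
  have hmono : ∀ x, MonotoneOn (A x) (Set.Ici (uMm x)) := by
    intro x s hs t ht hst
    rcases le_total t (uMp x) with h | h
    · rw [hA3_zero x s ⟨hs, le_trans hst h⟩, hA3_zero x t ⟨ht, h⟩]
    · rcases le_total s (uMp x) with h2 | h2
      · rw [hA3_zero x s ⟨hs, h2⟩]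
        have h3 := hA3_inc x (Set.mem_Ici.2 le_rfl) (Set.mem_Ici.2 h) h
        rwa [hA3_zero x (uMp x) ⟨huM_le x, le_rfl⟩] at h3
      · exact hA3_inc x h2 h hst
  have hanti : ∀ x, AntitoneOn (A x) (Set.Iic (uMp x)) := by
    intro x s hs t ht hst
    rcases le_total (uMm x) s with h | h
    · rw [hA3_zero x s ⟨h, hs⟩, hA3_zero x t ⟨le_trans h hst, ht⟩]
    · rcases le_total (uMm x) t with h2 | h2
      · rw [hA3_zero x t ⟨h2, ht⟩]
        have h3 := hA3_dec x (Set.mem_Iic.2 h) (Set.mem_Iic.2 le_rfl) h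
        rwa [hA3_zero x (uMm x) ⟨le_rfl, huM_le x⟩] at h3
      · exact hA3_dec x (Set.mem_Iic.2 (le_trans hst h2)) (Set.mem_Iic.2 h2) hst
  -- Abar is monotone in its first argument, antitone in its second
  have hAmono1 : ∀ x y vv u u', u ≤ u' →
      Abar A (uMid uMm uMp) u vv x y ≤ Abar A (uMid uMm uMp) u' vv x y := by
    intro x y vv u u' h
    unfold Abar
    refine max_le_max ?_ le_rfl
    exact hmono x (Set.mem_Ici.2 (le_trans (huMm_le x) (le_max_right _ _)))
      (Set.mem_Ici.2 (le_trans (huMm_le x) (le_max_right _ _))) (max_le_max h le_rfl)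
  have hAanti2 : ∀ x y uu vv vv', vv ≤ vv' →
      Abar A (uMid uMm uMp) uu vv' x y ≤ Abar A (uMid uMm uMp) uu vv x y := by
    intro x y uu vv vv' h
    unfold Abar
    refine max_le_max le_rfl ?_
    exact hanti y (Set.mem_Iic.2 (le_trans (min_le_right _ _) (huMp_ge y)))
      (Set.mem_Iic.2 (le_trans (min_le_right _ _) (huMp_ge y))) (min_le_min h le_rfl)
  have hLnn : ℳ = 0 ∨ 0 ≤ L := by
    rcases eq_or_lt_of_le hM0 with h | h
    · exact Or.inl h.symm
    · right
      have hb : |ℳ| ≤ ℳ := by rw [abs_of_nonneg hM0]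
      have hb2 : |(-ℳ)| ≤ ℳ := by rw [abs_neg, abs_of_nonneg hM0]
      have h1 := hL 0 ℳ (-ℳ) hb hb2
      rw [show ℳ - -ℳ = 2*ℳ by ring] at h1
      rw [abs_of_nonneg (by linarith : (0:ℝ) ≤ 2*ℳ)] at h1
      nlinarith [abs_nonneg (A 0 ℳ - A 0 (-ℳ))]
  -- Lipschitz estimates for Abar
  have hlip1 : ∀ x y vv u u', |u| ≤ ℳ → |u'| ≤ ℳ →
      |Abar A (uMid uMm uMp) u vv x y - Abar A (uMid uMm uMp) u' vv x y| ≤ L * |u - u'| := by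
    intro x y vv u u' hu hu'
    rcases hLnn with h0 | hLpos
    · have e1 : u = 0 := abs_eq_zero.1 (le_antisymm (h0 ▸ hu) (abs_nonneg _))
      have e2 : u' = 0 := abs_eq_zero.1 (le_antisymm (h0 ▸ hu') (abs_nonneg _))
      simp [e1, e2]
    · have h1 : |max u (uMid uMm uMp x) - max u' (uMid uMm uMp x)| ≤ |u - u'| := by
        have := abs_max_sub_max_le_max u (uMid uMm uMp x) u' (uMid uMm uMp x)
        rwa [sub_self, abs_zero, max_eq_left (abs_nonneg (u - u'))] at this
      have hbu : |max u (uMid uMm uMp x)| ≤ ℳ := abs_le.2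
        ⟨le_trans (abs_le.1 hu).1 (le_max_left _ _),
         max_le (abs_le.1 hu).2 (abs_le.1 (huMb x)).2⟩
      have hbu' : |max u' (uMid uMm uMp x)| ≤ ℳ := abs_le.2
        ⟨le_trans (abs_le.1 hu').1 (le_max_left _ _),
         max_le (abs_le.1 hu').2 (abs_le.1 (huMb x)).2⟩
      calc |Abar A (uMid uMm uMp) u vv x y - Abar A (uMid uMm uMp) u' vv x y|
          ≤ |A x (max u (uMid uMm uMp x)) - A x (max u' (uMid uMm uMp x))| := by
            unfold Abar
            have := abs_max_sub_max_le_max (A x (max u (uMid uMm uMp x)))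
              (A y (min vv (uMid uMm uMp y))) (A x (max u' (uMid uMm uMp x)))
              (A y (min vv (uMid uMm uMp y)))
            rwa [sub_self, abs_zero, max_eq_left (abs_nonneg
              (A x (max u (uMid uMm uMp x)) - A x (max u' (uMid uMm uMp x))))] at this
        _ ≤ L * |max u (uMid uMm uMp x) - max u' (uMid uMm uMp x)| := hL x _ _ hbu hbu'
        _ ≤ L * |u - u'| := mul_le_mul_of_nonneg_left h1 hLpos
  have hlip2 : ∀ x y uu vv vv', |vv| ≤ ℳ → |vv'| ≤ ℳ →
      |Abar A (uMid uMm uMp) uu vv x y - Abar A (uMid uMm uMp) uu vv' x y| ≤ L * |vv - vv'| := by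
    intro x y uu vv vv' hu hu'
    rcases hLnn with h0 | hLpos
    · have e1 : vv = 0 := abs_eq_zero.1 (le_antisymm (h0 ▸ hu) (abs_nonneg _))
      have e2 : vv' = 0 := abs_eq_zero.1 (le_antisymm (h0 ▸ hu') (abs_nonneg _))
      simp [e1, e2]
    · have h1 : |min vv (uMid uMm uMp y) - min vv' (uMid uMm uMp y)| ≤ |vv - vv'| := by
        have := abs_min_sub_min_le_max vv (uMid uMm uMp y) vv' (uMid uMm uMp y)
        rwa [sub_self, abs_zero, max_eq_left (abs_nonneg (vv - vv'))] at this
      have hbu : |min vv (uMid uMm uMp y)| ≤ ℳ := abs_le.2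
        ⟨le_min (abs_le.1 hu).1 (abs_le.1 (huMb y)).1,
         le_trans (min_le_left _ _) (abs_le.1 hu).2⟩
      have hbu' : |min vv' (uMid uMm uMp y)| ≤ ℳ := abs_le.2
        ⟨le_min (abs_le.1 hu').1 (abs_le.1 (huMb y)).1,
         le_trans (min_le_left _ _) (abs_le.1 hu').2⟩
      calc |Abar A (uMid uMm uMp) uu vv x y - Abar A (uMid uMm uMp) uu vv' x y|
          ≤ |A y (min vv (uMid uMm uMp y)) - A y (min vv' (uMid uMm uMp y))| := by
            unfold Abar
            have := abs_max_sub_max_le_max (A x (max uu (uMid uMm uMp x)))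
              (A y (min vv (uMid uMm uMp y))) (A x (max uu (uMid uMm uMp x)))
              (A y (min vv' (uMid uMm uMp y)))
            rwa [sub_self, abs_zero, max_eq_right (abs_nonneg
              (A y (min vv (uMid uMm uMp y)) - A y (min vv' (uMid uMm uMp y))))] at this
        _ ≤ L * |min vv (uMid uMm uMp y) - min vv' (uMid uMm uMp y)| := hL y _ _ hbu hbu'
        _ ≤ L * |vv - vv'| := mul_le_mul_of_nonneg_left h1 hLpos
  have hlam0 : 0 < lam := by rw [hlam]; positivity
  rw [hv n j, hw n j]
  have hbb : v n j ≤ w n j := hvw j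
  have h1 : Abar A (uMid uMm uMp) (v n (j-1)) (v n j) (((j-1 : ℤ) : ℝ) * Dx) ((j : ℝ) * Dx)
      ≤ Abar A (uMid uMm uMp) (w n (j-1)) (v n j) (((j-1 : ℤ) : ℝ) * Dx) ((j : ℝ) * Dx) :=
    hAmono1 _ _ _ _ _ (hvw (j-1))
  have h2 : Abar A (uMid uMm uMp) (v n j) (w n (j+1)) ((j : ℝ) * Dx) (((j+1 : ℤ) : ℝ) * Dx)
      ≤ Abar A (uMid uMm uMp) (v n j) (v n (j+1)) ((j : ℝ) * Dx) (((j+1 : ℤ) : ℝ) * Dx) :=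
    hAanti2 _ _ _ _ _ (hvw (j+1))
  have h3 := hlip1 ((j : ℝ) * Dx) (((j+1 : ℤ) : ℝ) * Dx) (w n (j+1)) (w n j) (v n j)
    (hwB j) (hvB j)
  have h4 := hlip2 (((j-1 : ℤ) : ℝ) * Dx) ((j : ℝ) * Dx) (w n (j-1)) (w n j) (v n j)
    (hwB j) (hvB j)
  rw [abs_of_nonneg (by linarith : (0:ℝ) ≤ w n j - v n j)] at h3 h4
  obtain ⟨h3a, h3b⟩ := abs_le.1 h3
  obtain ⟨h4a, h4b⟩ := abs_le.1 h4
  nlinarith [mul_le_mul_of_nonneg_left h1 hlam0.le, mul_le_mul_of_nonneg_left h2 hlam0.le,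
    mul_le_mul_of_nonneg_left h3b hlam0.le, mul_le_mul_of_nonneg_left h4a hlam0.le,
    mul_nonneg (sub_nonneg.2 hbb) (by linarith : (0:ℝ) ≤ 1 - 2*(lam*L))]
end

section
/- Assume the flux A satisfies (A-1)–(A-4) and (B-1)–(B-3), u₀ ∈ BV(ℝ) with u₀ − u_M compactly supported, and assume the CFL condition λL ≤ 1/2. Then the Godunov approximations satisfy the discrete time-continuity estimate: for every n ≥ 0, Σ_{j∈ℤ} |u_j^{n+1} − u_j^n| ≤ 2λ(η̄·TV(a) + L·TV(u₀) + L·TV(u_M)), where η̄ := sup{η(u) : |u| ≤ ℳ}, L := sup{|∂_u A(x,u)| : |u| ≤ ℳ, x ∈ ℝ}, and ℳ := max(sup_x |k_ᾱ^−(x)|, sup_x |k_ᾱ^+(x)|). -/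
open MeasureTheory Filter

/-!
The Godunov flux `Ā(p, q, x, y)` is nondecreasing in `p` and nonincreasing in `q`, and on the
sublevel sets `{z | A x z ≤ ᾱ}` it is `L`-Lipschitz in each argument: beyond `k_ᾱ^±(x)` the flux is
flat at level `ᾱ`, so every state can be truncated to `[-ℳ, ℳ]`. The scheme preserves these
sublevel sets (a step moves `u_j` at most half way towards `k_ᾱ^±`), and writing flux increments as
slopes in `[0, L]` puts the difference of two solutions in incremental form with nonnegative
coefficients when `λL ≤ 1/2`. Hence the time differences `u^{n+1} - u^n` do not grow in `ℓ¹` (over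
finite sets of cells, at the price of one neighbour on each side), and it remains to bound the
first step: `|u¹_j - u⁰_j| ≤ λ (|ΔA(·, max(u₀, u_M))| + |ΔA(·, min(u₀, u_M))|)`, and (B-2) bounds
each difference by `η̄ |Δa| + L (|Δu₀| + |Δu_M|)`, whose sums are total variations. If `L < 0`, the
Lipschitz bound forces `ℳ = 0`, and then (A-4) forces `u₀ = u_M = 0`.
-/

open Set NNReal

structure IsValley (f : ℝ → ℝ) (w : ℝ) : Prop where
  apply_center : f w = 0
  antitoneOn : AntitoneOn f (Iic w)
  monotoneOn : MonotoneOn f (Ici w)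

namespace IsValley

variable {f : ℝ → ℝ} {w : ℝ}

theorem of_eqOn_Icc {lo hi : ℝ} (hanti : AntitoneOn f (Iic lo)) (hmono : MonotoneOn f (Ici hi))
    (hzero : ∀ z ∈ Icc lo hi, f z = 0) (hw : w ∈ Icc lo hi) : IsValley f w := by
  have hlo : f lo = 0 := hzero lo ⟨le_rfl, hw.1.trans hw.2⟩
  have hhi : f hi = 0 := hzero hi ⟨hw.1.trans hw.2, le_rfl⟩
  have nonneg : ∀ z, 0 ≤ f z := fun z => by
    rcases le_total z lo with h | h
    · exact hlo ▸ hanti h self_mem_Iic h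
    rcases le_total hi z with h' | h'
    · exact hhi ▸ hmono self_mem_Ici h' h'
    · exact (hzero z ⟨h, h'⟩).ge
  refine ⟨hzero w hw, fun s hs t ht hst => ?_, fun s hs t ht hst => ?_⟩
  · rcases le_total t lo with h | h
    · exact hanti (hst.trans h) h hst
    · rw [hzero t ⟨h, (mem_Iic.1 ht).trans hw.2⟩]; exact nonneg s
  · rcases le_total hi s with h | h
    · exact hmono h (h.trans hst) hst
    · rw [hzero s ⟨hw.1.trans hs, h⟩]; exact nonneg t

theorem nonneg (hf : IsValley f w) (z : ℝ) : 0 ≤ f z := by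
  rcases le_total z w with h | h
  · exact hf.apply_center ▸ hf.antitoneOn h self_mem_Iic h
  · exact hf.apply_center ▸ hf.monotoneOn self_mem_Ici h h

theorem monotone_max (hf : IsValley f w) : Monotone fun z => f (max z w) :=
  fun _ _ h => hf.monotoneOn (mem_Ici.2 (le_max_right _ _)) (mem_Ici.2 (le_max_right _ _))
    (max_le_max h le_rfl)

theorem antitone_min (hf : IsValley f w) : Antitone fun z => f (min z w) :=
  fun _ _ h => hf.antitoneOn (mem_Iic.2 (min_le_right _ _)) (mem_Iic.2 (min_le_right _ _))
    (min_le_min h le_rfl)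

theorem ordConnected_preimage_Iic (hf : IsValley f w) (α : ℝ) : (f ⁻¹' Iic α).OrdConnected :=
  ⟨fun x hx y hy z hz => by
    rcases le_total z w with h | h
    · exact (hf.antitoneOn (hz.1.trans h) h hz.1).trans hx
    · exact (hf.monotoneOn h (h.trans hz.2) hz.2).trans hy⟩

theorem comp_neg (hf : IsValley f w) : IsValley (fun z => f (-z)) (-w) where
  apply_center := by simp [hf.apply_center]
  antitoneOn _ hs _ ht hst :=
    hf.monotoneOn (mem_Ici.2 (le_neg.1 ht)) (mem_Ici.2 (le_neg.1 hs)) (neg_le_neg hst)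
  monotoneOn _ hs _ ht hst :=
    hf.antitoneOn (mem_Iic.2 (neg_le.1 ht)) (mem_Iic.2 (neg_le.1 hs)) (neg_le_neg hst)

end IsValley

/-- `km ≤ w ≤ kp` play the roles of `k_ᾱ^-(x) ≤ u_M(x) ≤ k_ᾱ^+(x)` for `f = A x`, `α = ᾱ`. -/
structure IsLevelBracket (f : ℝ → ℝ) (w km kp α M : ℝ) (K : ℝ≥0) : Prop
    extends IsValley f w where
  apply_km : f km = α
  km_le : km ≤ w
  apply_kp : f kp = α
  le_kp : w ≤ kp
  neg_le_km : -M ≤ km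
  kp_le : kp ≤ M
  lipschitzOnWith : LipschitzOnWith K f (Icc (-M) M)

namespace IsLevelBracket

variable {f g : ℝ → ℝ} {w w' km km' kp kp' α M δ p r z : ℝ} {K : ℝ≥0}

theorem abs_sub_le (hf : IsLevelBracket f w km kp α M K) {x y : ℝ} (hx : x ∈ Icc (-M) M)
    (hy : y ∈ Icc (-M) M) : |f x - f y| ≤ K * |x - y| := by
  simpa only [Real.dist_eq] using hf.lipschitzOnWith.dist_le_mul x hx y hy

theorem Icc_subset (hf : IsLevelBracket f w km kp α M K) : Icc km kp ⊆ Icc (-M) M :=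
  fun _ hz => ⟨hf.neg_le_km.trans hz.1, hz.2.trans hf.kp_le⟩

theorem level_nonneg (hf : IsLevelBracket f w km kp α M K) : 0 ≤ α :=
  hf.apply_kp ▸ hf.nonneg kp

theorem apply_max_le (hf : IsLevelBracket f w km kp α M K) (hz : f z ≤ α) :
    f (max z w) ≤ α := by
  rcases max_choice z w with h | h <;> rw [h]
  exacts [hz, hf.apply_center ▸ hf.level_nonneg]

theorem apply_min_le (hf : IsLevelBracket f w km kp α M K) (hz : f z ≤ α) :
    f (min z w) ≤ α := by
  rcases min_choice z w with h | h <;> rw [h]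
  exacts [hz, hf.apply_center ▸ hf.level_nonneg]

/-- Above `kp` the sublevel set `{f ≤ α}` only contains the flat part `{f = α}`. -/
theorem apply_max_eq_apply_min (hf : IsLevelBracket f w km kp α M K) (hz : f z ≤ α) :
    f (max z w) = f (min (max z w) kp) := by
  rcases le_total (max z w) kp with h | h
  · rw [min_eq_left h]
  · rw [min_eq_right h, hf.apply_kp]
    exact le_antisymm (hf.apply_max_le hz)
      (hf.apply_kp ▸ hf.monotoneOn hf.le_kp (le_max_right z w) h)

theorem sub_apply_max_le (hf : IsLevelBracket f w km kp α M K) (z : ℝ) :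
    α - f (max z w) ≤ K * (max z kp - z) := by
  rcases le_total kp z with h | h
  · have hzw : w ≤ z := hf.le_kp.trans h
    rw [max_eq_left h, max_eq_left hzw, sub_self, mul_zero, sub_nonpos]
    exact hf.apply_kp ▸ hf.monotoneOn hf.le_kp hzw h
  · have hmem : max z w ∈ Icc km kp := ⟨hf.km_le.trans (le_max_right z w), max_le h hf.le_kp⟩
    rw [max_eq_right h, ← hf.apply_kp]
    calc f kp - f (max z w) ≤ K * |kp - max z w| :=
          (le_abs_self _).trans (hf.abs_sub_le (hf.Icc_subset ⟨hf.km_le.trans hf.le_kp, le_rfl⟩)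
            (hf.Icc_subset hmem))
      _ ≤ K * (kp - z) := by
          rw [abs_of_nonneg (sub_nonneg.2 hmem.2)]
          exact mul_le_mul_of_nonneg_left (by linarith [le_max_left z w]) K.2

theorem apply_max_sub_apply_max_le (hf : IsLevelBracket f w km kp α M K)
    (hg : IsLevelBracket g w' km' kp' α M K) (hfg : ∀ z ∈ Icc (-M) M, f z - g z ≤ δ)
    (hp : f p ≤ α) : f (max p w) - g (max r w') ≤ δ + K * (|p - r| + |w - w'|) := by
  set P' := min (max p w) kp
  set Q := max (min (max r w') P') w'
  have hwP' : w ≤ P' := le_min (le_max_right p w) hf.le_kp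
  have hP' : P' ∈ Icc (-M) M := hf.Icc_subset ⟨hf.km_le.trans hwP', min_le_right _ _⟩
  have hQ : Q ∈ Icc (-M) M :=
    ⟨hg.neg_le_km.trans (hg.km_le.trans (le_max_right _ _)),
      max_le ((min_le_right _ _).trans hP'.2) (hg.le_kp.trans hg.kp_le)⟩
  have hQR : g Q ≤ g (max r w') :=
    hg.monotoneOn (le_max_right _ w') (le_max_right r w')
      (max_le (min_le_left _ _) (le_max_right r w'))
  have hP'Q : |P' - Q| ≤ |p - r| + |w - w'| := by
    have hPR : max p w - max r w' ≤ |p - r| + |w - w'| :=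
      (le_abs_self _).trans ((abs_max_sub_max_le_max p w r w').trans
        (max_le_add_of_nonneg (abs_nonneg _) (abs_nonneg _)))
    have hww' : w' - w ≤ |w - w'| := abs_sub_comm w w' ▸ le_abs_self _
    rw [abs_sub_le_iff]
    constructor
    · rcases le_total (max r w') P' with h | h
      · have : max r w' ≤ Q := min_eq_left h ▸ le_max_left _ _
        linarith [min_le_left (max p w) kp]
      · have : P' ≤ Q := min_eq_right h ▸ le_max_left _ _
        linarith [abs_nonneg (p - r), abs_nonneg (w - w')]
    · have : Q ≤ P' + |w - w'| :=
        max_le (by linarith [min_le_right (max r w') P', abs_nonneg (w - w')]) (by linarith)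
      linarith [abs_nonneg (p - r)]
  calc f (max p w) - g (max r w') = (f P' - g P') + (g P' - g Q) + (g Q - g (max r w')) := by
        rw [hf.apply_max_eq_apply_min hp]; ring
    _ ≤ δ + K * |P' - Q| + 0 := by
        gcongr
        · exact hfg P' hP'
        · exact (le_abs_self _).trans (hg.abs_sub_le hP' hQ)
        · linarith
    _ ≤ δ + K * (|p - r| + |w - w'|) := by
        rw [add_zero]; gcongr

theorem abs_apply_max_sub_apply_max_le (hf : IsLevelBracket f w km kp α M K)
    (hg : IsLevelBracket g w' km' kp' α M K) (hfg : ∀ z ∈ Icc (-M) M, |f z - g z| ≤ δ)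
    (hp : f p ≤ α) (hr : g r ≤ α) :
    |f (max p w) - g (max r w')| ≤ δ + K * (|p - r| + |w - w'|) := by
  refine abs_sub_le_iff.2 ⟨hf.apply_max_sub_apply_max_le hg
    (fun z hz => (le_abs_self _).trans (hfg z hz)) hp, ?_⟩
  rw [abs_sub_comm p, abs_sub_comm w]
  exact hg.apply_max_sub_apply_max_le hf
    (fun z hz => (le_abs_self _).trans (abs_sub_comm (g z) (f z) ▸ hfg z hz)) hr

theorem comp_neg (hf : IsLevelBracket f w km kp α M K) :
    IsLevelBracket (fun z => f (-z)) (-w) (-kp) (-km) α M K where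
  toIsValley := hf.toIsValley.comp_neg
  apply_km := by simp [hf.apply_kp]
  km_le := neg_le_neg hf.le_kp
  apply_kp := by simp [hf.apply_km]
  le_kp := neg_le_neg hf.km_le
  neg_le_km := neg_le_neg hf.kp_le
  kp_le := neg_le.1 hf.neg_le_km
  lipschitzOnWith := LipschitzOnWith.of_dist_le_mul fun x hx y hy => by
    simpa only [dist_neg_neg] using hf.lipschitzOnWith.dist_le_mul (-x)
      ⟨neg_le_neg hx.2, neg_le.1 hx.1⟩ (-y) ⟨neg_le_neg hy.2, neg_le.1 hy.1⟩

theorem sub_apply_min_le (hf : IsLevelBracket f w km kp α M K) (z : ℝ) :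
    α - f (min z w) ≤ K * (z - min z km) := by
  simpa [max_neg_neg, neg_add_eq_sub] using hf.comp_neg.sub_apply_max_le (-z)

theorem abs_apply_min_sub_apply_min_le (hf : IsLevelBracket f w km kp α M K)
    (hg : IsLevelBracket g w' km' kp' α M K) (hfg : ∀ z ∈ Icc (-M) M, |f z - g z| ≤ δ)
    (hp : f p ≤ α) (hr : g r ≤ α) :
    |f (min p w) - g (min r w')| ≤ δ + K * (|p - r| + |w - w'|) := by
  have := hf.comp_neg.abs_apply_max_sub_apply_max_le hg.comp_neg
    (fun z hz => hfg (-z) ⟨neg_le_neg hz.2, neg_le.1 hz.1⟩) (p := -p) (r := -r)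
    (by simpa) (by simpa)
  simpa [max_neg_neg, neg_add_eq_sub, abs_sub_comm] using this

theorem of_flat {f : ℝ → ℝ} {lo hi km kp α M L : ℝ}
    (hanti : AntitoneOn f (Iic lo)) (hmono : MonotoneOn f (Ici hi))
    (hzero : ∀ z ∈ Icc lo hi, f z = 0) (hle : lo ≤ hi) (hkm : f km = α ∧ km ≤ lo)
    (hkp : f kp = α ∧ hi ≤ kp) (hkmM : |km| ≤ M) (hkpM : |kp| ≤ M)
    (hL : ∀ u v, |u| ≤ M → |v| ≤ M → |f u - f v| ≤ L * |u - v|) :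
    IsLevelBracket f ((lo + hi) / 2) km kp α M L.toNNReal where
  toIsValley := .of_eqOn_Icc hanti hmono hzero ⟨by linarith, by linarith⟩
  apply_km := hkm.1
  km_le := by linarith [hkm.2]
  apply_kp := hkp.1
  le_kp := by linarith [hkp.2]
  neg_le_km := (abs_le.1 hkmM).1
  kp_le := (abs_le.1 hkpM).2
  lipschitzOnWith := LipschitzOnWith.of_dist_le_mul fun u hu v hv => by
    rw [Real.dist_eq, Real.dist_eq]
    exact (hL u v (abs_le.2 hu) (abs_le.2 hv)).trans
      (mul_le_mul_of_nonneg_right (Real.le_coe_toNNReal L) (abs_nonneg _))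

end IsLevelBracket

theorem MonotoneOn.exists_mem_Icc_sub_eq_mul_sub {g : ℝ → ℝ} {s : Set ℝ} {K : ℝ≥0}
    (hmono : MonotoneOn g s) (hlip : LipschitzOnWith K g s) {p q : ℝ} (hp : p ∈ s) (hq : q ∈ s) :
    ∃ c ∈ Icc (0 : ℝ) K, g p - g q = c * (p - q) := by
  rcases eq_or_ne p q with rfl | hpq
  · exact ⟨0, ⟨le_rfl, K.2⟩, by simp⟩
  have hpq' : p - q ≠ 0 := sub_ne_zero.2 hpq
  refine ⟨(g p - g q) / (p - q), ⟨?_, ?_⟩, by field_simp⟩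
  · rcases hpq.lt_or_gt with h | h
    · exact div_nonneg_of_nonpos (sub_nonpos.2 (hmono hp hq h.le)) (sub_nonpos.2 h.le)
    · exact div_nonneg (sub_nonneg.2 (hmono hq hp h.le)) (sub_nonneg.2 h.le)
  · calc (g p - g q) / (p - q) ≤ |g p - g q| / |p - q| := (le_abs_self _).trans_eq (abs_div _ _)
      _ ≤ K := div_le_of_le_mul₀ (abs_nonneg _) K.2
          (by simpa only [Real.dist_eq] using hlip.dist_le_mul p hp q hq)

theorem AntitoneOn.exists_mem_Icc_sub_eq_mul_sub {g : ℝ → ℝ} {s : Set ℝ} {K : ℝ≥0}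
    (hanti : AntitoneOn g s) (hlip : LipschitzOnWith K g s) {p q : ℝ} (hp : p ∈ s) (hq : q ∈ s) :
    ∃ c ∈ Icc (0 : ℝ) K, g q - g p = c * (p - q) := by
  have hlip' : LipschitzOnWith K (fun x => -g x) s := LipschitzOnWith.of_dist_le_mul
    fun x hx y hy => by simpa only [dist_neg_neg] using hlip.dist_le_mul x hx y hy
  simpa only [neg_sub_neg] using hanti.neg.exists_mem_Icc_sub_eq_mul_sub hlip' hp hq

theorem Finset.sum_comp_add_sub_le_sum_sdiff {ι : Type*} [AddGroup ι] [DecidableEq ι] {g : ι → ℝ}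
    (hg : ∀ j, 0 ≤ g j) (s : Finset ι) (k : ι) :
    ∑ j ∈ s, (g (j + k) - g j) ≤ ∑ j ∈ s.image (· + k) \ s, g j :=
  calc ∑ j ∈ s, (g (j + k) - g j) = ∑ j ∈ s.image (· + k), g j - ∑ j ∈ s, g j := by
        rw [Finset.sum_sub_distrib, Finset.sum_image fun _ _ _ _ => add_right_cancel]
    _ ≤ ∑ j ∈ s.image (· + k) ∪ s, g j - ∑ j ∈ s, g j := by
        gcongr
        exacts [fun j _ _ => hg j, Finset.subset_union_left]
    _ = ∑ j ∈ s.image (· + k) \ s, g j := by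
        rw [← Finset.sum_sdiff Finset.subset_union_right, Finset.union_sdiff_right,
          add_sub_cancel_right]

def conservativeStep (lam : ℝ) (F : ℤ → ℝ → ℝ → ℝ) (v : ℤ → ℝ) (j : ℤ) : ℝ :=
  v j - lam * (F j (v j) (v (j + 1)) - F (j - 1) (v (j - 1)) (v j))

section Contraction

variable {F : ℤ → ℝ → ℝ → ℝ} {lam : ℝ} {K : ℝ≥0} {v w a b : ℤ → ℝ}

theorem abs_conservativeStep_sub_le (hlam : 0 ≤ lam) (hCFL : lam * K ≤ 1 / 2)
    (ha : ∀ j, a j ∈ Icc (0 : ℝ) K) (hb : ∀ j, b j ∈ Icc (0 : ℝ) K)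
    (hA : ∀ j, F j (v j) (v (j + 1)) - F j (w j) (v (j + 1)) = a j * (v j - w j))
    (hB : ∀ j, F j (w j) (w (j + 1)) - F j (w j) (v (j + 1)) = b j * (v (j + 1) - w (j + 1)))
    (j : ℤ) :
    |conservativeStep lam F v j - conservativeStep lam F w j| ≤ |v j - w j|
      + lam * (a (j - 1) * |v (j - 1) - w (j - 1)| - a j * |v j - w j|)
      + lam * (b j * |v (j + 1) - w (j + 1)| - b (j - 1) * |v j - w j|) := by
  have hA' := hA (j - 1)
  have hB' := hB (j - 1)
  rw [sub_add_cancel] at hA' hB'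
  have hc : 0 ≤ 1 - lam * a j - lam * b (j - 1) := by
    nlinarith [mul_le_mul_of_nonneg_left (ha j).2 hlam,
      mul_le_mul_of_nonneg_left (hb (j - 1)).2 hlam]
  have key : conservativeStep lam F v j - conservativeStep lam F w j
      = (1 - lam * a j - lam * b (j - 1)) * (v j - w j) + lam * b j * (v (j + 1) - w (j + 1))
        + lam * a (j - 1) * (v (j - 1) - w (j - 1)) := by
    unfold conservativeStep
    linear_combination (-lam) * hA j + lam * hB j + lam * hA' - lam * hB'
  rw [key]
  refine (abs_add_three _ _ _).trans (le_of_eq ?_)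
  simp only [abs_mul, abs_of_nonneg hc, abs_of_nonneg hlam, abs_of_nonneg (hb j).1,
    abs_of_nonneg (ha (j - 1)).1]
  ring

theorem sum_abs_conservativeStep_sub_le_of_slopes (hlam : 0 ≤ lam) (hCFL : lam * K ≤ 1 / 2)
    (ha : ∀ j, a j ∈ Icc (0 : ℝ) K) (hb : ∀ j, b j ∈ Icc (0 : ℝ) K)
    (hA : ∀ j, F j (v j) (v (j + 1)) - F j (w j) (v (j + 1)) = a j * (v j - w j))
    (hB : ∀ j, F j (w j) (w (j + 1)) - F j (w j) (v (j + 1)) = b j * (v (j + 1) - w (j + 1)))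
    (s : Finset ℤ) :
    ∑ j ∈ s, |conservativeStep lam F v j - conservativeStep lam F w j|
      ≤ ∑ j ∈ s.image (· - 1) ∪ s ∪ s.image (· + 1), |v j - w j| := by
  set t := s.image (· - 1) ∪ s ∪ s.image (· + 1)
  set E : ℤ → ℝ := fun j => |v j - w j|
  have hE : ∀ j, 0 ≤ E j := fun j => abs_nonneg _
  have hsub : ∀ u ⊆ t, ∑ j ∈ u \ s, K * E j ≤ K * ∑ j ∈ t \ s, E j := fun u hu => by
    rw [← Finset.mul_sum]
    exact mul_le_mul_of_nonneg_left (Finset.sum_le_sum_of_subset_of_nonneg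
      (Finset.sdiff_subset_sdiff hu le_rfl) fun j _ _ => hE j) K.2
  have hleft : ∑ j ∈ s, (a (j - 1) * E (j - 1) - a j * E j) ≤ K * ∑ j ∈ t \ s, E j := by
    calc _ ≤ ∑ j ∈ s.image (· + -1) \ s, a j * E j := by
          simpa only [← sub_eq_add_neg] using Finset.sum_comp_add_sub_le_sum_sdiff
            (fun j => mul_nonneg (ha j).1 (hE j)) s (-1)
      _ ≤ ∑ j ∈ s.image (· + -1) \ s, K * E j :=
          Finset.sum_le_sum fun j _ => mul_le_mul_of_nonneg_right (ha j).2 (hE j)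
      _ ≤ _ := by
          refine hsub _ ?_
          simpa only [← sub_eq_add_neg] using
            Finset.subset_union_left.trans Finset.subset_union_left
  have hright : ∑ j ∈ s, (b j * E (j + 1) - b (j - 1) * E j) ≤ K * ∑ j ∈ t \ s, E j := by
    calc _ ≤ ∑ j ∈ s.image (· + 1) \ s, b (j - 1) * E j := by
          simpa only [add_sub_cancel_right] using Finset.sum_comp_add_sub_le_sum_sdiff
            (fun j => mul_nonneg (hb (j - 1)).1 (hE j)) s 1
      _ ≤ ∑ j ∈ s.image (· + 1) \ s, K * E j :=
          Finset.sum_le_sum fun j _ => mul_le_mul_of_nonneg_right (hb (j - 1)).2 (hE j)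
      _ ≤ _ := hsub _ Finset.subset_union_right
  have hsplit : ∑ j ∈ t, E j = ∑ j ∈ t \ s, E j + ∑ j ∈ s, E j :=
    (Finset.sum_sdiff (Finset.subset_union_right.trans Finset.subset_union_left)).symm
  have hT : 0 ≤ ∑ j ∈ t \ s, E j := Finset.sum_nonneg fun j _ => hE j
  calc _ ≤ ∑ j ∈ s, (E j + lam * (a (j - 1) * E (j - 1) - a j * E j)
        + lam * (b j * E (j + 1) - b (j - 1) * E j)) :=
        Finset.sum_le_sum fun j _ => abs_conservativeStep_sub_le hlam hCFL ha hb hA hB j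
    _ = ∑ j ∈ s, E j + lam * ∑ j ∈ s, (a (j - 1) * E (j - 1) - a j * E j)
        + lam * ∑ j ∈ s, (b j * E (j + 1) - b (j - 1) * E j) := by
        rw [Finset.sum_add_distrib, Finset.sum_add_distrib, Finset.mul_sum, Finset.mul_sum]
    _ ≤ ∑ j ∈ s, E j + 2 * (lam * K) * ∑ j ∈ t \ s, E j := by
        nlinarith [mul_le_mul_of_nonneg_left hleft hlam, mul_le_mul_of_nonneg_left hright hlam]
    _ ≤ ∑ j ∈ t, E j := by nlinarith

theorem sum_abs_conservativeStep_sub_le {R : ℤ → Set ℝ} (hlam : 0 ≤ lam) (hCFL : lam * K ≤ 1 / 2)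
    (hmono : ∀ j, ∀ q ∈ R (j + 1), MonotoneOn (F j · q) (R j))
    (hlip : ∀ j, ∀ q ∈ R (j + 1), LipschitzOnWith K (F j · q) (R j))
    (hanti : ∀ j, ∀ p ∈ R j, AntitoneOn (F j p ·) (R (j + 1)))
    (hlip' : ∀ j, ∀ p ∈ R j, LipschitzOnWith K (F j p ·) (R (j + 1)))
    (hv : ∀ j, v j ∈ R j) (hw : ∀ j, w j ∈ R j) (s : Finset ℤ) :
    ∑ j ∈ s, |conservativeStep lam F v j - conservativeStep lam F w j|
      ≤ ∑ j ∈ s.image (· - 1) ∪ s ∪ s.image (· + 1), |v j - w j| := by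
  choose a ha hA using fun j =>
    (hmono j _ (hv (j + 1))).exists_mem_Icc_sub_eq_mul_sub (hlip j _ (hv (j + 1))) (hv j) (hw j)
  choose b hb hB using fun j => (hanti j _ (hw j)).exists_mem_Icc_sub_eq_mul_sub
    (hlip' j _ (hw j)) (hv (j + 1)) (hw (j + 1))
  exact sum_abs_conservativeStep_sub_le_of_slopes hlam hCFL ha hb hA hB s

end Contraction

theorem eVariationOn.sum_le_of_monotone_int {α E : Type*} [LinearOrder α] [PseudoEMetricSpace E]
    {f : α → E} {s : Set α} {X : ℤ → α} (hX : Monotone X) (hXs : ∀ j, X j ∈ s) (t : Finset ℤ) :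
    ∑ j ∈ t, edist (f (X (j + 1))) (f (X j)) ≤ eVariationOn f s := by
  set N := t.sup Int.natAbs
  have ht : t ⊆ (Finset.range (2 * N + 1)).image fun i : ℕ => -(N : ℤ) + i := fun j hj => by
    have : j.natAbs ≤ N := Finset.le_sup (f := Int.natAbs) hj
    exact Finset.mem_image.2 ⟨(j + N).toNat, Finset.mem_range.2 (by omega), by omega⟩
  calc ∑ j ∈ t, edist (f (X (j + 1))) (f (X j))
      ≤ ∑ j ∈ (Finset.range (2 * N + 1)).image (fun i : ℕ => -(N : ℤ) + i),
          edist (f (X (j + 1))) (f (X j)) :=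
        Finset.sum_le_sum_of_subset ht
    _ = ∑ i ∈ Finset.range (2 * N + 1), edist (f (X (-N + ↑(i + 1)))) (f (X (-N + i))) := by
        rw [Finset.sum_image fun _ _ _ _ h => by omega]
        simp only [Nat.cast_add, Nat.cast_one, add_assoc]
    _ ≤ eVariationOn f s :=
        eVariationOn.sum_le (u := fun i : ℕ => X (-N + i))
          (fun i k hik => hX (by simpa using hik)) fun i => hXs _

theorem sum_abs_sub_le_eVariationOn_toReal {φ : ℝ → ℝ} {s : Set ℝ} (hφ : BoundedVariationOn φ s)
    {X : ℤ → ℝ} (hX : Monotone X) (hXs : ∀ j, X j ∈ s) (t : Finset ℤ) :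
    ∑ j ∈ t, |φ (X (j + 1)) - φ (X j)| ≤ (eVariationOn φ s).toReal := by
  have h := ENNReal.toReal_mono hφ (eVariationOn.sum_le_of_monotone_int (f := φ) hX hXs t)
  rwa [ENNReal.toReal_sum fun _ _ => edist_ne_top _ _] at h

theorem eVariationOn_le_add_of_dist_le {α E : Type*} [LinearOrder α] [PseudoMetricSpace E]
    {f g h : α → E} {s : Set α}
    (hfg : ∀ x y, dist (h x) (h y) ≤ dist (f x) (f y) + dist (g x) (g y)) :
    eVariationOn h s ≤ eVariationOn f s + eVariationOn g s :=
  iSup_le fun ⟨n, u, hu, us⟩ =>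
    calc ∑ i ∈ Finset.range n, edist (h (u (i + 1))) (h (u i))
        ≤ ∑ i ∈ Finset.range n,
            (edist (f (u (i + 1))) (f (u i)) + edist (g (u (i + 1))) (g (u i))) :=
          Finset.sum_le_sum fun i _ => by
            simp only [edist_dist, ← ENNReal.ofReal_add dist_nonneg dist_nonneg]
            exact ENNReal.ofReal_le_ofReal (hfg _ _)
      _ ≤ eVariationOn f s + eVariationOn g s := by
          rw [Finset.sum_add_distrib]
          exact add_le_add (eVariationOn.sum_le hu us) (eVariationOn.sum_le hu us)

theorem BoundedVariationOn.uMid {uMm uMp : ℝ → ℝ} {s : Set ℝ} (hm : BoundedVariationOn uMm s)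
    (hp : BoundedVariationOn uMp s) : BoundedVariationOn (uMid uMm uMp) s :=
  ne_top_of_le_ne_top (ENNReal.add_ne_top.2 ⟨hm, hp⟩) <|
    eVariationOn_le_add_of_dist_le fun x y => by
      simp only [_root_.uMid, Real.dist_eq, abs_le]
      constructor <;> linarith [neg_abs_le (uMm x - uMm y), le_abs_self (uMm x - uMm y),
        neg_abs_le (uMp x - uMp y), le_abs_self (uMp x - uMp y)]

theorem eVariationOn_eq_zero_of_forall_eq {α E : Type*} [LinearOrder α] [PseudoEMetricSpace E]
    {f : α → E} {s : Set α} {c : E} (h : ∀ x, f x = c) : eVariationOn f s = 0 :=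
  eVariationOn.constant_on (subsingleton_singleton.anti (image_subset_iff.2 fun x _ => h x))

noncomputable def godunovFlux (A : ℝ → ℝ → ℝ) (W : ℝ → ℝ) (X : ℤ → ℝ) (j : ℤ) (p q : ℝ) : ℝ :=
  Abar A W p q (X j) (X (j + 1))

section Godunov

variable {A : ℝ → ℝ → ℝ} {W km kp a φ : ℝ → ℝ} {α M η : ℝ} {K : ℝ≥0}

theorem Abar_le {x y p q : ℝ} (hx : IsLevelBracket (A x) (W x) (km x) (kp x) α M K)
    (hy : IsLevelBracket (A y) (W y) (km y) (kp y) α M K) (hp : A x p ≤ α) (hq : A y q ≤ α) :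
    Abar A W p q x y ≤ α :=
  max_le (hx.apply_max_le hp) (hy.apply_min_le hq)

theorem monotone_Abar_left {x : ℝ} (hx : IsValley (A x) (W x)) (q y : ℝ) :
    Monotone fun p => Abar A W p q x y :=
  fun _ _ h => max_le_max (hx.monotone_max h) le_rfl

theorem antitone_Abar_right {y : ℝ} (hy : IsValley (A y) (W y)) (p x : ℝ) :
    Antitone fun q => Abar A W p q x y :=
  fun _ _ h => max_le_max le_rfl (hy.antitone_min h)

theorem lipschitzOnWith_Abar_left {x : ℝ} (hx : IsLevelBracket (A x) (W x) (km x) (kp x) α M K)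
    (q y : ℝ) : LipschitzOnWith K (fun p => Abar A W p q x y) {p | A x p ≤ α} :=
  LipschitzOnWith.of_dist_le_mul fun p hp p' hp' => by
    simpa [Real.dist_eq, Abar] using (abs_max_sub_max_le_abs _ _ _).trans
      (hx.abs_apply_max_sub_apply_max_le hx (δ := 0) (by simp) hp hp')

theorem lipschitzOnWith_Abar_right {y : ℝ} (hy : IsLevelBracket (A y) (W y) (km y) (kp y) α M K)
    (p x : ℝ) : LipschitzOnWith K (fun q => Abar A W p q x y) {q | A y q ≤ α} :=
  LipschitzOnWith.of_dist_le_mul fun q hq q' hq' => by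
    simpa [Real.dist_eq, Abar, max_comm (A x _)] using (abs_max_sub_max_le_abs _ _ _).trans
      (hy.abs_apply_min_sub_apply_min_le hy (δ := 0) (by simp) hq hq')

variable {X : ℤ → ℝ} {lam : ℝ}

theorem godunovFlux_sub_one (j : ℤ) (p q : ℝ) :
    godunovFlux A W X (j - 1) p q = Abar A W p q (X (j - 1)) (X j) := by
  rw [godunovFlux, sub_add_cancel]

/-- The new value lies between `min (v j) (km x)` and `max (v j) (kp x)`: the CFL condition
lets the step cover at most half the distance to `kp x` (resp. `km x`). -/
theorem apply_conservativeStep_godunovFlux_le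
    (hA : ∀ x, IsLevelBracket (A x) (W x) (km x) (kp x) α M K) (hlam : 0 ≤ lam)
    (hCFL : lam * K ≤ 1 / 2) {v : ℤ → ℝ} (hv : ∀ j, A (X j) (v j) ≤ α) (j : ℤ) :
    A (X j) (conservativeStep lam (godunovFlux A W X) v j) ≤ α := by
  set x := X j
  have hFr : godunovFlux A W X j (v j) (v (j + 1)) ≤ α := Abar_le (hA _) (hA _) (hv j) (hv _)
  have hFl : godunovFlux A W X (j - 1) (v (j - 1)) (v j) ≤ α := by
    rw [godunovFlux_sub_one]; exact Abar_le (hA _) (hA _) (hv _) (hv j)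
  have hup : conservativeStep lam (godunovFlux A W X) v j ≤ max (v j) (kp x) := by
    have hF : A x (max (v j) (W x)) ≤ godunovFlux A W X j (v j) (v (j + 1)) := le_max_left _ _
    have hmax : 0 ≤ max (v j) (kp x) - v j := sub_nonneg.2 (le_max_left _ _)
    unfold conservativeStep
    nlinarith [mul_le_mul_of_nonneg_left ((hA x).sub_apply_max_le (v j)) hlam,
      mul_le_mul_of_nonneg_right hCFL hmax]
  have hlo : min (v j) (km x) ≤ conservativeStep lam (godunovFlux A W X) v j := by
    have hF : A x (min (v j) (W x)) ≤ godunovFlux A W X (j - 1) (v (j - 1)) (v j) := by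
      rw [godunovFlux_sub_one]; exact le_max_right _ _
    have hmin : 0 ≤ v j - min (v j) (km x) := sub_nonneg.2 (min_le_left _ _)
    unfold conservativeStep
    nlinarith [mul_le_mul_of_nonneg_left ((hA x).sub_apply_min_le (v j)) hlam,
      mul_le_mul_of_nonneg_right hCFL hmin]
  have hkm : A x (min (v j) (km x)) ≤ α := by
    rcases min_choice (v j) (km x) with h | h <;> rw [h]
    exacts [hv j, (hA x).apply_km.le]
  have hkp : A x (max (v j) (kp x)) ≤ α := by
    rcases max_choice (v j) (kp x) with h | h <;> rw [h]
    exacts [hv j, (hA x).apply_kp.le]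
  exact ((hA x).ordConnected_preimage_Iic α).out hkm hkp ⟨hlo, hup⟩

theorem sum_abs_conservativeStep_godunovFlux_sub_le
    (hA : ∀ x, IsLevelBracket (A x) (W x) (km x) (kp x) α M K) (hlam : 0 ≤ lam)
    (hCFL : lam * K ≤ 1 / 2) {v w : ℤ → ℝ} (hv : ∀ j, A (X j) (v j) ≤ α)
    (hw : ∀ j, A (X j) (w j) ≤ α) (s : Finset ℤ) :
    ∑ j ∈ s, |conservativeStep lam (godunovFlux A W X) v j
        - conservativeStep lam (godunovFlux A W X) w j|
      ≤ ∑ j ∈ s.image (· - 1) ∪ s ∪ s.image (· + 1), |v j - w j| :=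
  sum_abs_conservativeStep_sub_le (R := fun j => {z | A (X j) z ≤ α}) hlam hCFL
    (fun j q _ => (monotone_Abar_left (hA (X j)).toIsValley q (X (j + 1))).monotoneOn _)
    (fun j q _ => lipschitzOnWith_Abar_left (hA (X j)) q (X (j + 1)))
    (fun j p _ => (antitone_Abar_right (hA (X (j + 1))).toIsValley p (X j)).antitoneOn _)
    (fun j p _ => lipschitzOnWith_Abar_right (hA (X (j + 1))) p (X j)) hv hw s

theorem sum_abs_conservativeStep_godunovFlux_sub_self_le
    (hA : ∀ x, IsLevelBracket (A x) (W x) (km x) (kp x) α M K)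
    (hη : ∀ x y, ∀ z ∈ Icc (-M) M, |A x z - A y z| ≤ η * |a x - a y|) (hη₀ : 0 ≤ η)
    (ha : BoundedVariationOn a univ) (hφ : BoundedVariationOn φ univ)
    (hW : BoundedVariationOn W univ) (hφα : ∀ x, A x (φ x) ≤ α) (hX : Monotone X)
    (hlam : 0 ≤ lam) (s : Finset ℤ) :
    ∑ j ∈ s, |conservativeStep lam (godunovFlux A W X) (fun j => φ (X j)) j - φ (X j)|
      ≤ 2 * lam * (η * (eVariationOn a univ).toReal + K * (eVariationOn φ univ).toReal
        + K * (eVariationOn W univ).toReal) := by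
  set V := η * (eVariationOn a univ).toReal + K * (eVariationOn φ univ).toReal
    + K * (eVariationOn W univ).toReal
  set ψ : ℝ → ℝ → ℝ := fun x y => η * |a x - a y| + K * (|φ x - φ y| + |W x - W y|)
  have hψ : ∀ x y, 0 ≤ ψ x y := fun x y => by positivity
  have hsum : ∀ Y : ℤ → ℝ, Monotone Y → ∑ j ∈ s, ψ (Y (j + 1)) (Y j) ≤ V := fun Y hY => by
    simp only [ψ, V, Finset.sum_add_distrib, ← Finset.mul_sum, mul_add, add_assoc]
    have h := fun (f : ℝ → ℝ) (hf : BoundedVariationOn f univ) =>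
      sum_abs_sub_le_eVariationOn_toReal hf hY (fun _ => mem_univ _) s
    gcongr
    exacts [h a ha, h φ hφ, h W hW]
  have hj : ∀ j, |conservativeStep lam (godunovFlux A W X) (fun j => φ (X j)) j - φ (X j)|
      ≤ lam * (ψ (X j) (X (j - 1)) + ψ (X (j + 1)) (X j)) := fun j => by
    rw [conservativeStep, godunovFlux_sub_one, sub_sub_cancel_left, abs_neg, abs_mul,
      abs_of_nonneg hlam, godunovFlux, Abar, Abar]
    gcongr
    refine (abs_max_sub_max_le_max _ _ _ _).trans ((max_le_max ?_ ?_).trans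
      (max_le_add_of_nonneg (hψ _ _) (hψ _ _)))
    · exact (hA _).abs_apply_max_sub_apply_max_le (hA _) (hη _ _) (hφα _) (hφα _)
    · exact (hA _).abs_apply_min_sub_apply_min_le (hA _) (hη _ _) (hφα _) (hφα _)
  calc _ ≤ ∑ j ∈ s, lam * (ψ (X j) (X (j - 1)) + ψ (X (j + 1)) (X j)) :=
        Finset.sum_le_sum fun j _ => hj j
    _ = lam * (∑ j ∈ s, ψ (X (j + 1 - 1)) (X (j - 1)) + ∑ j ∈ s, ψ (X (j + 1)) (X j)) := by
        simp only [add_sub_cancel_right, ← Finset.sum_add_distrib, Finset.mul_sum]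
    _ ≤ lam * (V + V) := by
        gcongr
        exacts [hsum (fun j => X (j - 1)) fun i k h => hX (by omega), hsum X hX]
    _ = 2 * lam * V := by ring

theorem sum_abs_godunov_time_difference_le
    (hA : ∀ x, IsLevelBracket (A x) (W x) (km x) (kp x) α M K)
    (hη : ∀ x y, ∀ z ∈ Icc (-M) M, |A x z - A y z| ≤ η * |a x - a y|) (hη₀ : 0 ≤ η)
    (ha : BoundedVariationOn a univ) (hφ : BoundedVariationOn φ univ)
    (hW : BoundedVariationOn W univ) (hφα : ∀ x, A x (φ x) ≤ α) (hX : Monotone X)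
    (hlam : 0 ≤ lam) (hCFL : lam * K ≤ 1 / 2) {u : ℕ → ℤ → ℝ} (h0 : ∀ j, u 0 j = φ (X j))
    (hstep : ∀ n, u (n + 1) = conservativeStep lam (godunovFlux A W X) (u n)) (n : ℕ)
    (s : Finset ℤ) :
    ∑ j ∈ s, |u (n + 1) j - u n j|
      ≤ 2 * lam * (η * (eVariationOn a univ).toReal + K * (eVariationOn φ univ).toReal
        + K * (eVariationOn W univ).toReal) := by
  have hinv : ∀ n j, A (X j) (u n j) ≤ α := by
    intro n
    induction n with
    | zero => exact fun j => h0 j ▸ hφα _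
    | succ n ih => exact hstep n ▸ apply_conservativeStep_godunovFlux_le hA hlam hCFL ih
  induction n generalizing s with
  | zero =>
    rw [hstep 0, show u 0 = fun j => φ (X j) from funext h0]
    exact sum_abs_conservativeStep_godunovFlux_sub_self_le hA hη hη₀ ha hφ hW hφα hX hlam s
  | succ n ih =>
    have h := sum_abs_conservativeStep_godunovFlux_sub_le hA hlam hCFL (hinv (n + 1)) (hinv n) s
    rw [← hstep, ← hstep] at h
    exact h.trans (ih _)

end Godunov

theorem nonpos_of_forall_abs_sub_le_mul_of_neg {f : ℝ → ℝ} {M L : ℝ}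
    (hL : ∀ u v, |u| ≤ M → |v| ≤ M → |f u - f v| ≤ L * |u - v|) (hL₀ : L < 0) : M ≤ 0 := by
  by_contra! hM
  have h := (abs_nonneg _).trans (hL M (-M) (abs_of_pos hM).le (by rw [abs_neg, abs_of_pos hM]))
  exact hL₀.not_ge (nonneg_of_mul_nonneg_left h (abs_pos.2 (by linarith)))

theorem mem_Icc_of_apply_nonpos {f γ : ℝ → ℝ} {lo hi z : ℝ} (hγ : StrictMonoOn γ (Ici 0))
    (hγ₀ : γ 0 = 0) (hhi : ∀ u, hi ≤ u → γ (u - hi) ≤ f u) (hlo : ∀ u, u ≤ lo → γ (lo - u) ≤ f u)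
    (hz : f z ≤ 0) : z ∈ Icc lo hi := by
  have hpos : ∀ t, 0 < t → 0 < γ t := fun t ht =>
    hγ₀ ▸ hγ self_mem_Ici (mem_Ici.2 ht.le) ht
  constructor <;> by_contra! h
  · exact (hpos _ (sub_pos.2 h)).not_ge ((hlo z h.le).trans hz)
  · exact (hpos _ (sub_pos.2 h)).not_ge ((hhi z h.le).trans hz)

theorem eq_zero_of_lipschitz_neg {f γ : ℝ → ℝ} {lo hi km kp α M L z : ℝ}
    (hL : ∀ u v, |u| ≤ M → |v| ≤ M → |f u - f v| ≤ L * |u - v|) (hL₀ : L < 0)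
    (hkm : f km = α ∧ km ≤ lo) (hkp : f kp = α ∧ hi ≤ kp) (hkmM : |km| ≤ M) (hkpM : |kp| ≤ M)
    (hle : lo ≤ hi) (hzero : ∀ z ∈ Icc lo hi, f z = 0) (hγ : StrictMonoOn γ (Ici 0))
    (hγ₀ : γ 0 = 0) (hhi : ∀ u, hi ≤ u → γ (u - hi) ≤ f u) (hlo : ∀ u, u ≤ lo → γ (lo - u) ≤ f u)
    (hz : f z ≤ α) : z = 0 ∧ (lo + hi) / 2 = 0 := by
  have hM := nonpos_of_forall_abs_sub_le_mul_of_neg hL hL₀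
  have hkm₀ := abs_nonpos_iff.1 (hkmM.trans hM)
  have hkp₀ := abs_nonpos_iff.1 (hkpM.trans hM)
  have hlo₀ : lo = 0 := by linarith [hkm.2, hkp.2]
  have hhi₀ : hi = 0 := by linarith [hkm.2, hkp.2]
  have hα : α = 0 := by rw [← hkp.1, hkp₀, hzero 0 ⟨hlo₀.le, hhi₀.ge⟩]
  have hz' := mem_Icc_of_apply_nonpos hγ hγ₀ hhi hlo (hα ▸ hz)
  rw [hlo₀, hhi₀] at hz'
  exact ⟨le_antisymm hz'.2 hz'.1, by rw [hlo₀, hhi₀]; norm_num⟩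

theorem eVariationOn_eq_zero_of_nonneg_mul_abs_sub {α : Type*} [LinearOrder α] {f : α → ℝ}
    {s : Set α} {c : ℝ} (hc : c < 0) (h : ∀ x y, 0 ≤ c * |f x - f y|) : eVariationOn f s = 0 :=
  eVariationOn.constant_on <| by
    rintro _ ⟨x, -, rfl⟩ _ ⟨y, -, rfl⟩
    exact sub_eq_zero.1 (abs_nonpos_iff.1 (nonpos_of_mul_nonneg_right (h x y) hc))

theorem max_zero_mul_of_neg_imp {c V : ℝ} (h : c < 0 → V = 0) : max c 0 * V = c * V := by
  rcases le_or_gt 0 c with hc | hc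
  · rw [max_eq_left hc]
  · rw [h hc, mul_zero, mul_zero]

theorem godunov_time_continuity_general
    -- flux and its discontinuity set
    (A : ℝ → ℝ → ℝ)
    -- (A-3)
    (uMm uMp : ℝ → ℝ)
    (huM_le : ∀ x, uMm x ≤ uMp x)
    (hA3_dec : ∀ x, AntitoneOn (A x) (Set.Iic (uMm x)))
    (hA3_inc : ∀ x, MonotoneOn (A x) (Set.Ici (uMp x)))
    (hA3_zero : ∀ x, ∀ z ∈ Set.Icc (uMm x) (uMp x), A x z = 0)
    -- (A-4)
    (γ : ℝ → ℝ)
    (hγ_mono : StrictMonoOn γ (Set.Ici 0)) (hγ_zero : γ 0 = 0)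
    (hA4p : ∀ x u, uMp x ≤ u → γ (u - uMp x) ≤ A x u)
    (hA4m : ∀ x u, u ≤ uMm x → γ (uMm x - u) ≤ A x u)
    -- (B-2)
    (η : ℝ → ℝ)
    (a : ℝ → ℝ) (ha_BV : BoundedVariationOn a Set.univ)
    (hB2 : ∀ x y u, |A x u - A y u| ≤ η u * |a x - a y|)
    -- (B-3)
    (hB3m : BoundedVariationOn uMm Set.univ) (hB3p : BoundedVariationOn uMp Set.univ)
    -- initial data: u₀ ∈ BV(ℝ), u₀ - u_M compactly supported
    (u₀ : ℝ → ℝ) (hu₀_BV : BoundedVariationOn u₀ Set.univ)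
    -- ᾱ := sup_x A(x, u₀(x))
    (abar : ℝ) (habar : IsLUB (Set.range fun x => A x (u₀ x)) abar)
    -- the stationary states k_ᾱ^±
    (km kp : ℝ → ℝ)
    (hkm : ∀ x, A x (km x) = abar ∧ km x ≤ uMm x)
    (hkp : ∀ x, A x (kp x) = abar ∧ uMp x ≤ kp x)
    -- ℳ bounds sup_x |k_ᾱ^-(x)| and sup_x |k_ᾱ^+(x)|
    (ℳ : ℝ) (hℳm : ∀ x, |km x| ≤ ℳ) (hℳp : ∀ x, |kp x| ≤ ℳ)
    -- L : Lipschitz constant of u ↦ A(x,u) on [-ℳ,ℳ]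
    (L : ℝ) (hL : ∀ x u v : ℝ, |u| ≤ ℳ → |v| ≤ ℳ → |A x u - A x v| ≤ L * |u - v|)
    -- η̄ = sup{η(u) : |u| ≤ ℳ}
    (etabar : ℝ) (hetabar : ∀ w : ℝ, |w| ≤ ℳ → η w ≤ etabar)
    -- the Godunov scheme on the grid x_j = jΔx, t^n = nΔt, λ = Δt/Δx
    (Dx Dt lam : ℝ) (hDx : 0 < Dx) (hDt : 0 < Dt) (hlam : lam = Dt / Dx)
    (u : ℕ → ℤ → ℝ)
    (h0 : ∀ j : ℤ, u 0 j = u₀ ((j : ℝ) * Dx))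
    (hstep : ∀ (n : ℕ) (j : ℤ), u (n+1) j = u n j
      - lam * (Abar A (uMid uMm uMp) (u n j) (u n (j+1)) ((j : ℝ) * Dx) (((j+1 : ℤ) : ℝ) * Dx)
             - Abar A (uMid uMm uMp) (u n (j-1)) (u n j) (((j-1 : ℤ) : ℝ) * Dx) ((j : ℝ) * Dx)))
    -- the CFL condition
    (hCFL : lam * L ≤ 1/2) :
    ∀ n : ℕ, ∀ s : Finset ℤ,
      ∑ j ∈ s, |u (n+1) j - u n j| ≤
        2 * lam * (etabar * (eVariationOn a Set.univ).toReal
          + L * (eVariationOn u₀ Set.univ).toReal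
          + L * (eVariationOn (uMid uMm uMp) Set.univ).toReal) := by
  have hlam₀ : 0 ≤ lam := hlam ▸ div_nonneg hDt.le hDx.le
  have hM : 0 ≤ ℳ := (abs_nonneg _).trans (hℳm 0)
  have hA x : IsLevelBracket (A x) (uMid uMm uMp x) (km x) (kp x) abar ℳ L.toNNReal :=
    .of_flat (hA3_dec x) (hA3_inc x) (hA3_zero x) (huM_le x) (hkm x) (hkp x) (hℳm x) (hℳp x) (hL x)
  have hη x y : ∀ z ∈ Icc (-ℳ) ℳ, |A x z - A y z| ≤ etabar * |a x - a y| := fun z hz =>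
    (hB2 x y z).trans (mul_le_mul_of_nonneg_right (hetabar z (abs_le.2 hz)) (abs_nonneg _))
  have hCFL' : lam * (L.toNNReal : ℝ) ≤ 1 / 2 := by
    rw [Real.coe_toNNReal', mul_max_of_nonneg _ _ hlam₀, mul_zero]
    exact max_le hCFL (by norm_num)
  have hstep' n : u (n + 1) = conservativeStep lam (godunovFlux A (uMid uMm uMp) (· * Dx)) (u n) :=
    funext fun j => by rw [hstep, conservativeStep, godunovFlux_sub_one, godunovFlux]
  have hdeg x (hL₀ : L < 0) : u₀ x = 0 ∧ uMid uMm uMp x = 0 :=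
    eq_zero_of_lipschitz_neg (hL x) hL₀ (hkm x) (hkp x) (hℳm x) (hℳp x) (huM_le x) (hA3_zero x)
      hγ_mono hγ_zero (hA4p x) (hA4m x) (habar.1 ⟨x, rfl⟩)
  intro n s
  -- The estimate is applied with `max η̄ 0` and `max L 0`; when `η̄ < 0` (resp. `L < 0`), the
  -- variations these constants multiply vanish.
  have key := sum_abs_godunov_time_difference_le hA
    (fun x y z hz => (hη x y z hz).trans (mul_le_mul_of_nonneg_right (le_max_left _ _)
      (abs_nonneg _)))
    (le_max_right _ _) ha_BV hu₀_BV (hB3m.uMid hB3p) (fun x => habar.1 ⟨x, rfl⟩)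
    (fun i k h => mul_le_mul_of_nonneg_right (Int.cast_le.2 h) hDx.le) hlam₀ hCFL' h0 hstep' n s
  rwa [Real.coe_toNNReal', max_zero_mul_of_neg_imp fun h => by
      simp [eVariationOn_eq_zero_of_nonneg_mul_abs_sub h fun x y =>
        (abs_nonneg _).trans (hη x y 0 ⟨neg_nonpos.2 hM, hM⟩)],
    max_zero_mul_of_neg_imp fun h => by simp [eVariationOn_eq_zero_of_forall_eq (hdeg · h |>.1)],
    max_zero_mul_of_neg_imp fun h => by simp [eVariationOn_eq_zero_of_forall_eq (hdeg · h |>.2)]]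
    at key

/-- (Lemma 3.8: discrete time-continuity estimate.) Under (A-1)–(A-4),
(B-1)–(B-3), `u₀ ∈ BV(ℝ)` with `u₀ - u_M` compactly supported, and the CFL condition,
`Σ_j |u_j^{n+1} - u_j^n| ≤ 2λ(η̄·TV(a) + L·TV(u₀) + L·TV(u_M))` for every `n`. -/
theorem godunov_time_continuity
    -- flux and its discontinuity set
    (A : ℝ → ℝ → ℝ) (Om : Set ℝ)
    -- (A-1)
    (hOm_closed : IsClosed Om) (hOm_null : volume Om = 0)
    (hA1 : ContinuousOn (Function.uncurry A) (Omᶜ ×ˢ (Set.univ : Set ℝ)))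
    -- (A-2)
    (q : ℝ → ℝ) (hq_locbdd : ∀ r : ℝ, ∃ C, ∀ s ∈ Set.Icc (-r) r, |q s| ≤ C)
    (hA2 : ∀ M : ℝ, 0 < M → ∀ᵐ x ∂(volume : Measure ℝ),
      ∀ u ∈ Set.Icc (-M) M, ∀ v ∈ Set.Icc (-M) M, |A x u - A x v| ≤ q M * |u - v|)
    -- (A-3)
    (uMm uMp : ℝ → ℝ)
    (huMm_cont : ContinuousOn uMm Omᶜ) (huMp_cont : ContinuousOn uMp Omᶜ)
    (huM_le : ∀ x, uMm x ≤ uMp x)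
    (hA3_dec : ∀ x, AntitoneOn (A x) (Set.Iic (uMm x)))
    (hA3_inc : ∀ x, MonotoneOn (A x) (Set.Ici (uMp x)))
    (hA3_zero : ∀ x, ∀ z ∈ Set.Icc (uMm x) (uMp x), A x z = 0)
    -- (A-4)
    (γ : ℝ → ℝ) (hγ_cont : ContinuousOn γ (Set.Ici 0))
    (hγ_mono : StrictMonoOn γ (Set.Ici 0)) (hγ_zero : γ 0 = 0)
    (hγ_top : Tendsto γ atTop atTop)
    (hA4p : ∀ x u, uMp x ≤ u → γ (u - uMp x) ≤ A x u)
    (hA4m : ∀ x u, u ≤ uMm x → γ (uMm x - u) ≤ A x u)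
    -- (B-1): x ↦ A(x,u) is piecewise constant, with discontinuities contained in Om
    (hB1 : ∀ u : ℝ, ∀ x y : ℝ, Set.uIcc x y ⊆ Omᶜ → A x u = A y u)
    -- (B-2)
    (η : ℝ → ℝ) (hη_cont : Continuous η)
    (a : ℝ → ℝ) (ha_BV : BoundedVariationOn a Set.univ)
    (hB2 : ∀ x y u, |A x u - A y u| ≤ η u * |a x - a y|)
    -- (B-3)
    (hB3m : BoundedVariationOn uMm Set.univ) (hB3p : BoundedVariationOn uMp Set.univ)
    -- initial data: u₀ ∈ BV(ℝ), u₀ - u_M compactly supported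
    (u₀ : ℝ → ℝ) (hu₀_BV : BoundedVariationOn u₀ Set.univ)
    (hu₀_supp : HasCompactSupport (fun x => u₀ x - uMid uMm uMp x))
    -- ᾱ := sup_x A(x, u₀(x))
    (abar : ℝ) (habar : IsLUB (Set.range fun x => A x (u₀ x)) abar)
    -- the stationary states k_ᾱ^±
    (km kp : ℝ → ℝ)
    (hkm : ∀ x, A x (km x) = abar ∧ km x ≤ uMm x)
    (hkp : ∀ x, A x (kp x) = abar ∧ uMp x ≤ kp x)
    -- ℳ bounds sup_x |k_ᾱ^-(x)| and sup_x |k_ᾱ^+(x)|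
    (ℳ : ℝ) (hℳm : ∀ x, |km x| ≤ ℳ) (hℳp : ∀ x, |kp x| ≤ ℳ)
    -- L : Lipschitz constant of u ↦ A(x,u) on [-ℳ,ℳ]
    (L : ℝ) (hL : ∀ x u v : ℝ, |u| ≤ ℳ → |v| ≤ ℳ → |A x u - A x v| ≤ L * |u - v|)
    -- η̄ = sup{η(u) : |u| ≤ ℳ}
    (etabar : ℝ) (hetabar : ∀ w : ℝ, |w| ≤ ℳ → η w ≤ etabar)
    -- the Godunov scheme on the grid x_j = jΔx, t^n = nΔt, λ = Δt/Δx
    (Dx Dt lam : ℝ) (hDx : 0 < Dx) (hDt : 0 < Dt) (hlam : lam = Dt / Dx)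
    (u : ℕ → ℤ → ℝ)
    (h0 : ∀ j : ℤ, u 0 j = u₀ ((j : ℝ) * Dx))
    (hstep : ∀ (n : ℕ) (j : ℤ), u (n+1) j = u n j
      - lam * (Abar A (uMid uMm uMp) (u n j) (u n (j+1)) ((j : ℝ) * Dx) (((j+1 : ℤ) : ℝ) * Dx)
             - Abar A (uMid uMm uMp) (u n (j-1)) (u n j) (((j-1 : ℤ) : ℝ) * Dx) ((j : ℝ) * Dx)))
    -- the CFL condition
    (hCFL : lam * L ≤ 1/2) :
    ∀ n : ℕ, ∀ s : Finset ℤ,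
      ∑ j ∈ s, |u (n+1) j - u n j| ≤
        2 * lam * (etabar * (eVariationOn a Set.univ).toReal
          + L * (eVariationOn u₀ Set.univ).toReal
          + L * (eVariationOn (uMid uMm uMp) Set.univ).toReal) :=
  godunov_time_continuity_general A uMm uMp huM_le hA3_dec hA3_inc hA3_zero γ hγ_mono hγ_zero hA4p
    hA4m η a ha_BV hB2 hB3m hB3p u₀ hu₀_BV abar habar km kp hkm hkp ℳ hℳm hℳp L hL etabar hetabar Dx
    Dt lam hDx hDt hlam u h0 hstep hCFL
end

section
/- Assume the flux A satisfies (A-1)–(A-4) and (B-1)–(B-3), the Godunov approximations satisfy |u_j^n| ≤ ℳ, and the CFL condition λL ≤ 1/2 holds. Suppose x ↦ A(x,u) is constant on [x_{j−1}, x_{j+1}] (i.e. [x_{j−1},x_{j+1}] ∩ Ω = ∅). Then the Godunov scheme at cell j can be written in incremental form u_j^{n+1} = u_j^n + C_{j+1/2}^n Δ₊u_j^n − D_{j−1/2}^n Δ₋u_j^n, where C_{j+1/2}^n := −λ[Ā(u_j^n,u_{j+1}^n,x_j,x_j) − Ā(u_j^n,u_j^n,x_j,x_j)]/(u_{j+1}^n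 − u_j^n) if u_{j+1}^n ≠ u_j^n (and 0 otherwise), D_{j−1/2}^n := λ[Ā(u_j^n,u_j^n,x_j,x_j) − Ā(u_{j−1}^n,u_j^n,x_j,x_j)]/(u_j^n − u_{j−1}^n) if u_j^n ≠ u_{j−1}^n (and 0 otherwise), and these coefficients satisfy C_{j+1/2}^n, D_{j−1/2}^n ∈ [0, 1/2], hence C_{j+1/2}^n, D_{j−1/2}^n ∈ [0,1] and C_{j+1/2}^n + D_{j+1/2}^n ≤ 1. -/
open MeasureTheory Filter

/-- The incremental coefficient `C_{j+1/2}^n` of the Godunov scheme. -/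
noncomputable def Cco (A : ℝ → ℝ → ℝ) (w : ℝ → ℝ) (lam Dx : ℝ) (v : ℤ → ℝ) (j : ℤ) : ℝ :=
  if v (j+1) = v j then 0
  else -lam * (Abar A w (v j) (v (j+1)) ((j : ℝ) * Dx) ((j : ℝ) * Dx)
             - Abar A w (v j) (v j) ((j : ℝ) * Dx) ((j : ℝ) * Dx)) / (v (j+1) - v j)

/-- The incremental coefficient `D_{j-1/2}^n` of the Godunov scheme. -/
noncomputable def Dco (A : ℝ → ℝ → ℝ) (w : ℝ → ℝ) (lam Dx : ℝ) (v : ℤ → ℝ) (j : ℤ) : ℝ :=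
  if v j = v (j-1) then 0
  else lam * (Abar A w (v j) (v j) ((j : ℝ) * Dx) ((j : ℝ) * Dx)
            - Abar A w (v (j-1)) (v j) ((j : ℝ) * Dx) ((j : ℝ) * Dx)) / (v j - v (j-1))

/-! On a cell where `A(·, u)` does not depend on `x`, the flat regions `[u_M^-, u_M^+]` at
`x_{j±1}` coincide with the one at `x_j`, because by (A-3) and (A-4) the flux vanishes exactly
there; so both interface fluxes reduce to `Ā(·, ·, x_j, x_j)` and the scheme takes the
incremental form with `C` and `D` equal to `λ` times difference quotients of `Ā`.
The Godunov flux is nondecreasing in its first and nonincreasing in its second argument, which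
gives the signs, and clamping by `max`/`min` with `u_M` does not increase distances, so the
quotients are bounded by `L` and the CFL condition gives the bound `λL ≤ 1/2`. -/

open Set

section FluxShape

variable {f : ℝ → ℝ} {m p : ℝ}

theorem AntitoneOn.Iic_of_eq_zero_on_Icc (hf : AntitoneOn f (Iic m))
    (hzero : ∀ z ∈ Icc m p, f z = 0) (hmp : m ≤ p) : AntitoneOn f (Iic p) := by
  have hflat : AntitoneOn f (Icc m p) := fun a ha b hb _ =>
    ((hzero b hb).trans (hzero a ha).symm).le
  rw [← Iic_union_Icc_eq_Iic hmp]
  exact hf.union_right hflat isGreatest_Iic (isLeast_Icc hmp)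

theorem MonotoneOn.Ici_of_eq_zero_on_Icc (hf : MonotoneOn f (Ici p))
    (hzero : ∀ z ∈ Icc m p, f z = 0) (hmp : m ≤ p) : MonotoneOn f (Ici m) := by
  have hflat : MonotoneOn f (Icc m p) := fun a ha b hb _ =>
    ((hzero a ha).trans (hzero b hb).symm).le
  rw [← Icc_union_Ici_eq_Ici hmp]
  exact hflat.union_right hf (isGreatest_Icc hmp) isLeast_Ici

theorem setOf_eq_zero_eq_Icc {γ : ℝ → ℝ} (hγ : ∀ t, 0 < t → 0 < γ t)
    (hzero : ∀ z ∈ Icc m p, f z = 0)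
    (hright : ∀ u, p ≤ u → γ (u - p) ≤ f u) (hleft : ∀ u, u ≤ m → γ (m - u) ≤ f u) :
    {z | f z = 0} = Icc m p := by
  refine Subset.antisymm (fun z (hz : f z = 0) => ⟨?_, ?_⟩) hzero
  · by_contra! hzm
    linarith [hγ (m - z) (by linarith), hleft z hzm.le]
  · by_contra! hzp
    linarith [hγ (z - p) (by linarith), hright z hzp.le]

end FluxShape

section Clamp

variable {f : ℝ → ℝ} {M L b c : ℝ}

theorem abs_comp_min_sub_comp_min_le
    (hf : ∀ u v, |u| ≤ M → |v| ≤ M → |f u - f v| ≤ L * |u - v|)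
    (hb : |b| ≤ M) (hc : |c| ≤ M) (d : ℝ) :
    |f (min b d) - f (min c d)| ≤ L * |b - c| := by
  rcases eq_or_ne b c with rfl | hbc
  · simp
  -- a genuine pair of points in `[-M, M]` forces `0 ≤ L`
  have hL : 0 ≤ L := nonneg_of_mul_nonneg_left ((abs_nonneg _).trans (hf b c hb hc))
    (abs_pos.2 (sub_ne_zero.2 hbc))
  rcases le_or_gt (-M) d with hd | hd
  · have hclamp : ∀ e, |e| ≤ M → |min e d| ≤ M := fun e he =>
      abs_le.2 ⟨le_min (abs_le.1 he).1 hd, (min_le_left _ _).trans (abs_le.1 he).2⟩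
    calc |f (min b d) - f (min c d)| ≤ L * |min b d - min c d| :=
          hf _ _ (hclamp b hb) (hclamp c hc)
      _ ≤ L * |b - c| :=
        mul_le_mul_of_nonneg_left (by simpa using abs_min_sub_min_le_max b d c d) hL
  · have hbd : min b d = d := min_eq_right (by linarith [(abs_le.1 hb).1])
    have hcd : min c d = d := min_eq_right (by linarith [(abs_le.1 hc).1])
    rw [hbd, hcd, sub_self, abs_zero]
    positivity

theorem abs_comp_max_sub_comp_max_le
    (hf : ∀ u v, |u| ≤ M → |v| ≤ M → |f u - f v| ≤ L * |u - v|)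
    (hb : |b| ≤ M) (hc : |c| ≤ M) (d : ℝ) :
    |f (max b d) - f (max c d)| ≤ L * |b - c| := by
  have hneg : ∀ u v, |u| ≤ M → |v| ≤ M → |f (-u) - f (-v)| ≤ L * |u - v| := fun u v hu hv => by
    simpa [neg_add_eq_sub, abs_sub_comm] using hf (-u) (-v) (by rwa [abs_neg]) (by rwa [abs_neg])
  simpa [← max_neg_neg, neg_add_eq_sub, abs_sub_comm] using
    abs_comp_min_sub_comp_min_le hneg (b := -b) (c := -c)
      (by rwa [abs_neg]) (by rwa [abs_neg]) (-d)

end Clamp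

section GodunovFlux

variable {A : ℝ → ℝ → ℝ} {w : ℝ → ℝ} {x : ℝ}

theorem antitone_Abar_right_s6 {p : ℝ} (hA : AntitoneOn (A x) (Iic p)) (hw : w x ≤ p) (u : ℝ) :
    Antitone fun v => Abar A w u v x x := fun _ _ hvv' =>
  max_le_max le_rfl <| hA ((min_le_right _ _).trans hw) ((min_le_right _ _).trans hw)
    (min_le_min hvv' le_rfl)

theorem monotone_Abar_left_s6 {m : ℝ} (hA : MonotoneOn (A x) (Ici m)) (hw : m ≤ w x) (v : ℝ) :
    Monotone fun u => Abar A w u v x x := fun _ _ huu' =>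
  max_le_max (hA (hw.trans (le_max_right _ _)) (hw.trans (le_max_right _ _))
    (max_le_max huu' le_rfl)) le_rfl

variable {M L : ℝ}

theorem abs_Abar_sub_Abar_right_le
    (hL : ∀ u v, |u| ≤ M → |v| ≤ M → |A x u - A x v| ≤ L * |u - v|) {b c : ℝ}
    (hb : |b| ≤ M) (hc : |c| ≤ M) (u : ℝ) :
    |Abar A w u b x x - Abar A w u c x x| ≤ L * |b - c| :=
  (abs_max_sub_max_le_max _ _ _ _).trans <| by
    simpa using abs_comp_min_sub_comp_min_le hL hb hc (w x)

theorem abs_Abar_sub_Abar_left_le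
    (hL : ∀ u v, |u| ≤ M → |v| ≤ M → |A x u - A x v| ≤ L * |u - v|) {a b : ℝ}
    (ha : |a| ≤ M) (hb : |b| ≤ M) (v : ℝ) :
    |Abar A w a v x x - Abar A w b v x x| ≤ L * |a - b| :=
  (abs_max_sub_max_le_max _ _ _ _).trans <| by
    simpa using abs_comp_max_sub_comp_max_le hL ha hb (w x)

end GodunovFlux

theorem mul_slope_mem_Icc {g : ℝ → ℝ} {a b lam L : ℝ} (hg : Monotone g)
    (hlip : |g b - g a| ≤ L * |b - a|) (hlam : 0 ≤ lam) (hCFL : lam * L ≤ 1 / 2) :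
    lam * slope g a b ∈ Icc 0 (1 / 2) := by
  refine ⟨mul_nonneg hlam ((hg.monotoneOn univ).slope_nonneg trivial trivial), ?_⟩
  rcases eq_or_ne a b with rfl | hab
  · simp
  have hslope : slope g a b ≤ L := by
    refine (le_abs_self _).trans ?_
    rw [slope_def_field, abs_div, div_le_iff₀ (abs_pos.2 (sub_ne_zero.2 hab.symm))]
    exact hlip
  calc lam * slope g a b ≤ lam * L := mul_le_mul_of_nonneg_left hslope hlam
    _ ≤ 1 / 2 := hCFL

section Coefficients

variable {A : ℝ → ℝ → ℝ} {w : ℝ → ℝ} {lam Dx : ℝ} {v : ℤ → ℝ} {k : ℤ}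

theorem Cco_eq_mul_slope : Cco A w lam Dx v k =
    lam * slope (fun z => -Abar A w (v k) z (k * Dx) (k * Dx)) (v k) (v (k + 1)) := by
  unfold Cco
  split_ifs with h
  · simp [h]
  · rw [slope_def_field]
    ring

theorem Dco_eq_mul_slope : Dco A w lam Dx v k =
    lam * slope (fun z => Abar A w z (v k) (k * Dx) (k * Dx)) (v (k - 1)) (v k) := by
  unfold Dco
  split_ifs with h
  · simp [h]
  · rw [slope_def_field]
    ring

theorem Cco_mul_sub : Cco A w lam Dx v k * (v (k + 1) - v k) =
    -lam * (Abar A w (v k) (v (k + 1)) (k * Dx) (k * Dx)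
      - Abar A w (v k) (v k) (k * Dx) (k * Dx)) := by
  rw [Cco_eq_mul_slope, mul_assoc, mul_comm (slope _ _ _), ← smul_eq_mul (v (k + 1) - v k),
    sub_smul_slope, vsub_eq_sub, neg_sub_neg]
  ring

theorem Dco_mul_sub : Dco A w lam Dx v k * (v k - v (k - 1)) =
    lam * (Abar A w (v k) (v k) (k * Dx) (k * Dx)
      - Abar A w (v (k - 1)) (v k) (k * Dx) (k * Dx)) := by
  rw [Dco_eq_mul_slope, mul_assoc, mul_comm (slope _ _ _), ← smul_eq_mul (v k - v (k - 1)),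
    sub_smul_slope, vsub_eq_sub]

variable {M L : ℝ}

theorem Cco_mem_Icc {p : ℝ} (hA : AntitoneOn (A (k * Dx)) (Iic p)) (hw : w (k * Dx) ≤ p)
    (hL : ∀ u v, |u| ≤ M → |v| ≤ M → |A (k * Dx) u - A (k * Dx) v| ≤ L * |u - v|)
    (hv : ∀ i, |v i| ≤ M) (hlam : 0 ≤ lam) (hCFL : lam * L ≤ 1 / 2) :
    Cco A w lam Dx v k ∈ Icc 0 (1 / 2) := by
  rw [Cco_eq_mul_slope]
  refine mul_slope_mem_Icc (antitone_Abar_right_s6 hA hw _).neg ?_ hlam hCFL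
  simpa only [neg_sub_neg, abs_sub_comm (v (k + 1))] using
    abs_Abar_sub_Abar_right_le (w := w) hL (hv k) (hv (k + 1)) (v k)

theorem Dco_mem_Icc {m : ℝ} (hA : MonotoneOn (A (k * Dx)) (Ici m)) (hw : m ≤ w (k * Dx))
    (hL : ∀ u v, |u| ≤ M → |v| ≤ M → |A (k * Dx) u - A (k * Dx) v| ≤ L * |u - v|)
    (hv : ∀ i, |v i| ≤ M) (hlam : 0 ≤ lam) (hCFL : lam * L ≤ 1 / 2) :
    Dco A w lam Dx v k ∈ Icc 0 (1 / 2) := by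
  rw [Dco_eq_mul_slope]
  exact mul_slope_mem_Icc (monotone_Abar_left_s6 hA hw _)
    (abs_Abar_sub_Abar_left_le hL (hv k) (hv (k - 1)) (v k)) hlam hCFL

end Coefficients

theorem uMid_eq_of_flux_eq {A : ℝ → ℝ → ℝ} {uMm uMp γ : ℝ → ℝ} (hγ : ∀ t, 0 < t → 0 < γ t)
    (huM_le : ∀ x, uMm x ≤ uMp x) (hzero : ∀ x, ∀ z ∈ Icc (uMm x) (uMp x), A x z = 0)
    (hright : ∀ x u, uMp x ≤ u → γ (u - uMp x) ≤ A x u)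
    (hleft : ∀ x u, u ≤ uMm x → γ (uMm x - u) ≤ A x u) {x y : ℝ} (hxy : A x = A y) :
    uMid uMm uMp x = uMid uMm uMp y := by
  have h := setOf_eq_zero_eq_Icc hγ (hzero x) (hright x) (hleft x)
  rw [hxy, setOf_eq_zero_eq_Icc hγ (hzero y) (hright y) (hleft y),
    Icc_eq_Icc_iff (huM_le y)] at h
  simp only [uMid, h.1, h.2]

theorem godunov_incremental_form_general
    -- flux and its discontinuity set
    (A : ℝ → ℝ → ℝ)
    -- (A-3)
    (uMm uMp : ℝ → ℝ)
    (huM_le : ∀ x, uMm x ≤ uMp x)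
    (hA3_dec : ∀ x, AntitoneOn (A x) (Set.Iic (uMm x)))
    (hA3_inc : ∀ x, MonotoneOn (A x) (Set.Ici (uMp x)))
    (hA3_zero : ∀ x, ∀ z ∈ Set.Icc (uMm x) (uMp x), A x z = 0)
    -- (A-4)
    (γ : ℝ → ℝ)
    (hγ_mono : StrictMonoOn γ (Set.Ici 0)) (hγ_zero : γ 0 = 0)
    (hA4p : ∀ x u, uMp x ≤ u → γ (u - uMp x) ≤ A x u)
    (hA4m : ∀ x u, u ≤ uMm x → γ (uMm x - u) ≤ A x u)
    (ℳ : ℝ)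
    -- L : Lipschitz constant of u ↦ A(x,u) on [-ℳ,ℳ]
    (L : ℝ) (hL : ∀ x u v : ℝ, |u| ≤ ℳ → |v| ≤ ℳ → |A x u - A x v| ≤ L * |u - v|)
    -- the Godunov scheme on the grid x_j = jΔx, t^n = nΔt, λ = Δt/Δx
    (Dx Dt lam : ℝ) (hDx : 0 < Dx) (hDt : 0 < Dt) (hlam : lam = Dt / Dx)
    (u : ℕ → ℤ → ℝ)
    (hstep : ∀ (n : ℕ) (j : ℤ), u (n+1) j = u n j
      - lam * (Abar A (uMid uMm uMp) (u n j) (u n (j+1)) ((j : ℝ) * Dx) (((j+1 : ℤ) : ℝ) * Dx)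
             - Abar A (uMid uMm uMp) (u n (j-1)) (u n j) (((j-1 : ℤ) : ℝ) * Dx) ((j : ℝ) * Dx)))
    -- the CFL condition and the uniform bound on the approximations
    (hCFL : lam * L ≤ 1/2)
    (hbound : ∀ (n : ℕ) (j : ℤ), |u n j| ≤ ℳ)
    -- the cell under consideration: x ↦ A(x,w) constant on [x_{j-1}, x_{j+1}],
    -- i.e. [x_{j-1}, x_{j+1}] ∩ Ω = ∅
    (n : ℕ) (j : ℤ)
    (hconst : ∀ w : ℝ, ∀ x ∈ Set.Icc (((j-1 : ℤ) : ℝ) * Dx) (((j+1 : ℤ) : ℝ) * Dx),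
      ∀ y ∈ Set.Icc (((j-1 : ℤ) : ℝ) * Dx) (((j+1 : ℤ) : ℝ) * Dx), A x w = A y w) :
    u (n+1) j = u n j
      + Cco A (uMid uMm uMp) lam Dx (u n) j * (u n (j+1) - u n j)
      - Dco A (uMid uMm uMp) lam Dx (u n) j * (u n j - u n (j-1)) ∧
    Cco A (uMid uMm uMp) lam Dx (u n) j ∈ Set.Icc (0:ℝ) (1/2) ∧
    Dco A (uMid uMm uMp) lam Dx (u n) j ∈ Set.Icc (0:ℝ) (1/2) ∧
    Cco A (uMid uMm uMp) lam Dx (u n) j ∈ Set.Icc (0:ℝ) 1 ∧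
    Dco A (uMid uMm uMp) lam Dx (u n) j ∈ Set.Icc (0:ℝ) 1 ∧
    Cco A (uMid uMm uMp) lam Dx (u n) j + Dco A (uMid uMm uMp) lam Dx (u n) (j+1) ≤ 1 := by
  set w := uMid uMm uMp
  have hlam0 : 0 ≤ lam := hlam ▸ (div_pos hDt hDx).le
  have hC : ∀ k, Cco A w lam Dx (u n) k ∈ Icc 0 (1 / 2) := fun k =>
    Cco_mem_Icc ((hA3_dec _).Iic_of_eq_zero_on_Icc (hA3_zero _) (huM_le _))
      (by simp only [w, uMid]; linarith [huM_le (k * Dx)]) (hL _) (hbound n) hlam0 hCFL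
  have hD : ∀ k, Dco A w lam Dx (u n) k ∈ Icc 0 (1 / 2) := fun k =>
    Dco_mem_Icc ((hA3_inc _).Ici_of_eq_zero_on_Icc (hA3_zero _) (huM_le _))
      (by simp only [w, uMid]; linarith [huM_le (k * Dx)]) (hL _) (hbound n) hlam0 hCFL
  have hflux : ∀ i : ℤ, j - 1 ≤ i → i ≤ j + 1 → A (i * Dx) = A (j * Dx) := by
    have hmem : ∀ i : ℤ, j - 1 ≤ i → i ≤ j + 1 →
        (i : ℝ) * Dx ∈ Icc (((j - 1 : ℤ) : ℝ) * Dx) (((j + 1 : ℤ) : ℝ) * Dx) := fun i h₁ h₂ =>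
      ⟨by gcongr, by gcongr⟩
    exact fun i h₁ h₂ => funext fun z => hconst z _ (hmem i h₁ h₂) _ (hmem j (by omega) (by omega))
  have hγ : ∀ t, 0 < t → 0 < γ t := fun t ht =>
    hγ_zero ▸ hγ_mono self_mem_Ici (mem_Ici.2 ht.le) ht
  have hmid : ∀ i : ℤ, j - 1 ≤ i → i ≤ j + 1 → w (i * Dx) = w (j * Dx) := fun i h₁ h₂ =>
    uMid_eq_of_flux_eq hγ huM_le hA3_zero hA4p hA4m (hflux i h₁ h₂)
  have hcell : u (n + 1) j = u n j - lam *
      (Abar A w (u n j) (u n (j + 1)) (j * Dx) (j * Dx)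
        - Abar A w (u n (j - 1)) (u n j) (j * Dx) (j * Dx)) := by
    rw [hstep]
    simp only [Abar, hflux (j + 1) (by omega) le_rfl, hflux (j - 1) le_rfl (by omega),
      hmid (j + 1) (by omega) le_rfl, hmid (j - 1) le_rfl (by omega)]
  refine ⟨?_, hC j, hD j, ⟨(hC j).1, by linarith [(hC j).2]⟩,
    ⟨(hD j).1, by linarith [(hD j).2]⟩, by linarith [(hC j).2, (hD (j + 1)).2]⟩
  rw [hcell, Cco_mul_sub, Dco_mul_sub]
  ring

/-- (Lemma on the incremental form.) If `x ↦ A(x,u)` is constant on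
`[x_{j-1}, x_{j+1}]` (equivalently `[x_{j-1},x_{j+1}] ∩ Ω = ∅`), then the Godunov scheme at
cell `j` can be written in incremental form with coefficients in `[0, 1/2] ⊆ [0,1]` and
`C_{j+1/2}^n + D_{j+1/2}^n ≤ 1`. -/
theorem godunov_incremental_form
    -- flux and its discontinuity set
    (A : ℝ → ℝ → ℝ) (Om : Set ℝ)
    -- (A-1)
    (hOm_closed : IsClosed Om) (hOm_null : volume Om = 0)
    (hA1 : ContinuousOn (Function.uncurry A) (Omᶜ ×ˢ (Set.univ : Set ℝ)))
    -- (A-2)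
    (q : ℝ → ℝ) (hq_locbdd : ∀ r : ℝ, ∃ C, ∀ s ∈ Set.Icc (-r) r, |q s| ≤ C)
    (hA2 : ∀ M : ℝ, 0 < M → ∀ᵐ x ∂(volume : Measure ℝ),
      ∀ u ∈ Set.Icc (-M) M, ∀ v ∈ Set.Icc (-M) M, |A x u - A x v| ≤ q M * |u - v|)
    -- (A-3)
    (uMm uMp : ℝ → ℝ)
    (huMm_cont : ContinuousOn uMm Omᶜ) (huMp_cont : ContinuousOn uMp Omᶜ)
    (huM_le : ∀ x, uMm x ≤ uMp x)
    (hA3_dec : ∀ x, AntitoneOn (A x) (Set.Iic (uMm x)))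
    (hA3_inc : ∀ x, MonotoneOn (A x) (Set.Ici (uMp x)))
    (hA3_zero : ∀ x, ∀ z ∈ Set.Icc (uMm x) (uMp x), A x z = 0)
    -- (A-4)
    (γ : ℝ → ℝ) (hγ_cont : ContinuousOn γ (Set.Ici 0))
    (hγ_mono : StrictMonoOn γ (Set.Ici 0)) (hγ_zero : γ 0 = 0)
    (hγ_top : Tendsto γ atTop atTop)
    (hA4p : ∀ x u, uMp x ≤ u → γ (u - uMp x) ≤ A x u)
    (hA4m : ∀ x u, u ≤ uMm x → γ (uMm x - u) ≤ A x u)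
    -- (B-1): x ↦ A(x,u) is piecewise constant, with discontinuities contained in Om
    (hB1 : ∀ u : ℝ, ∀ x y : ℝ, Set.uIcc x y ⊆ Omᶜ → A x u = A y u)
    -- (B-2)
    (η : ℝ → ℝ) (hη_cont : Continuous η)
    (a : ℝ → ℝ) (ha_BV : BoundedVariationOn a Set.univ)
    (hB2 : ∀ x y u, |A x u - A y u| ≤ η u * |a x - a y|)
    -- (B-3)
    (hB3m : BoundedVariationOn uMm Set.univ) (hB3p : BoundedVariationOn uMp Set.univ)
    -- initial data
    (u₀ : ℝ → ℝ) (hu₀_BV : BoundedVariationOn u₀ Set.univ)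
    (hu₀_supp : HasCompactSupport (fun x => u₀ x - uMid uMm uMp x))
    -- ᾱ := sup_x A(x, u₀(x))
    (abar : ℝ) (habar : IsLUB (Set.range fun x => A x (u₀ x)) abar)
    -- the stationary states k_ᾱ^±
    (km kp : ℝ → ℝ)
    (hkm : ∀ x, A x (km x) = abar ∧ km x ≤ uMm x)
    (hkp : ∀ x, A x (kp x) = abar ∧ uMp x ≤ kp x)
    -- ℳ bounds sup_x |k_ᾱ^-(x)| and sup_x |k_ᾱ^+(x)|
    (ℳ : ℝ) (hℳm : ∀ x, |km x| ≤ ℳ) (hℳp : ∀ x, |kp x| ≤ ℳ)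
    -- L : Lipschitz constant of u ↦ A(x,u) on [-ℳ,ℳ]
    (L : ℝ) (hL : ∀ x u v : ℝ, |u| ≤ ℳ → |v| ≤ ℳ → |A x u - A x v| ≤ L * |u - v|)
    -- the Godunov scheme on the grid x_j = jΔx, t^n = nΔt, λ = Δt/Δx
    (Dx Dt lam : ℝ) (hDx : 0 < Dx) (hDt : 0 < Dt) (hlam : lam = Dt / Dx)
    (u : ℕ → ℤ → ℝ)
    (h0 : ∀ j : ℤ, u 0 j = u₀ ((j : ℝ) * Dx))
    (hstep : ∀ (n : ℕ) (j : ℤ), u (n+1) j = u n j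
      - lam * (Abar A (uMid uMm uMp) (u n j) (u n (j+1)) ((j : ℝ) * Dx) (((j+1 : ℤ) : ℝ) * Dx)
             - Abar A (uMid uMm uMp) (u n (j-1)) (u n j) (((j-1 : ℤ) : ℝ) * Dx) ((j : ℝ) * Dx)))
    -- the CFL condition and the uniform bound on the approximations
    (hCFL : lam * L ≤ 1/2)
    (hbound : ∀ (n : ℕ) (j : ℤ), |u n j| ≤ ℳ)
    -- the cell under consideration: x ↦ A(x,w) constant on [x_{j-1}, x_{j+1}],
    -- i.e. [x_{j-1}, x_{j+1}] ∩ Ω = ∅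
    (n : ℕ) (j : ℤ)
    (hfree : Set.Icc (((j-1 : ℤ) : ℝ) * Dx) (((j+1 : ℤ) : ℝ) * Dx) ∩ Om = ∅)
    (hconst : ∀ w : ℝ, ∀ x ∈ Set.Icc (((j-1 : ℤ) : ℝ) * Dx) (((j+1 : ℤ) : ℝ) * Dx),
      ∀ y ∈ Set.Icc (((j-1 : ℤ) : ℝ) * Dx) (((j+1 : ℤ) : ℝ) * Dx), A x w = A y w) :
    u (n+1) j = u n j
      + Cco A (uMid uMm uMp) lam Dx (u n) j * (u n (j+1) - u n j)
      - Dco A (uMid uMm uMp) lam Dx (u n) j * (u n j - u n (j-1)) ∧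
    Cco A (uMid uMm uMp) lam Dx (u n) j ∈ Set.Icc (0:ℝ) (1/2) ∧
    Dco A (uMid uMm uMp) lam Dx (u n) j ∈ Set.Icc (0:ℝ) (1/2) ∧
    Cco A (uMid uMm uMp) lam Dx (u n) j ∈ Set.Icc (0:ℝ) 1 ∧
    Dco A (uMid uMm uMp) lam Dx (u n) j ∈ Set.Icc (0:ℝ) 1 ∧
    Cco A (uMid uMm uMp) lam Dx (u n) j + Dco A (uMid uMm uMp) lam Dx (u n) (j+1) ≤ 1 :=
  godunov_incremental_form_general A uMm uMp huM_le hA3_dec hA3_inc hA3_zero γ hγ_mono hγ_zero hA4p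
    hA4m ℳ L hL Dx Dt lam hDx hDt hlam u hstep hCFL hbound n j hconst
end

section
/- Assume the flux A satisfies (A-1)–(A-4) and (B-1)–(B-3), |u_j^n| ≤ ℳ for all j,n, and the CFL condition λL ≤ 1/2. Then the Godunov approximations satisfy the discrete entropy inequalities: for every α ≥ 0, every j ∈ ℤ and every n, |u_j^{n+1} − k_{α,j}^±| ≤ |u_j^n − k_{α,j}^±| − λ(𝓕_{j+1/2}^n − 𝓕_{j−1/2}^n), where k_{α,j}^± := k_α^±(x_j) and 𝓕_{j+1/2}^n := Ā(u_j^n ∨ k_{α,j}^±, u_{j+1}^n ∨ k_{α,j+1}^±, x_j, x_{j+1}) − Ā(u_j^n ∧ k_{α,j}^±, u_{j+1}^n ∧ k_{α,j+1}^±, x_j, x_{j+1}). -/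
open MeasureTheory Filter

/-- A stationary state of height `α ≥ 0` (for `α > 0`, one of the branches `k_α^±`;
for `α = 0`, any selection from the flat region). -/
def IsStatState (A : ℝ → ℝ → ℝ) (uMm uMp : ℝ → ℝ) (α : ℝ) (k : ℝ → ℝ) : Prop :=
  (α = 0 ∧ ∀ x, k x ∈ Set.Icc (uMm x) (uMp x)) ∨
  (0 < α ∧ (∀ x, A x (k x) = α) ∧ ((∀ x, k x ≤ uMm x) ∨ (∀ x, uMp x ≤ k x)))

/-- The discrete entropy flux
`𝓕_{j+1/2}^n = Ā(u_j^n ∨ k_j, u_{j+1}^n ∨ k_{j+1}, x_j, x_{j+1})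
             - Ā(u_j^n ∧ k_j, u_{j+1}^n ∧ k_{j+1}, x_j, x_{j+1})`. -/
noncomputable def entFlux (A : ℝ → ℝ → ℝ) (w : ℝ → ℝ) (Dx : ℝ) (v : ℤ → ℝ) (k : ℝ → ℝ)
    (j : ℤ) : ℝ :=
  Abar A w (max (v j) (k ((j : ℝ) * Dx))) (max (v (j+1)) (k (((j+1 : ℤ) : ℝ) * Dx)))
    ((j : ℝ) * Dx) (((j+1 : ℤ) : ℝ) * Dx)
  - Abar A w (min (v j) (k ((j : ℝ) * Dx))) (min (v (j+1)) (k (((j+1 : ℤ) : ℝ) * Dx)))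
    ((j : ℝ) * Dx) (((j+1 : ℤ) : ℝ) * Dx)

/-- Auxiliary: the "increasing part" of the Godunov flux. -/
noncomputable def Gf (A : ℝ → ℝ → ℝ) (w : ℝ → ℝ) (x v : ℝ) : ℝ := A x (max v (w x))

/-- Auxiliary: the "decreasing part" of the Godunov flux. -/
noncomputable def Hfn (A : ℝ → ℝ → ℝ) (w : ℝ → ℝ) (x v : ℝ) : ℝ := A x (min v (w x))

lemma Abar_eq (A : ℝ → ℝ → ℝ) (w : ℝ → ℝ) (u v x y : ℝ) :
    Abar A w u v x y = max (Gf A w x u) (Hfn A w y v) := rfl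

lemma abs_min_sub_min_le_abs' (a b c : ℝ) : |min a c - min b c| ≤ |a - b| := by
  have := abs_min_sub_min_le_max a c b c
  simpa [sub_self, abs_zero, max_eq_left (abs_nonneg (a - b))] using this

set_option maxHeartbeats 2000000 in
/-- (Lemma 4.1: discrete entropy inequalities.) For every `α ≥ 0` and
every stationary state `k_α^±`, `|u_j^{n+1} - k_{α,j}^±| ≤ |u_j^n - k_{α,j}^±|
- λ(𝓕_{j+1/2}^n - 𝓕_{j-1/2}^n)`. -/
theorem godunov_discrete_entropy_inequality
    -- flux and its discontinuity set
    (A : ℝ → ℝ → ℝ) (Om : Set ℝ)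
    -- (A-1)
    (hOm_closed : IsClosed Om) (hOm_null : volume Om = 0)
    (hA1 : ContinuousOn (Function.uncurry A) (Omᶜ ×ˢ (Set.univ : Set ℝ)))
    -- (A-2)
    (q : ℝ → ℝ) (hq_locbdd : ∀ r : ℝ, ∃ C, ∀ s ∈ Set.Icc (-r) r, |q s| ≤ C)
    (hA2 : ∀ M : ℝ, 0 < M → ∀ᵐ x ∂(volume : Measure ℝ),
      ∀ u ∈ Set.Icc (-M) M, ∀ v ∈ Set.Icc (-M) M, |A x u - A x v| ≤ q M * |u - v|)
    -- (A-3)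
    (uMm uMp : ℝ → ℝ)
    (huMm_cont : ContinuousOn uMm Omᶜ) (huMp_cont : ContinuousOn uMp Omᶜ)
    (huM_le : ∀ x, uMm x ≤ uMp x)
    (hA3_dec : ∀ x, AntitoneOn (A x) (Set.Iic (uMm x)))
    (hA3_inc : ∀ x, MonotoneOn (A x) (Set.Ici (uMp x)))
    (hA3_zero : ∀ x, ∀ z ∈ Set.Icc (uMm x) (uMp x), A x z = 0)
    -- (A-4)
    (γ : ℝ → ℝ) (hγ_cont : ContinuousOn γ (Set.Ici 0))
    (hγ_mono : StrictMonoOn γ (Set.Ici 0)) (hγ_zero : γ 0 = 0)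
    (hγ_top : Tendsto γ atTop atTop)
    (hA4p : ∀ x u, uMp x ≤ u → γ (u - uMp x) ≤ A x u)
    (hA4m : ∀ x u, u ≤ uMm x → γ (uMm x - u) ≤ A x u)
    -- (B-1): x ↦ A(x,u) is piecewise constant, with discontinuities contained in Om
    (hB1 : ∀ u : ℝ, ∀ x y : ℝ, Set.uIcc x y ⊆ Omᶜ → A x u = A y u)
    -- (B-2)
    (η : ℝ → ℝ) (hη_cont : Continuous η)
    (a : ℝ → ℝ) (ha_BV : BoundedVariationOn a Set.univ)
    (hB2 : ∀ x y u, |A x u - A y u| ≤ η u * |a x - a y|)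
    -- (B-3)
    (hB3m : BoundedVariationOn uMm Set.univ) (hB3p : BoundedVariationOn uMp Set.univ)
    -- initial data
    (u₀ : ℝ → ℝ) (hu₀_BV : BoundedVariationOn u₀ Set.univ)
    (hu₀_supp : HasCompactSupport (fun x => u₀ x - uMid uMm uMp x))
    -- ᾱ := sup_x A(x, u₀(x))
    (abar : ℝ) (habar : IsLUB (Set.range fun x => A x (u₀ x)) abar)
    -- the stationary states k_ᾱ^±
    (km kp : ℝ → ℝ)
    (hkm : ∀ x, A x (km x) = abar ∧ km x ≤ uMm x)
    (hkp : ∀ x, A x (kp x) = abar ∧ uMp x ≤ kp x)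
    -- ℳ bounds sup_x |k_ᾱ^-(x)| and sup_x |k_ᾱ^+(x)|
    (ℳ : ℝ) (hℳm : ∀ x, |km x| ≤ ℳ) (hℳp : ∀ x, |kp x| ≤ ℳ)
    -- L : Lipschitz constant of u ↦ A(x,u) on [-ℳ,ℳ]
    (L : ℝ) (hL : ∀ x u v : ℝ, |u| ≤ ℳ → |v| ≤ ℳ → |A x u - A x v| ≤ L * |u - v|)
    -- the Godunov scheme on the grid x_j = jΔx, t^n = nΔt, λ = Δt/Δx
    (Dx Dt lam : ℝ) (hDx : 0 < Dx) (hDt : 0 < Dt) (hlam : lam = Dt / Dx)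
    (u : ℕ → ℤ → ℝ)
    (h0 : ∀ j : ℤ, u 0 j = u₀ ((j : ℝ) * Dx))
    (hstep : ∀ (n : ℕ) (j : ℤ), u (n+1) j = u n j
      - lam * (Abar A (uMid uMm uMp) (u n j) (u n (j+1)) ((j : ℝ) * Dx) (((j+1 : ℤ) : ℝ) * Dx)
             - Abar A (uMid uMm uMp) (u n (j-1)) (u n j) (((j-1 : ℤ) : ℝ) * Dx) ((j : ℝ) * Dx)))
    -- the CFL condition and the uniform bound on the approximations
    (hCFL : lam * L ≤ 1/2)
    (hbound : ∀ (n : ℕ) (j : ℤ), |u n j| ≤ ℳ) :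
    ∀ α : ℝ, 0 ≤ α → ∀ k : ℝ → ℝ, IsStatState A uMm uMp α k →
    ∀ (n : ℕ) (j : ℤ),
      |u (n+1) j - k ((j : ℝ) * Dx)| ≤ |u n j - k ((j : ℝ) * Dx)|
        - lam * (entFlux A (uMid uMm uMp) Dx (u n) k j
               - entFlux A (uMid uMm uMp) Dx (u n) k (j-1)) := by
  intro α hα k hk n j
  set w := uMid uMm uMp with hwdef
  -- ########## basic facts about A ##########
  have hwm : ∀ X : ℝ, uMm X ≤ w X := by
    intro X
    show uMm X ≤ (uMm X + uMp X) / 2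
    linarith [huM_le X]
  have hwp : ∀ X : ℝ, w X ≤ uMp X := by
    intro X
    show (uMm X + uMp X) / 2 ≤ uMp X
    linarith [huM_le X]
  have hAz : ∀ X z : ℝ, uMm X ≤ z → z ≤ uMp X → A X z = 0 := by
    intro X z h1 h2; exact hA3_zero X z ⟨h1, h2⟩
  have hAw : ∀ X : ℝ, A X (w X) = 0 := fun X => hAz X _ (hwm X) (hwp X)
  have hAmono : ∀ X v₁ v₂ : ℝ, uMm X ≤ v₁ → v₁ ≤ v₂ → A X v₁ ≤ A X v₂ := by
    intro X v₁ v₂ h1 h2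
    rcases le_total v₂ (uMp X) with h3 | h3
    · rw [hAz X v₁ h1 (le_trans h2 h3), hAz X v₂ (le_trans h1 h2) h3]
    · rcases le_total v₁ (uMp X) with h4 | h4
      · have h5 : A X (uMp X) ≤ A X v₂ :=
          hA3_inc X (Set.mem_Ici.2 le_rfl) (Set.mem_Ici.2 h3) h3
        rw [hAz X v₁ h1 h4, hAz X (uMp X) (huM_le X) le_rfl] at *
        linarith
      · exact hA3_inc X (Set.mem_Ici.2 h4) (Set.mem_Ici.2 (le_trans h4 h2)) h2
  have hAanti : ∀ X v₁ v₂ : ℝ, v₂ ≤ uMp X → v₁ ≤ v₂ → A X v₂ ≤ A X v₁ := by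
    intro X v₁ v₂ h1 h2
    rcases le_total (uMm X) v₁ with h3 | h3
    · rw [hAz X v₁ h3 (le_trans h2 h1), hAz X v₂ (le_trans h3 h2) h1]
    · rcases le_total (uMm X) v₂ with h4 | h4
      · have h5 : A X (uMm X) ≤ A X v₁ :=
          hA3_dec X (Set.mem_Iic.2 h3) (Set.mem_Iic.2 le_rfl) h3
        rw [hAz X v₂ h4 h1, hAz X (uMm X) le_rfl (huM_le X)] at *
        linarith
      · exact hA3_dec X (Set.mem_Iic.2 (le_trans h2 h4)) (Set.mem_Iic.2 h4) h2
  have hA0 : ∀ X v : ℝ, 0 ≤ A X v := by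
    intro X v
    rcases le_total v (uMm X) with h | h
    · have := hAanti X v (uMm X) (huM_le X) h
      rw [hAz X (uMm X) le_rfl (huM_le X)] at this
      linarith
    · have := hAmono X (uMm X) v le_rfl h
      rw [hAz X (uMm X) le_rfl (huM_le X)] at this
      linarith
  -- ########## bounds ##########
  have hum : ∀ X : ℝ, km X ≤ uMm X := fun X => (hkm X).2
  have hup : ∀ X : ℝ, uMp X ≤ kp X := fun X => (hkp X).2
  have hkmA : ∀ X : ℝ, A X (km X) = abar := fun X => (hkm X).1
  have hkpA : ∀ X : ℝ, A X (kp X) = abar := fun X => (hkp X).1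
  have hkml : ∀ X : ℝ, -ℳ ≤ km X := fun X => (abs_le.1 (hℳm X)).1
  have hkpu : ∀ X : ℝ, kp X ≤ ℳ := fun X => (abs_le.1 (hℳp X)).2
  have hmml : ∀ X : ℝ, -ℳ ≤ uMm X := fun X => le_trans (hkml X) (hum X)
  have hmpu : ∀ X : ℝ, uMp X ≤ ℳ := fun X => le_trans (hup X) (hkpu X)
  have habsw : ∀ X : ℝ, |w X| ≤ ℳ := fun X =>
    abs_le.2 ⟨le_trans (hmml X) (hwm X), le_trans (hwp X) (hmpu X)⟩
  have habsmm : ∀ X : ℝ, |uMm X| ≤ ℳ := fun X =>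
    abs_le.2 ⟨hmml X, le_trans (huM_le X) (hmpu X)⟩
  have habsmp : ∀ X : ℝ, |uMp X| ≤ ℳ := fun X =>
    abs_le.2 ⟨le_trans (hmml X) (huM_le X), hmpu X⟩
  have hM0 : 0 ≤ ℳ := le_trans (abs_nonneg _) (hℳm 0)
  have habarA : ∀ X : ℝ, A X (u₀ X) ≤ abar := fun X => habar.1 ⟨X, rfl⟩
  have habar0 : 0 ≤ abar := le_trans (hA0 0 (u₀ 0)) (habarA 0)
  have hlampos : 0 < lam := by rw [hlam]; exact div_pos hDt hDx
  have hlam0 : 0 ≤ lam := le_of_lt hlampos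
  -- ########## replace L by L' = max L 0 ##########
  set L' := max L 0 with hL'def
  have hL'0 : 0 ≤ L' := le_max_right _ _
  have hLip : ∀ X y z : ℝ, |y| ≤ ℳ → |z| ≤ ℳ → |A X y - A X z| ≤ L' * |y - z| := by
    intro X y z hy hz
    exact le_trans (hL X y z hy hz)
      (mul_le_mul_of_nonneg_right (le_max_left _ _) (abs_nonneg _))
  have hCFL2 : lam * L' ≤ 1/2 := by
    rcases le_total L 0 with h | h
    · rw [hL'def, max_eq_right h, mul_zero]; norm_num
    · rw [hL'def, max_eq_left h]; exact hCFL
  -- ########## facts about Gf and Hfn ##########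
  have hGmono : ∀ X v₁ v₂ : ℝ, v₁ ≤ v₂ → Gf A w X v₁ ≤ Gf A w X v₂ := by
    intro X v₁ v₂ h
    exact hAmono X _ _ (le_trans (hwm X) (le_max_right _ _)) (max_le_max h le_rfl)
  have hHanti : ∀ X v₁ v₂ : ℝ, v₁ ≤ v₂ → Hfn A w X v₂ ≤ Hfn A w X v₁ := by
    intro X v₁ v₂ h
    exact hAanti X _ _ (le_trans (min_le_right v₂ (w X)) (hwp X)) (min_le_min h le_rfl)
  have hG0 : ∀ X v : ℝ, 0 ≤ Gf A w X v := fun X v => hA0 X _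
  have hH0 : ∀ X v : ℝ, 0 ≤ Hfn A w X v := fun X v => hA0 X _
  have habsmax : ∀ X v : ℝ, |v| ≤ ℳ → |max v (w X)| ≤ ℳ := by
    intro X v hv
    exact abs_le.2 ⟨le_trans (abs_le.1 hv).1 (le_max_left _ _),
      max_le (abs_le.1 hv).2 (abs_le.1 (habsw X)).2⟩
  have habsmin : ∀ X v : ℝ, |v| ≤ ℳ → |min v (w X)| ≤ ℳ := by
    intro X v hv
    exact abs_le.2 ⟨le_min (abs_le.1 hv).1 (abs_le.1 (habsw X)).1,
      le_trans (min_le_left _ _) (abs_le.1 hv).2⟩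
  have hGlip : ∀ X v₁ v₂ : ℝ, |v₁| ≤ ℳ → |v₂| ≤ ℳ →
      |Gf A w X v₁ - Gf A w X v₂| ≤ L' * |v₁ - v₂| := by
    intro X v₁ v₂ h1 h2
    calc |A X (max v₁ (w X)) - A X (max v₂ (w X))|
        ≤ L' * |max v₁ (w X) - max v₂ (w X)| := hLip X _ _ (habsmax X v₁ h1) (habsmax X v₂ h2)
      _ ≤ L' * |v₁ - v₂| :=
          mul_le_mul_of_nonneg_left (abs_max_sub_max_le_abs v₁ v₂ (w X)) hL'0
  have hHlip : ∀ X v₁ v₂ : ℝ, |v₁| ≤ ℳ → |v₂| ≤ ℳ →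
      |Hfn A w X v₁ - Hfn A w X v₂| ≤ L' * |v₁ - v₂| := by
    intro X v₁ v₂ h1 h2
    calc |A X (min v₁ (w X)) - A X (min v₂ (w X))|
        ≤ L' * |min v₁ (w X) - min v₂ (w X)| := hLip X _ _ (habsmin X v₁ h1) (habsmin X v₂ h2)
      _ ≤ L' * |v₁ - v₂| :=
          mul_le_mul_of_nonneg_left (abs_min_sub_min_le_abs' v₁ v₂ (w X)) hL'0
  -- ########## the invariant ##########
  have hinv : ∀ (m : ℕ) (i : ℤ),
      Gf A w ((i : ℝ) * Dx) (u m i) ≤ abar ∧ Hfn A w ((i : ℝ) * Dx) (u m i) ≤ abar := by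
    intro m
    induction m with
    | zero =>
      intro i
      rw [h0 i]
      constructor
      · rcases le_total (u₀ ((i : ℝ) * Dx)) (w ((i : ℝ) * Dx)) with h | h
        · have hz : Gf A w ((i : ℝ) * Dx) (u₀ ((i : ℝ) * Dx)) = 0 := by
            show A _ (max _ _) = 0
            rw [max_eq_right h]; exact hAw _
          rw [hz]; exact habar0
        · have hz : Gf A w ((i : ℝ) * Dx) (u₀ ((i : ℝ) * Dx))
              = A ((i : ℝ) * Dx) (u₀ ((i : ℝ) * Dx)) := by
            show A _ (max _ _) = _
            rw [max_eq_left h]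
          rw [hz]; exact habarA _
      · rcases le_total (u₀ ((i : ℝ) * Dx)) (w ((i : ℝ) * Dx)) with h | h
        · have hz : Hfn A w ((i : ℝ) * Dx) (u₀ ((i : ℝ) * Dx))
              = A ((i : ℝ) * Dx) (u₀ ((i : ℝ) * Dx)) := by
            show A _ (min _ _) = _
            rw [min_eq_left h]
          rw [hz]; exact habarA _
        · have hz : Hfn A w ((i : ℝ) * Dx) (u₀ ((i : ℝ) * Dx)) = 0 := by
            show A _ (min _ _) = 0
            rw [min_eq_right h]; exact hAw _
          rw [hz]; exact habar0
    | succ m ih =>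
      intro i
      have hs' := hstep m i
      simp only [Abar_eq] at hs'
      set FP := max (Gf A w ((i : ℝ) * Dx) (u m i)) (Hfn A w (((i+1 : ℤ) : ℝ) * Dx) (u m (i+1)))
        with hFPdef
      set FM := max (Gf A w (((i-1 : ℤ) : ℝ) * Dx) (u m (i-1))) (Hfn A w ((i : ℝ) * Dx) (u m i))
        with hFMdef
      have hFPg : Gf A w ((i : ℝ) * Dx) (u m i) ≤ FP := le_max_left _ _
      have hFMh : Hfn A w ((i : ℝ) * Dx) (u m i) ≤ FM := le_max_right _ _
      have hFPub : FP ≤ abar := max_le (ih i).1 (ih (i+1)).2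
      have hFMub : FM ≤ abar := max_le (ih (i-1)).1 (ih i).2
      constructor
      · rcases le_total (u (m+1) i) (u m i) with h | h
        · exact le_trans (hGmono _ _ _ h) (ih i).1
        · have hd : u (m+1) i - u m i = lam * (FM - FP) := by rw [hs']; ring
          have h2 : 0 ≤ FM - FP := by
            by_contra hneg
            push_neg at hneg
            have := mul_neg_of_pos_of_neg hlampos hneg
            rw [← hd] at this
            linarith
          have hdiff : Gf A w ((i : ℝ) * Dx) (u (m+1) i) - Gf A w ((i : ℝ) * Dx) (u m i)
              ≤ L' * (u (m+1) i - u m i) := by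
            have h3 := hGlip ((i : ℝ) * Dx) (u (m+1) i) (u m i) (hbound (m+1) i) (hbound m i)
            have h4 := le_abs_self (Gf A w ((i : ℝ) * Dx) (u (m+1) i)
              - Gf A w ((i : ℝ) * Dx) (u m i))
            rw [abs_of_nonneg (by linarith : (0:ℝ) ≤ u (m+1) i - u m i)] at h3
            linarith
          have h5 : L' * (u (m+1) i - u m i) = (lam * L') * (FM - FP) := by rw [hd]; ring
          have h6 : (lam * L') * (FM - FP) ≤ (1/2) * (FM - FP) :=
            mul_le_mul_of_nonneg_right hCFL2 h2
          have h7 : FM - FP ≤ abar - Gf A w ((i : ℝ) * Dx) (u m i) := by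
            linarith [hFPg, hFMub]
          linarith [(ih i).1]
      · rcases le_total (u m i) (u (m+1) i) with h | h
        · exact le_trans (hHanti _ _ _ h) (ih i).2
        · have hd : u m i - u (m+1) i = lam * (FP - FM) := by rw [hs']; ring
          have h2 : 0 ≤ FP - FM := by
            by_contra hneg
            push_neg at hneg
            have := mul_neg_of_pos_of_neg hlampos hneg
            rw [← hd] at this
            linarith
          have hdiff : Hfn A w ((i : ℝ) * Dx) (u (m+1) i) - Hfn A w ((i : ℝ) * Dx) (u m i)
              ≤ L' * (u m i - u (m+1) i) := by
            have h3 := hHlip ((i : ℝ) * Dx) (u (m+1) i) (u m i) (hbound (m+1) i) (hbound m i)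
            have h4 := le_abs_self (Hfn A w ((i : ℝ) * Dx) (u (m+1) i)
              - Hfn A w ((i : ℝ) * Dx) (u m i))
            rw [abs_of_nonpos (by linarith : u (m+1) i - u m i ≤ 0)] at h3
            have : -(u (m+1) i - u m i) = u m i - u (m+1) i := by ring
            rw [this] at h3
            linarith
          have h5 : L' * (u m i - u (m+1) i) = (lam * L') * (FP - FM) := by rw [hd]; ring
          have h6 : (lam * L') * (FP - FM) ≤ (1/2) * (FP - FM) :=
            mul_le_mul_of_nonneg_right hCFL2 h2
          have h7 : FP - FM ≤ abar - Hfn A w ((i : ℝ) * Dx) (u m i) := by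
            linarith [hFMh, hFPub]
          linarith [(ih i).2]
  -- ########## stationarity of k ##########
  have hstat : ∀ X Y : ℝ, max (Gf A w X (k X)) (Hfn A w Y (k Y)) = α := by
    rcases hk with ⟨h0', hmem⟩ | ⟨hpos, hkA, hbr | hbr⟩
    · intro X Y
      have g0 : Gf A w X (k X) = 0 := by
        show A X (max (k X) (w X)) = 0
        exact hAz X _ (le_trans (hmem X).1 (le_max_left _ _))
          (max_le (hmem X).2 (hwp X))
      have hh0 : Hfn A w Y (k Y) = 0 := by
        show A Y (min (k Y) (w Y)) = 0
        exact hAz Y _ (le_min (hmem Y).1 (hwm Y)) (le_trans (min_le_left _ _) (hmem Y).2)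
      rw [g0, hh0, h0']; exact max_self 0
    · intro X Y
      have g0 : Gf A w X (k X) = 0 := by
        show A X (max (k X) (w X)) = 0
        rw [max_eq_right (le_trans (hbr X) (hwm X))]
        exact hAw X
      have hh1 : Hfn A w Y (k Y) = α := by
        show A Y (min (k Y) (w Y)) = α
        rw [min_eq_left (le_trans (hbr Y) (hwm Y))]
        exact hkA Y
      rw [g0, hh1]; exact max_eq_right hα
    · intro X Y
      have g1 : Gf A w X (k X) = α := by
        show A X (max (k X) (w X)) = α
        rw [max_eq_left (le_trans (hwp X) (hbr X))]
        exact hkA X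
      have hh0 : Hfn A w Y (k Y) = 0 := by
        show A Y (min (k Y) (w Y)) = 0
        rw [min_eq_right (le_trans (hwp Y) (hbr Y))]
        exact hAw Y
      rw [g1, hh0]; exact max_eq_left hα
  -- ########## k is bounded below / above unless in extreme branch ##########
  have hknotlow : ∀ X : ℝ, k X < -ℳ → k X ≤ uMm X := by
    intro X hX
    rcases hk with ⟨h0', hmem⟩ | ⟨hpos, hkA, hbr | hbr⟩
    · linarith [hmml X, (hmem X).1]
    · exact hbr X
    · linarith [hmml X, huM_le X, hbr X]
  have hknothigh : ∀ X : ℝ, ℳ < k X → uMp X ≤ k X := by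
    intro X hX
    rcases hk with ⟨h0', hmem⟩ | ⟨hpos, hkA, hbr | hbr⟩
    · linarith [(hmem X).2, hmpu X]
    · linarith [hbr X, huM_le X, hmpu X]
    · exact hbr X
  -- ########## instantiate at n, j ##########
  have hjj : j - 1 + 1 = j := by ring
  have hb := hstep n j
  simp only [Abar_eq] at hb
  have hba₀ := hbound n (j-1)
  have hba₁ := hbound n j
  have hba₂ := hbound n (j+1)
  have hbb := hbound (n+1) j
  have hinv0 := hinv n (j-1)
  have hinv1 := hinv n j
  have hinv2 := hinv n (j+1)
  have hk01 := hstat (((j-1 : ℤ) : ℝ) * Dx) (((j : ℤ) : ℝ) * Dx)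
  have hk12 := hstat (((j : ℤ) : ℝ) * Dx) (((j+1 : ℤ) : ℝ) * Dx)
  simp only [entFlux]
  rw [hjj]
  simp only [Abar_eq]
  set p₀ := ((j - 1 : ℤ) : ℝ) * Dx with hp₀def
  set p₁ := ((j : ℤ) : ℝ) * Dx with hp₁def
  set p₂ := ((j + 1 : ℤ) : ℝ) * Dx with hp₂def
  set a₀ := u n (j - 1) with ha₀def
  set a₁ := u n j with ha₁def
  set a₂ := u n (j + 1) with ha₂def
  set bb := u (n + 1) j with hbbdef
  set k₀ := k p₀ with hk₀def
  set k₁ := k p₁ with hk₁def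
  set k₂ := k p₂ with hk₂def
  set g₀ := Gf A w p₀ with hg₀def
  set g₁ := Gf A w p₁ with hg₁def
  set h₁ := Hfn A w p₁ with hh₁def
  set h₂ := Hfn A w p₂ with hh₂def
  set s₀ := max a₀ k₀ with hs₀def
  set s₁ := max a₁ k₁ with hs₁def
  set s₂ := max a₂ k₂ with hs₂def
  set i₀ := min a₀ k₀ with hi₀def
  set i₁ := min a₁ k₁ with hi₁def
  set i₂ := min a₂ k₂ with hi₂def
  -- monotonicity instances
  have hg₀m : ∀ v₁ v₂ : ℝ, v₁ ≤ v₂ → g₀ v₁ ≤ g₀ v₂ := by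
    intro v₁ v₂ h; rw [hg₀def]; exact hGmono p₀ _ _ h
  have hg₁m : ∀ v₁ v₂ : ℝ, v₁ ≤ v₂ → g₁ v₁ ≤ g₁ v₂ := by
    intro v₁ v₂ h; rw [hg₁def]; exact hGmono p₁ _ _ h
  have hh₁a : ∀ v₁ v₂ : ℝ, v₁ ≤ v₂ → h₁ v₂ ≤ h₁ v₁ := by
    intro v₁ v₂ h; rw [hh₁def]; exact hHanti p₁ _ _ h
  have hh₂a : ∀ v₁ v₂ : ℝ, v₁ ≤ v₂ → h₂ v₂ ≤ h₂ v₁ := by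
    intro v₁ v₂ h; rw [hh₂def]; exact hHanti p₂ _ _ h
  have hg₀0 : ∀ v : ℝ, 0 ≤ g₀ v := by intro v; rw [hg₀def]; exact hG0 p₀ v
  have hg₁0 : ∀ v : ℝ, 0 ≤ g₁ v := by intro v; rw [hg₁def]; exact hG0 p₁ v
  have hh₁0 : ∀ v : ℝ, 0 ≤ h₁ v := by intro v; rw [hh₁def]; exact hH0 p₁ v
  have hh₂0 : ∀ v : ℝ, 0 ≤ h₂ v := by intro v; rw [hh₂def]; exact hH0 p₂ v
  have hg₁lip : ∀ v₁ v₂ : ℝ, |v₁| ≤ ℳ → |v₂| ≤ ℳ → |g₁ v₁ - g₁ v₂| ≤ L' * |v₁ - v₂| := by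
    intro v₁ v₂ h1 h2; rw [hg₁def]; exact hGlip p₁ _ _ h1 h2
  have hh₁lip : ∀ v₁ v₂ : ℝ, |v₁| ≤ ℳ → |v₂| ≤ ℳ → |h₁ v₁ - h₁ v₂| ≤ L' * |v₁ - v₂| := by
    intro v₁ v₂ h1 h2; rw [hh₁def]; exact hHlip p₁ _ _ h1 h2
  -- outer monotonicity of the scheme
  have houter : ∀ v p p' qq qq' : ℝ, p ≤ p' → qq ≤ qq' →
      v - lam * (max (g₁ v) (h₂ qq) - max (g₀ p) (h₁ v))
        ≤ v - lam * (max (g₁ v) (h₂ qq') - max (g₀ p') (h₁ v)) := by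
    intro v p p' qq qq' hp hq
    have e1 : max (g₁ v) (h₂ qq') ≤ max (g₁ v) (h₂ qq) :=
      max_le_max le_rfl (hh₂a _ _ hq)
    have e2 : max (g₀ p) (h₁ v) ≤ max (g₀ p') (h₁ v) :=
      max_le_max (hg₀m _ _ hp) le_rfl
    have e3 : lam * (max (g₁ v) (h₂ qq') - max (g₀ p') (h₁ v))
        ≤ lam * (max (g₁ v) (h₂ qq) - max (g₀ p) (h₁ v)) :=
      mul_le_mul_of_nonneg_left (by linarith) hlam0
    linarith
  -- middle monotonicity (under CFL, for values in [-ℳ,ℳ])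
  have hmid : ∀ p qq v₁ v₂ : ℝ, |v₁| ≤ ℳ → |v₂| ≤ ℳ → v₁ ≤ v₂ →
      v₁ - lam * (max (g₁ v₁) (h₂ qq) - max (g₀ p) (h₁ v₁))
        ≤ v₂ - lam * (max (g₁ v₂) (h₂ qq) - max (g₀ p) (h₁ v₂)) := by
    intro p qq v₁ v₂ hv1 hv2 h12
    have hg12 : g₁ v₁ ≤ g₁ v₂ := hg₁m _ _ h12
    have hgl : g₁ v₂ - g₁ v₁ ≤ L' * (v₂ - v₁) := by
      have h3 := hg₁lip v₂ v₁ hv2 hv1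
      have h4 := le_abs_self (g₁ v₂ - g₁ v₁)
      rw [abs_of_nonneg (by linarith : (0:ℝ) ≤ v₂ - v₁)] at h3
      linarith
    have hh12 : h₁ v₂ ≤ h₁ v₁ := hh₁a _ _ h12
    have hhl : h₁ v₁ - h₁ v₂ ≤ L' * (v₂ - v₁) := by
      have h3 := hh₁lip v₁ v₂ hv1 hv2
      have h4 := le_abs_self (h₁ v₁ - h₁ v₂)
      rw [abs_of_nonpos (by linarith : v₁ - v₂ ≤ 0)] at h3
      have h5 : -(v₁ - v₂) = v₂ - v₁ := by ring
      rw [h5] at h3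
      linarith
    have hLnn : 0 ≤ L' * (v₂ - v₁) := mul_nonneg hL'0 (by linarith)
    have e1 : max (g₁ v₂) (h₂ qq) ≤ max (g₁ v₁) (h₂ qq) + L' * (v₂ - v₁) := by
      apply max_le
      · linarith [le_max_left (g₁ v₁) (h₂ qq)]
      · linarith [le_max_right (g₁ v₁) (h₂ qq)]
    have e1' : max (g₁ v₁) (h₂ qq) ≤ max (g₁ v₂) (h₂ qq) := max_le_max hg12 le_rfl
    have e2 : max (g₀ p) (h₁ v₁) ≤ max (g₀ p) (h₁ v₂) + L' * (v₂ - v₁) := by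
      apply max_le
      · linarith [le_max_left (g₀ p) (h₁ v₂)]
      · linarith [le_max_right (g₀ p) (h₁ v₂)]
    have e2' : max (g₀ p) (h₁ v₂) ≤ max (g₀ p) (h₁ v₁) := max_le_max le_rfl hh12
    have key : lam * ((max (g₁ v₂) (h₂ qq) - max (g₁ v₁) (h₂ qq))
        + (max (g₀ p) (h₁ v₁) - max (g₀ p) (h₁ v₂))) ≤ v₂ - v₁ := by
      have t1 : (max (g₁ v₂) (h₂ qq) - max (g₁ v₁) (h₂ qq))
          + (max (g₀ p) (h₁ v₁) - max (g₀ p) (h₁ v₂)) ≤ 2 * (L' * (v₂ - v₁)) := by linarith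
      have t2 : lam * ((max (g₁ v₂) (h₂ qq) - max (g₁ v₁) (h₂ qq))
          + (max (g₀ p) (h₁ v₁) - max (g₀ p) (h₁ v₂))) ≤ lam * (2 * (L' * (v₂ - v₁))) :=
        mul_le_mul_of_nonneg_left t1 hlam0
      have t3 : lam * (2 * (L' * (v₂ - v₁))) = (lam * L') * (v₂ - v₁) * 2 := by ring
      have t4 : (lam * L') * (v₂ - v₁) ≤ (1/2) * (v₂ - v₁) :=
        mul_le_mul_of_nonneg_right hCFL2 (by linarith)
      linarith
    linarith
  -- stationarity at the two interfaces
  -- hk01 : max (g₀ k₀) (h₁ k₁) = α ; hk12 : max (g₁ k₁) (h₂ k₂) = α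
  -- ########## K1 : k₁ ≤ HS ##########
  set HS := s₁ - lam * (max (g₁ s₁) (h₂ s₂) - max (g₀ s₀) (h₁ s₁)) with hHSdef
  set HI := i₁ - lam * (max (g₁ i₁) (h₂ i₂) - max (g₀ i₀) (h₁ i₁)) with hHIdef
  have hK1 : k₁ ≤ HS := by
    rcases le_total a₁ k₁ with h | h
    · have hs : s₁ = k₁ := by rw [hs₁def]; exact max_eq_right h
      have c1 : k₁ = k₁ - lam * (max (g₁ k₁) (h₂ k₂) - max (g₀ k₀) (h₁ k₁)) := by
        rw [hk12, hk01]; ring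
      have c2 : k₁ - lam * (max (g₁ k₁) (h₂ k₂) - max (g₀ k₀) (h₁ k₁))
          ≤ k₁ - lam * (max (g₁ k₁) (h₂ s₂) - max (g₀ s₀) (h₁ k₁)) :=
        houter k₁ k₀ s₀ k₂ s₂ (by rw [hs₀def]; exact le_max_right _ _)
          (by rw [hs₂def]; exact le_max_right _ _)
      rw [hHSdef, hs]; linarith
    · rcases lt_or_ge k₁ (-ℳ) with hkM | hkM
      · -- tailored case, k₁ < -ℳ
        have hs : s₁ = a₁ := by rw [hs₁def]; exact max_eq_left h
        have haM := abs_le.1 hba₁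
        have hak : k₁ < a₁ := lt_of_lt_of_le hkM haM.1
        have hkum : k₁ ≤ uMm p₁ := hknotlow p₁ hkM
        have hFM0 : 0 ≤ max (g₀ s₀) (h₁ a₁) := le_trans (hg₀0 s₀) (le_max_left _ _)
        have hFMh : h₁ a₁ ≤ max (g₀ s₀) (h₁ a₁) := le_max_right _ _
        have hkey : lam * (max (g₁ a₁) (h₂ s₂) - max (g₀ s₀) (h₁ a₁)) ≤ a₁ - k₁ := by
          rcases le_total (h₂ s₂) (g₁ a₁) with hc | hc
          · rw [max_eq_left hc]
            rcases le_total a₁ (w p₁) with hw1 | hw1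
            · have hg0' : g₁ a₁ = 0 := by
                rw [hg₁def]
                show A p₁ (max a₁ (w p₁)) = 0
                rw [max_eq_right hw1]; exact hAw p₁
              rw [hg0']
              have : lam * (0 - max (g₀ s₀) (h₁ a₁)) ≤ lam * 0 :=
                mul_le_mul_of_nonneg_left (by linarith) hlam0
              rw [mul_zero] at this
              linarith
            · have hg1' : g₁ a₁ ≤ L' * (a₁ - uMm p₁) := by
                rw [hg₁def]
                show A p₁ (max a₁ (w p₁)) ≤ _
                rw [max_eq_left hw1]
                have h5 := hLip p₁ a₁ (uMm p₁) hba₁ (habsmm p₁)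
                have h6 : A p₁ (uMm p₁) = 0 := hAz p₁ _ le_rfl (huM_le p₁)
                have h7 : |a₁ - uMm p₁| = a₁ - uMm p₁ :=
                  abs_of_nonneg (by linarith [hwm p₁])
                have h8 := le_abs_self (A p₁ a₁ - A p₁ (uMm p₁))
                rw [h7] at h5
                rw [h6] at h8
                rw [h6] at h5
                linarith
              have hstep1 : lam * g₁ a₁ ≤ (1/2) * (a₁ - uMm p₁) := by
                have t1 : lam * g₁ a₁ ≤ lam * (L' * (a₁ - uMm p₁)) :=
                  mul_le_mul_of_nonneg_left hg1' hlam0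
                have t2 : lam * (L' * (a₁ - uMm p₁)) = (lam * L') * (a₁ - uMm p₁) := by ring
                have t3 : (lam * L') * (a₁ - uMm p₁) ≤ (1/2) * (a₁ - uMm p₁) :=
                  mul_le_mul_of_nonneg_right hCFL2 (by linarith [hwm p₁])
                linarith
              have t5 : lam * (g₁ a₁ - max (g₀ s₀) (h₁ a₁)) ≤ lam * g₁ a₁ :=
                mul_le_mul_of_nonneg_left (by linarith) hlam0
              have t6 : uMm p₁ ≥ k₁ := hkum
              linarith
          · rw [max_eq_right hc]
            have hub : h₂ s₂ ≤ h₂ a₂ := hh₂a _ _ (by rw [hs₂def]; exact le_max_left _ _)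
            have hub2 : h₂ a₂ ≤ abar := hinv2.2
            rcases le_total (min a₁ (w p₁)) (km p₁) with hmin | hmin
            · have hlow : abar ≤ h₁ a₁ := by
                rw [hh₁def]
                show abar ≤ A p₁ (min a₁ (w p₁))
                rw [← hkmA p₁]
                exact hAanti p₁ _ _ (le_trans (hum p₁) (huM_le p₁)) hmin
              have : lam * (h₂ s₂ - max (g₀ s₀) (h₁ a₁)) ≤ lam * 0 :=
                mul_le_mul_of_nonneg_left (by linarith) hlam0
              rw [mul_zero] at this
              linarith
            · have hminb : |min a₁ (w p₁)| ≤ ℳ :=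
                abs_le.2 ⟨le_min haM.1 (abs_le.1 (habsw p₁)).1,
                  le_trans (min_le_left _ _) haM.2⟩
              have h9 : abar - h₁ a₁ ≤ L' * (min a₁ (w p₁) - km p₁) := by
                have h5 := hLip p₁ (km p₁) (min a₁ (w p₁)) (hℳm p₁) hminb
                have h7 : |km p₁ - min a₁ (w p₁)| = min a₁ (w p₁) - km p₁ := by
                  rw [abs_sub_comm]; exact abs_of_nonneg (by linarith)
                have h8 := le_abs_self (A p₁ (km p₁) - A p₁ (min a₁ (w p₁)))
                rw [h7] at h5
                rw [hkmA p₁] at h8 h5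
                rw [hh₁def]
                show abar - A p₁ (min a₁ (w p₁)) ≤ _
                linarith
              have h10 : min a₁ (w p₁) - km p₁ ≤ a₁ - k₁ := by
                have := min_le_left a₁ (w p₁)
                have := hkml p₁
                linarith
              have h11 : L' * (min a₁ (w p₁) - km p₁) ≤ L' * (a₁ - k₁) :=
                mul_le_mul_of_nonneg_left h10 hL'0
              have h12 : lam * (h₂ s₂ - max (g₀ s₀) (h₁ a₁)) ≤ lam * (abar - h₁ a₁) :=
                mul_le_mul_of_nonneg_left (by linarith) hlam0
              have h13 : lam * (abar - h₁ a₁) ≤ lam * (L' * (a₁ - k₁)) :=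
                mul_le_mul_of_nonneg_left (by linarith) hlam0
              have h14 : lam * (L' * (a₁ - k₁)) = (lam * L') * (a₁ - k₁) := by ring
              have h15 : (lam * L') * (a₁ - k₁) ≤ (1/2) * (a₁ - k₁) :=
                mul_le_mul_of_nonneg_right hCFL2 (by linarith)
              linarith
        rw [hHSdef, hs]; linarith
      · -- plain case, -ℳ ≤ k₁ ≤ a₁ ≤ ℳ
        have hs : s₁ = a₁ := by rw [hs₁def]; exact max_eq_left h
        have hkabs : |k₁| ≤ ℳ := abs_le.2 ⟨hkM, le_trans h (abs_le.1 hba₁).2⟩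
        have c1 : k₁ = k₁ - lam * (max (g₁ k₁) (h₂ k₂) - max (g₀ k₀) (h₁ k₁)) := by
          rw [hk12, hk01]; ring
        have c2 : k₁ - lam * (max (g₁ k₁) (h₂ k₂) - max (g₀ k₀) (h₁ k₁))
            ≤ a₁ - lam * (max (g₁ a₁) (h₂ k₂) - max (g₀ k₀) (h₁ a₁)) :=
          hmid k₀ k₂ k₁ a₁ hkabs hba₁ h
        have c3 : a₁ - lam * (max (g₁ a₁) (h₂ k₂) - max (g₀ k₀) (h₁ a₁))
            ≤ a₁ - lam * (max (g₁ a₁) (h₂ s₂) - max (g₀ s₀) (h₁ a₁)) :=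
          houter a₁ k₀ s₀ k₂ s₂ (by rw [hs₀def]; exact le_max_right _ _)
            (by rw [hs₂def]; exact le_max_right _ _)
        rw [hHSdef, hs]; linarith
  -- ########## K2 : HI ≤ k₁ ##########
  have hK2 : HI ≤ k₁ := by
    rcases le_total k₁ a₁ with h | h
    · have hi : i₁ = k₁ := by rw [hi₁def]; exact min_eq_right h
      have c2 : k₁ - lam * (max (g₁ k₁) (h₂ i₂) - max (g₀ i₀) (h₁ k₁))
          ≤ k₁ - lam * (max (g₁ k₁) (h₂ k₂) - max (g₀ k₀) (h₁ k₁)) :=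
        houter k₁ i₀ k₀ i₂ k₂ (by rw [hi₀def]; exact min_le_right _ _)
          (by rw [hi₂def]; exact min_le_right _ _)
      have c1 : k₁ - lam * (max (g₁ k₁) (h₂ k₂) - max (g₀ k₀) (h₁ k₁)) = k₁ := by
        rw [hk12, hk01]; ring
      rw [hHIdef, hi]; linarith
    · rcases lt_or_ge ℳ k₁ with hkM | hkM
      · -- tailored case, k₁ > ℳ
        have hi : i₁ = a₁ := by rw [hi₁def]; exact min_eq_left h
        have haM := abs_le.1 hba₁
        have hak : a₁ < k₁ := lt_of_le_of_lt haM.2 hkM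
        have hkup : uMp p₁ ≤ k₁ := hknothigh p₁ hkM
        have hFP0 : 0 ≤ max (g₁ a₁) (h₂ i₂) := le_trans (hg₁0 a₁) (le_max_left _ _)
        have hFPg : g₁ a₁ ≤ max (g₁ a₁) (h₂ i₂) := le_max_left _ _
        have hkey : lam * (max (g₀ i₀) (h₁ a₁) - max (g₁ a₁) (h₂ i₂)) ≤ k₁ - a₁ := by
          rcases le_total (h₁ a₁) (g₀ i₀) with hc | hc
          · rw [max_eq_left hc]
            have hub : g₀ i₀ ≤ g₀ a₀ := hg₀m _ _ (by rw [hi₀def]; exact min_le_left _ _)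
            have hub2 : g₀ a₀ ≤ abar := hinv0.1
            rcases le_total (max a₁ (w p₁)) (kp p₁) with hmax | hmax
            · have hmaxb : |max a₁ (w p₁)| ≤ ℳ :=
                abs_le.2 ⟨le_trans haM.1 (le_max_left _ _),
                  max_le haM.2 (abs_le.1 (habsw p₁)).2⟩
              have h9 : abar - g₁ a₁ ≤ L' * (kp p₁ - max a₁ (w p₁)) := by
                have h5 := hLip p₁ (kp p₁) (max a₁ (w p₁)) (hℳp p₁) hmaxb
                have h7 : |kp p₁ - max a₁ (w p₁)| = kp p₁ - max a₁ (w p₁) :=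
                  abs_of_nonneg (by linarith)
                have h8 := le_abs_self (A p₁ (kp p₁) - A p₁ (max a₁ (w p₁)))
                rw [h7] at h5
                rw [hkpA p₁] at h8 h5
                rw [hg₁def]
                show abar - A p₁ (max a₁ (w p₁)) ≤ _
                linarith
              have h10 : kp p₁ - max a₁ (w p₁) ≤ k₁ - a₁ := by
                have := le_max_left a₁ (w p₁)
                have := hkpu p₁
                linarith
              have h11 : L' * (kp p₁ - max a₁ (w p₁)) ≤ L' * (k₁ - a₁) :=
                mul_le_mul_of_nonneg_left h10 hL'0
              have h12 : lam * (g₀ i₀ - max (g₁ a₁) (h₂ i₂)) ≤ lam * (abar - g₁ a₁) :=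
                mul_le_mul_of_nonneg_left (by linarith) hlam0
              have h13 : lam * (abar - g₁ a₁) ≤ lam * (L' * (k₁ - a₁)) :=
                mul_le_mul_of_nonneg_left (by linarith) hlam0
              have h14 : lam * (L' * (k₁ - a₁)) = (lam * L') * (k₁ - a₁) := by ring
              have h15 : (lam * L') * (k₁ - a₁) ≤ (1/2) * (k₁ - a₁) :=
                mul_le_mul_of_nonneg_right hCFL2 (by linarith)
              linarith
            · have hlow : abar ≤ g₁ a₁ := by
                rw [hg₁def]
                show abar ≤ A p₁ (max a₁ (w p₁))
                rw [← hkpA p₁]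
                exact hAmono p₁ _ _ (le_trans (huM_le p₁) (hup p₁)) hmax
              have : lam * (g₀ i₀ - max (g₁ a₁) (h₂ i₂)) ≤ lam * 0 :=
                mul_le_mul_of_nonneg_left (by linarith) hlam0
              rw [mul_zero] at this
              linarith
          · rw [max_eq_right hc]
            rcases le_total (w p₁) a₁ with hw1 | hw1
            · have hh0' : h₁ a₁ = 0 := by
                rw [hh₁def]
                show A p₁ (min a₁ (w p₁)) = 0
                rw [min_eq_right hw1]; exact hAw p₁
              rw [hh0']
              have : lam * (0 - max (g₁ a₁) (h₂ i₂)) ≤ lam * 0 :=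
                mul_le_mul_of_nonneg_left (by linarith) hlam0
              rw [mul_zero] at this
              linarith
            · have hh1' : h₁ a₁ ≤ L' * (uMp p₁ - a₁) := by
                rw [hh₁def]
                show A p₁ (min a₁ (w p₁)) ≤ _
                rw [min_eq_left hw1]
                have h5 := hLip p₁ a₁ (uMp p₁) hba₁ (habsmp p₁)
                have h6 : A p₁ (uMp p₁) = 0 := hAz p₁ _ (huM_le p₁) le_rfl
                have h7 : |a₁ - uMp p₁| = uMp p₁ - a₁ := by
                  rw [abs_sub_comm]; exact abs_of_nonneg (by linarith [hwp p₁])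
                have h8 := le_abs_self (A p₁ a₁ - A p₁ (uMp p₁))
                rw [h7] at h5
                rw [h6] at h8 h5
                linarith
              have hstep1 : lam * h₁ a₁ ≤ (1/2) * (uMp p₁ - a₁) := by
                have t1 : lam * h₁ a₁ ≤ lam * (L' * (uMp p₁ - a₁)) :=
                  mul_le_mul_of_nonneg_left hh1' hlam0
                have t2 : lam * (L' * (uMp p₁ - a₁)) = (lam * L') * (uMp p₁ - a₁) := by ring
                have t3 : (lam * L') * (uMp p₁ - a₁) ≤ (1/2) * (uMp p₁ - a₁) :=
                  mul_le_mul_of_nonneg_right hCFL2 (by linarith [hwp p₁])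
                linarith
              have t5 : lam * (h₁ a₁ - max (g₁ a₁) (h₂ i₂)) ≤ lam * h₁ a₁ :=
                mul_le_mul_of_nonneg_left (by linarith) hlam0
              linarith
        rw [hHIdef, hi]; linarith
      · -- plain case, -ℳ ≤ a₁ ≤ k₁ ≤ ℳ
        have hi : i₁ = a₁ := by rw [hi₁def]; exact min_eq_left h
        have hkabs : |k₁| ≤ ℳ := abs_le.2 ⟨le_trans (abs_le.1 hba₁).1 h, hkM⟩
        have c2 : a₁ - lam * (max (g₁ a₁) (h₂ i₂) - max (g₀ i₀) (h₁ a₁))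
            ≤ a₁ - lam * (max (g₁ a₁) (h₂ k₂) - max (g₀ k₀) (h₁ a₁)) :=
          houter a₁ i₀ k₀ i₂ k₂ (by rw [hi₀def]; exact min_le_right _ _)
            (by rw [hi₂def]; exact min_le_right _ _)
        have c3 : a₁ - lam * (max (g₁ a₁) (h₂ k₂) - max (g₀ k₀) (h₁ a₁))
            ≤ k₁ - lam * (max (g₁ k₁) (h₂ k₂) - max (g₀ k₀) (h₁ k₁)) :=
          hmid k₀ k₂ a₁ k₁ hba₁ hkabs h
        have c1 : k₁ - lam * (max (g₁ k₁) (h₂ k₂) - max (g₀ k₀) (h₁ k₁)) = k₁ := by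
          rw [hk12, hk01]; ring
        rw [hHIdef, hi]; linarith
  -- ########## sign-conditional comparisons with u^{n+1} ##########
  have hHSu : k₁ < bb → bb ≤ HS := by
    intro hbk
    rcases le_total k₁ a₁ with h | h
    · have hs : s₁ = a₁ := by rw [hs₁def]; exact max_eq_left h
      have c1 : bb = a₁ - lam * (max (g₁ a₁) (h₂ a₂) - max (g₀ a₀) (h₁ a₁)) := hb
      have c2 : a₁ - lam * (max (g₁ a₁) (h₂ a₂) - max (g₀ a₀) (h₁ a₁))
          ≤ a₁ - lam * (max (g₁ a₁) (h₂ s₂) - max (g₀ s₀) (h₁ a₁)) :=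
        houter a₁ a₀ s₀ a₂ s₂ (by rw [hs₀def]; exact le_max_left _ _)
          (by rw [hs₂def]; exact le_max_left _ _)
      rw [hHSdef, hs]; linarith
    · have hs : s₁ = k₁ := by rw [hs₁def]; exact max_eq_right h
      have hkabs : |k₁| ≤ ℳ :=
        abs_le.2 ⟨le_trans (abs_le.1 hba₁).1 h, le_trans (le_of_lt hbk) (abs_le.1 hbb).2⟩
      have c1 : bb = a₁ - lam * (max (g₁ a₁) (h₂ a₂) - max (g₀ a₀) (h₁ a₁)) := hb
      have c2 : a₁ - lam * (max (g₁ a₁) (h₂ a₂) - max (g₀ a₀) (h₁ a₁))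
          ≤ k₁ - lam * (max (g₁ k₁) (h₂ a₂) - max (g₀ a₀) (h₁ k₁)) :=
        hmid a₀ a₂ a₁ k₁ hba₁ hkabs h
      have c3 : k₁ - lam * (max (g₁ k₁) (h₂ a₂) - max (g₀ a₀) (h₁ k₁))
          ≤ k₁ - lam * (max (g₁ k₁) (h₂ s₂) - max (g₀ s₀) (h₁ k₁)) :=
        houter k₁ a₀ s₀ a₂ s₂ (by rw [hs₀def]; exact le_max_left _ _)
          (by rw [hs₂def]; exact le_max_left _ _)
      rw [hHSdef, hs]; linarith
  have hHIu : bb < k₁ → HI ≤ bb := by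
    intro hbk
    rcases le_total k₁ a₁ with h | h
    · have hi : i₁ = k₁ := by rw [hi₁def]; exact min_eq_right h
      have hkabs : |k₁| ≤ ℳ :=
        abs_le.2 ⟨le_trans (abs_le.1 hbb).1 (le_of_lt hbk), le_trans h (abs_le.1 hba₁).2⟩
      have c2 : k₁ - lam * (max (g₁ k₁) (h₂ i₂) - max (g₀ i₀) (h₁ k₁))
          ≤ k₁ - lam * (max (g₁ k₁) (h₂ a₂) - max (g₀ a₀) (h₁ k₁)) :=
        houter k₁ i₀ a₀ i₂ a₂ (by rw [hi₀def]; exact min_le_left _ _)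
          (by rw [hi₂def]; exact min_le_left _ _)
      have c3 : k₁ - lam * (max (g₁ k₁) (h₂ a₂) - max (g₀ a₀) (h₁ k₁))
          ≤ a₁ - lam * (max (g₁ a₁) (h₂ a₂) - max (g₀ a₀) (h₁ a₁)) :=
        hmid a₀ a₂ k₁ a₁ hkabs hba₁ h
      have c1 : bb = a₁ - lam * (max (g₁ a₁) (h₂ a₂) - max (g₀ a₀) (h₁ a₁)) := hb
      rw [hHIdef, hi]; linarith
    · have hi : i₁ = a₁ := by rw [hi₁def]; exact min_eq_left h
      have c2 : a₁ - lam * (max (g₁ a₁) (h₂ i₂) - max (g₀ i₀) (h₁ a₁))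
          ≤ a₁ - lam * (max (g₁ a₁) (h₂ a₂) - max (g₀ a₀) (h₁ a₁)) :=
        houter a₁ i₀ a₀ i₂ a₂ (by rw [hi₀def]; exact min_le_left _ _)
          (by rw [hi₂def]; exact min_le_left _ _)
      have c1 : bb = a₁ - lam * (max (g₁ a₁) (h₂ a₂) - max (g₀ a₀) (h₁ a₁)) := hb
      rw [hHIdef, hi]; linarith
  -- ########## final assembly ##########
  have hiden : |a₁ - k₁| - lam * ((max (g₁ s₁) (h₂ s₂) - max (g₁ i₁) (h₂ i₂))
      - (max (g₀ s₀) (h₁ s₁) - max (g₀ i₀) (h₁ i₁))) = HS - HI := by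
    rw [hHSdef, hHIdef, ← max_sub_min_eq_abs' a₁ k₁, ← hs₁def, ← hi₁def]
    ring
  have hgoal2 : |bb - k₁| ≤ HS - HI := by
    rw [abs_sub_le_iff]
    constructor
    · rcases le_or_gt bb k₁ with hbk | hbk
      · linarith
      · have := hHSu hbk
        linarith
    · rcases le_or_gt k₁ bb with hbk | hbk
      · linarith
      · have := hHIu hbk
        linarith
  linarith [hgoal2, hiden]
end

section
/- Assume the Panov-type assumptions (C-1)–(C-6), u₀ ∈ BV(ℝ) with u₀ − u_M compactly supported, the uniform bound |u_j^n| ≤ ℳ, and the CFL condition λ L_g L_β ≤ 1/2. Then the Godunov approximations have uniformly bounded spatial variation: there is a constant K₆ > 0, independent of the mesh size, such that Σ_{j∈ℤ} |u_{j+1}^n − u_j^n| ≤ K₆ for every n. In particular, each u_{j+1}^n − u_j^n satisfies |u_{j+1}^n − u_j^n| ≤ (1/K₂)(|β_{j+1}^n − β_j^n| + |β(x_{j+1},u_{j+1}^n) − β(x_j,u_{j+1}^n)|), where β_j^n = β(x_j,u_j^n). -/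
/-!
Work with the grid values `b_j = β(x_j, u_j)`. Since `β(x_j, ·)` is monotone and Lipschitz,
`b^{n+1}_j - b^n_j = θ_j (u^{n+1}_j - u^n_j)` with `0 ≤ θ_j ≤ L_β`; since the Godunov flux is
nondecreasing in its first and nonincreasing in its second argument and `L_g`-Lipschitz in each,
its increments are `p_j Δb_j` and `q_j Δb_j` with `0 ≤ p_j, q_j ≤ L_g`. Hence the scheme reads
`b^{n+1}_j = b_j + C_j Δb_j - D_j Δb_{j-1}` with `C_j, D_j ≥ 0` and, by the CFL condition,
`C_j + D_{j+1} ≤ 1`, so by Harten's lemma `Σ_j |Δb_j|` does not increase in `n`. Initially it is at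
most `L_β TV(u₀) + c TV(α)`, and (C-6) turns this into a bound on `Σ_j |Δu_j|`, the spatial
increments of `β` being controlled by `TV(α)` through (C-5).
-/

open MeasureTheory Filter

/-- The Godunov numerical flux for `g`: `ḡ(p,q) = max{g(max(p,0)), g(min(q,0))}`. -/
noncomputable def gbar (g : ℝ → ℝ) (p q : ℝ) : ℝ :=
  max (g (max p 0)) (g (min q 0))

open Set Finset

theorem sum_abs_sub_le_eVariationOn {α : Type*} [LinearOrder α] {f : α → ℝ} {t : Set α}
    (hf : BoundedVariationOn f t) {y : ℤ → α} (hy : Monotone y) (hyt : ∀ j, y j ∈ t)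
    (s : Finset ℤ) :
    ∑ j ∈ s, |f (y (j + 1)) - f (y j)| ≤ (eVariationOn f t).toReal := by
  obtain ⟨m, hm⟩ := s.bddBelow
  obtain ⟨M, hM⟩ := s.bddAbove
  let e : ℕ ↪ ℤ := ⟨fun i => m + i, fun a b h => by simpa using h⟩
  have hs : s ⊆ (range ((M - m).toNat + 1)).map e := fun j hj => by
    have := hm hj
    have := hM hj
    exact Finset.mem_map.2
      ⟨(j - m).toNat, Finset.mem_range.2 (by omega), show m + ((j - m).toNat : ℤ) = j by omega⟩
  have hvar := eVariationOn.sum_le (f := f) (n := (M - m).toNat + 1)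
    (fun a b hab => hy (by simpa using hab) : Monotone fun i : ℕ => y (m + i)) fun i => hyt _
  simp only [edist_dist, Real.dist_eq, Nat.cast_add, Nat.cast_one, ← add_assoc] at hvar
  rw [← ENNReal.ofReal_sum_of_nonneg fun _ _ => abs_nonneg _,
    ENNReal.ofReal_le_iff_le_toReal hf] at hvar
  calc ∑ j ∈ s, |f (y (j + 1)) - f (y j)|
      ≤ ∑ j ∈ (range ((M - m).toNat + 1)).map e, |f (y (j + 1)) - f (y j)| :=
        sum_le_sum_of_subset_of_nonneg hs fun _ _ _ => abs_nonneg _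
    _ ≤ (eVariationOn f t).toReal := by rwa [sum_map]

theorem harten_sum_abs_sub_le {v v' C D : ℤ → ℝ}
    (hstep : ∀ j, v' j = v j + C j * (v (j + 1) - v j) - D j * (v j - v (j - 1)))
    (hC : ∀ j, 0 ≤ C j) (hD : ∀ j, 0 ≤ D j) (hCD : ∀ j, C j + D (j + 1) ≤ 1)
    {B : ℝ} (hB : ∀ s : Finset ℤ, ∑ j ∈ s, |v (j + 1) - v j| ≤ B) (s : Finset ℤ) :
    ∑ j ∈ s, |v' (j + 1) - v' j| ≤ B := by
  set w : ℤ → ℝ := fun j => |v (j + 1) - v j|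
  have hpoint : ∀ j, |v' (j + 1) - v' j|
      ≤ (1 - C j - D (j + 1)) * w j + C (j + 1) * w (j + 1) + D j * w (j - 1) := by
    intro j
    have hid : v' (j + 1) - v' j = (1 - C j - D (j + 1)) * (v (j + 1) - v j)
        + C (j + 1) * (v (j + 1 + 1) - v (j + 1)) + D j * (v (j - 1 + 1) - v (j - 1)) := by
      rw [hstep, hstep, add_sub_cancel_right, sub_add_cancel]; ring
    rw [hid]
    refine (abs_add_le _ _).trans (add_le_add ((abs_add_le _ _).trans (add_le_add ?_ ?_)) ?_) <;>
      rw [abs_mul, abs_of_nonneg (by linarith [hC j, hD (j + 1), hCD j, hC (j + 1), hD j])]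
  set t := s ∪ s.map (addRightEmbedding 1) ∪ s.map (addRightEmbedding (-1))
  have hsub : ∀ {r : Finset ℤ} (F : ℤ → ℝ), r ⊆ t → (∀ j, 0 ≤ F j) → ∑ j ∈ r, F j ≤ ∑ j ∈ t, F j :=
    fun F hr hF => sum_le_sum_of_subset_of_nonneg hr fun j _ _ => hF j
  have hw : ∀ j, 0 ≤ w j := fun j => abs_nonneg _
  calc ∑ j ∈ s, |v' (j + 1) - v' j|
      ≤ ∑ j ∈ s, (1 - C j - D (j + 1)) * w j + ∑ j ∈ s.map (addRightEmbedding 1), C j * w j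
        + ∑ j ∈ s.map (addRightEmbedding (-1)), D (j + 1) * w j := by
        simp only [sum_map, addRightEmbedding_apply, ← sub_eq_add_neg, sub_add_cancel,
          ← sum_add_distrib]
        exact sum_le_sum fun j _ => hpoint j
    _ ≤ ∑ j ∈ t, (1 - C j - D (j + 1)) * w j + ∑ j ∈ t, C j * w j + ∑ j ∈ t, D (j + 1) * w j := by
        refine add_le_add (add_le_add (hsub _ (subset_union_left.trans subset_union_left) ?_)
          (hsub _ (subset_union_right.trans subset_union_left) ?_)) (hsub _ subset_union_right ?_)
        exacts [fun j => mul_nonneg (by linarith [hCD j]) (hw j), fun j => mul_nonneg (hC j) (hw j),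
          fun j => mul_nonneg (hD _) (hw j)]
    _ = ∑ j ∈ t, w j := by rw [← sum_add_distrib, ← sum_add_distrib]; congr! 1 with j; ring
    _ ≤ B := hB t

theorem monotoneOn_Ici_zero_of_strictMonoOn {g : ℝ → ℝ} {zp : ℝ}
    (hzero : ∀ z ∈ Icc 0 zp, g z = 0) (hinc : StrictMonoOn g (Ioi zp))
    (hnonneg : ∀ z, zp ≤ z → 0 ≤ g z) : MonotoneOn g (Ici 0) := by
  intro a ha b hb hab
  rcases le_or_gt b zp with hbz | hbz
  · rw [hzero a ⟨ha, hab.trans hbz⟩, hzero b ⟨hb, hbz⟩]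
  rcases le_or_gt a zp with haz | haz
  · exact (hzero a ⟨ha, haz⟩).symm ▸ hnonneg b hbz.le
  · exact hinc.monotoneOn haz hbz hab

theorem antitoneOn_Iic_zero_of_strictAntiOn {g : ℝ → ℝ} {zm : ℝ}
    (hzero : ∀ z ∈ Icc zm 0, g z = 0) (hdec : StrictAntiOn g (Iio zm))
    (hnonneg : ∀ z, z ≤ zm → 0 ≤ g z) : AntitoneOn g (Iic 0) := by
  have hmono : MonotoneOn (fun z => g (-z)) (Ici 0) :=
    monotoneOn_Ici_zero_of_strictMonoOn (zp := -zm)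
      (fun z hz => hzero _ ⟨le_neg.1 hz.2, neg_nonpos.2 hz.1⟩)
      (fun a ha b hb hab =>
        hdec (mem_Iio.2 (neg_lt.1 hb)) (mem_Iio.2 (neg_lt.1 ha)) (neg_lt_neg hab))
      (fun z hz => hnonneg _ (neg_le.1 hz))
  intro a ha b hb hab
  simpa using hmono (mem_Ici.2 (neg_nonneg.2 hb)) (mem_Ici.2 (neg_nonneg.2 ha)) (neg_le_neg hab)

theorem monotoneOn_Ici_antitoneOn_Iic_of_eq_zero {g κ : ℝ → ℝ} {zm zp : ℝ} (hzm : zm ≤ 0)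
    (hzp : 0 ≤ zp) (hdec : StrictAntiOn g (Iio zm)) (hinc : StrictMonoOn g (Ioi zp))
    (hzero : ∀ z ∈ Icc zm zp, g z = 0) (hκ_mono : StrictMonoOn κ (Ici 0)) (hκ_zero : κ 0 = 0)
    (hg_lbp : ∀ z, zp ≤ z → κ (z - zp) ≤ g z) (hg_lbm : ∀ z, z ≤ zm → κ (zm - z) ≤ g z) :
    MonotoneOn g (Ici 0) ∧ AntitoneOn g (Iic 0) := by
  have hκ_nonneg : ∀ t, 0 ≤ t → 0 ≤ κ t := fun t ht =>
    hκ_zero ▸ hκ_mono.monotoneOn (mem_Ici.2 le_rfl) (mem_Ici.2 ht) ht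
  exact ⟨monotoneOn_Ici_zero_of_strictMonoOn (fun z hz => hzero z ⟨hzm.trans hz.1, hz.2⟩) hinc
      fun z hz => (hκ_nonneg _ (sub_nonneg.2 hz)).trans (hg_lbp z hz),
    antitoneOn_Iic_zero_of_strictAntiOn (fun z hz => hzero z ⟨hz.1, hz.2.trans hzp⟩) hdec
      fun z hz => (hκ_nonneg _ (sub_nonneg.2 hz)).trans (hg_lbm z hz)⟩

theorem max_zero_mem_Icc {p r : ℝ} (hp : p ∈ Icc (-r) r) : max p 0 ∈ Icc (-r) r :=
  ⟨hp.1.trans (le_max_left _ _), max_le hp.2 (by linarith [hp.1, hp.2])⟩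

theorem min_zero_mem_Icc {q r : ℝ} (hq : q ∈ Icc (-r) r) : min q 0 ∈ Icc (-r) r :=
  ⟨le_min hq.1 (by linarith [hq.1, hq.2]), (min_le_left _ _).trans hq.2⟩

section GodunovFlux

variable {g : ℝ → ℝ} {r L : ℝ}

theorem gbar_monotone_left (hg : MonotoneOn g (Ici 0)) (q : ℝ) : Monotone fun p => gbar g p q :=
  fun _ _ h => max_le_max
    (hg (mem_Ici.2 (le_max_right _ 0)) (mem_Ici.2 (le_max_right _ 0)) (max_le_max h le_rfl)) le_rfl

theorem gbar_antitone_right (hg : AntitoneOn g (Iic 0)) (p : ℝ) : Antitone (gbar g p) :=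
  fun _ _ h => max_le_max le_rfl
    (hg (mem_Iic.2 (min_le_right _ 0)) (mem_Iic.2 (min_le_right _ 0)) (min_le_min h le_rfl))

theorem abs_gbar_sub_gbar_left_le
    (hg : ∀ z₁ ∈ Icc (-r) r, ∀ z₂ ∈ Icc (-r) r, |g z₁ - g z₂| ≤ L * |z₁ - z₂|) (hL : 0 ≤ L)
    (q : ℝ) :
    ∀ p ∈ Icc (-r) r, ∀ p' ∈ Icc (-r) r, |gbar g p q - gbar g p' q| ≤ L * |p - p'| :=
  fun p hp p' hp' => calc
    |gbar g p q - gbar g p' q| ≤ |g (max p 0) - g (max p' 0)| := abs_max_sub_max_le_abs _ _ _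
    _ ≤ L * |max p 0 - max p' 0| := hg _ (max_zero_mem_Icc hp) _ (max_zero_mem_Icc hp')
    _ ≤ L * |p - p'| := mul_le_mul_of_nonneg_left (abs_max_sub_max_le_abs _ _ _) hL

theorem abs_gbar_sub_gbar_right_le
    (hg : ∀ z₁ ∈ Icc (-r) r, ∀ z₂ ∈ Icc (-r) r, |g z₁ - g z₂| ≤ L * |z₁ - z₂|) (hL : 0 ≤ L)
    (p : ℝ) :
    ∀ q ∈ Icc (-r) r, ∀ q' ∈ Icc (-r) r, |gbar g p q - gbar g p q'| ≤ L * |q - q'| :=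
  fun q hq q' hq' => calc
    |gbar g p q - gbar g p q'| ≤ |g (min q 0) - g (min q' 0)| := by
      simpa only [gbar, max_comm (g (max p 0))] using abs_max_sub_max_le_abs _ _ _
    _ ≤ L * |min q 0 - min q' 0| := hg _ (min_zero_mem_Icc hq) _ (min_zero_mem_Icc hq')
    _ ≤ L * |q - q'| :=
      mul_le_mul_of_nonneg_left (by simpa using abs_min_sub_min_le_max q 0 q' 0) hL

end GodunovFlux

theorem MonotoneOn.exists_sub_eq_mul_of_abs_le {f : ℝ → ℝ} {s : Set ℝ} {L : ℝ}
    (hf : MonotoneOn f s) (hL : 0 ≤ L) (hlip : ∀ x ∈ s, ∀ y ∈ s, |f x - f y| ≤ L * |x - y|)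
    {x y : ℝ} (hx : x ∈ s) (hy : y ∈ s) : ∃ c ∈ Icc 0 L, f x - f y = c * (x - y) := by
  rcases eq_or_ne x y with rfl | hxy
  · exact ⟨0, ⟨le_rfl, hL⟩, by simp⟩
  refine ⟨(f x - f y) / (x - y), ⟨?_, ?_⟩, (div_mul_cancel₀ _ (sub_ne_zero.2 hxy)).symm⟩
  · rcases hxy.lt_or_gt with h | h
    · exact div_nonneg_of_nonpos (sub_nonpos.2 (hf hx hy h.le)) (sub_nonpos.2 h.le)
    · exact div_nonneg (sub_nonneg.2 (hf hy hx h.le)) (sub_nonneg.2 h.le)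
  · exact (le_abs_self _).trans <| by
      rw [abs_div]; exact div_le_of_le_mul₀ (abs_nonneg _) hL (hlip x hx y hy)

theorem AntitoneOn.exists_sub_eq_mul_of_abs_le {f : ℝ → ℝ} {s : Set ℝ} {L : ℝ}
    (hf : AntitoneOn f s) (hL : 0 ≤ L) (hlip : ∀ x ∈ s, ∀ y ∈ s, |f x - f y| ≤ L * |x - y|)
    {x y : ℝ} (hx : x ∈ s) (hy : y ∈ s) : ∃ c ∈ Icc 0 L, f y - f x = c * (x - y) := by
  simpa only [neg_sub_neg] using hf.neg.exists_sub_eq_mul_of_abs_le hL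
    (fun x hx y hy => by simpa only [neg_sub_neg, abs_sub_comm] using hlip x hx y hy) hx hy

theorem godunov_sum_abs_sub_le {g : ℝ → ℝ} {P Lg Lβ μ : ℝ} (hg_mono : MonotoneOn g (Ici 0))
    (hg_anti : AntitoneOn g (Iic 0))
    (hg_lip : ∀ z₁ ∈ Icc (-P) P, ∀ z₂ ∈ Icc (-P) P, |g z₁ - g z₂| ≤ Lg * |z₁ - z₂|)
    (hLg : 0 ≤ Lg) (hμ : 0 ≤ μ) (hCFL : μ * (Lg * Lβ) ≤ 1 / 2) {b b' θ : ℤ → ℝ}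
    (hb : ∀ j, b j ∈ Icc (-P) P) (hθ : ∀ j, θ j ∈ Icc 0 Lβ)
    (hb' : ∀ j, b' j = b j - μ * θ j * (gbar g (b j) (b (j + 1)) - gbar g (b (j - 1)) (b j)))
    {B : ℝ} (hB : ∀ s : Finset ℤ, ∑ j ∈ s, |b (j + 1) - b j| ≤ B) (s : Finset ℤ) :
    ∑ j ∈ s, |b' (j + 1) - b' j| ≤ B := by
  choose p hp hp_eq using fun j => ((gbar_monotone_left hg_mono (b (j + 1))).monotoneOn _
    ).exists_sub_eq_mul_of_abs_le hLg (abs_gbar_sub_gbar_left_le hg_lip hLg _) (hb (j + 1)) (hb j)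
  choose q hq hq_eq using fun j => ((gbar_antitone_right hg_anti (b j)).antitoneOn _
    ).exists_sub_eq_mul_of_abs_le hLg (abs_gbar_sub_gbar_right_le hg_lip hLg _) (hb (j + 1)) (hb j)
  have hcoef : ∀ {t c : ℝ}, t ∈ Icc 0 Lβ → c ∈ Icc 0 Lg → 0 ≤ μ * t * c ∧ μ * t * c ≤ 1 / 2 :=
    fun {t c} ht hc => ⟨by have := ht.1; have := hc.1; positivity, by
      calc μ * t * c = μ * (c * t) := by ring
        _ ≤ μ * (Lg * Lβ) := mul_le_mul_of_nonneg_left (mul_le_mul hc.2 ht.2 ht.1 hLg) hμ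
        _ ≤ 1 / 2 := hCFL⟩
  refine harten_sum_abs_sub_le (C := fun j => μ * θ j * q j) (D := fun j => μ * θ j * p (j - 1))
    (fun j => ?_) (fun j => (hcoef (hθ j) (hq j)).1) (fun j => (hcoef (hθ j) (hp _)).1)
    (fun j => ?_) hB s
  · have hp_eq' := hp_eq (j - 1)
    rw [sub_add_cancel] at hp_eq'
    rw [hb' j]
    linear_combination (-(μ * θ j)) * (hp_eq' - hq_eq j)
  · simp only [add_sub_cancel_right]
    linarith [(hcoef (hθ j) (hq j)).2, (hcoef (hθ (j + 1)) (hp j)).2]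

section GridFunctions

variable {β : ℝ → ℝ → ℝ} {x : ℤ → ℝ} {M : ℝ}

theorem godunov_beta_sum_abs_sub_le {g : ℝ → ℝ} {P Lg Lβ μ : ℝ}
    (hg_mono : MonotoneOn g (Ici 0)) (hg_anti : AntitoneOn g (Iic 0))
    (hg_lip : ∀ z₁ ∈ Icc (-P) P, ∀ z₂ ∈ Icc (-P) P, |g z₁ - g z₂| ≤ Lg * |z₁ - z₂|)
    (hLg : 0 ≤ Lg) (hβ_mono : ∀ y, MonotoneOn (β y) (Icc (-M) M))
    (hβ_lip : ∀ y, ∀ u ∈ Icc (-M) M, ∀ v ∈ Icc (-M) M, |β y u - β y v| ≤ Lβ * |u - v|)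
    (hLβ : 0 ≤ Lβ) (hμ : 0 ≤ μ) (hCFL : μ * (Lg * Lβ) ≤ 1 / 2) {u u' : ℤ → ℝ}
    (hu : ∀ j, u j ∈ Icc (-M) M) (hu' : ∀ j, u' j ∈ Icc (-M) M)
    (hP : ∀ j, β (x j) (u j) ∈ Icc (-P) P)
    (hstep : ∀ j, u' j = u j - μ * (gbar g (β (x j) (u j)) (β (x (j + 1)) (u (j + 1)))
      - gbar g (β (x (j - 1)) (u (j - 1))) (β (x j) (u j))))
    {B : ℝ} (hB : ∀ s : Finset ℤ, ∑ j ∈ s, |β (x (j + 1)) (u (j + 1)) - β (x j) (u j)| ≤ B)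
    (s : Finset ℤ) : ∑ j ∈ s, |β (x (j + 1)) (u' (j + 1)) - β (x j) (u' j)| ≤ B := by
  choose θ hθ hθ_eq using fun j =>
    (hβ_mono (x j)).exists_sub_eq_mul_of_abs_le hLβ (hβ_lip (x j)) (hu' j) (hu j)
  exact godunov_sum_abs_sub_le (b := fun j => β (x j) (u j)) (b' := fun j => β (x j) (u' j))
    hg_mono hg_anti hg_lip hLg hμ hCFL hP hθ
    (fun j => by linear_combination hθ_eq j + θ j * hstep j) hB s

theorem exists_abs_sub_le_mul_abs_sub {α K : ℝ → ℝ} (hK : Continuous K) (hM : 0 ≤ M)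
    (hβ : ∀ y z u, |β y u - β z u| ≤ K u * |α y - α z|) :
    ∃ c, 0 ≤ c ∧ ∀ y z, ∀ w ∈ Icc (-M) M, |β y w - β z w| ≤ c * |α y - α z| := by
  obtain ⟨c, hc⟩ := isCompact_Icc.exists_bound_of_continuousOn (hK.continuousOn (s := Icc (-M) M))
  refine ⟨c, (norm_nonneg _).trans (hc 0 ⟨neg_nonpos.2 hM, hM⟩), fun y z w hw => ?_⟩
  exact (hβ y z w).trans
    (mul_le_mul_of_nonneg_right ((Real.le_norm_self _).trans (hc w hw)) (abs_nonneg _))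

theorem sum_abs_beta_shift_sub_le {α : ℝ → ℝ} {c : ℝ} (hx : Monotone x)
    (hα : BoundedVariationOn α univ) (hc : 0 ≤ c)
    (hβ_x : ∀ y z, ∀ w ∈ Icc (-M) M, |β y w - β z w| ≤ c * |α y - α z|)
    {w : ℤ → ℝ} (hw : ∀ j, w j ∈ Icc (-M) M) (s : Finset ℤ) :
    ∑ j ∈ s, |β (x (j + 1)) (w j) - β (x j) (w j)| ≤ c * (eVariationOn α univ).toReal :=
  calc ∑ j ∈ s, |β (x (j + 1)) (w j) - β (x j) (w j)|
      ≤ c * ∑ j ∈ s, |α (x (j + 1)) - α (x j)| := by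
        rw [mul_sum]; exact sum_le_sum fun j _ => hβ_x _ _ _ (hw j)
    _ ≤ c * (eVariationOn α univ).toReal :=
        mul_le_mul_of_nonneg_left (sum_abs_sub_le_eVariationOn hα hx (fun _ => mem_univ _) s) hc

theorem sum_abs_beta_initial_sub_le {α f : ℝ → ℝ} {c Lβ : ℝ} (hx : Monotone x)
    (hf : BoundedVariationOn f univ) (hα : BoundedVariationOn α univ) (hc : 0 ≤ c)
    (hLβ : 0 ≤ Lβ)
    (hβ_lip : ∀ y, ∀ u ∈ Icc (-M) M, ∀ v ∈ Icc (-M) M, |β y u - β y v| ≤ Lβ * |u - v|)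
    (hβ_x : ∀ y z, ∀ w ∈ Icc (-M) M, |β y w - β z w| ≤ c * |α y - α z|)
    (hfM : ∀ j, f (x j) ∈ Icc (-M) M) (s : Finset ℤ) :
    ∑ j ∈ s, |β (x (j + 1)) (f (x (j + 1))) - β (x j) (f (x j))|
      ≤ Lβ * (eVariationOn f univ).toReal + c * (eVariationOn α univ).toReal :=
  calc ∑ j ∈ s, |β (x (j + 1)) (f (x (j + 1))) - β (x j) (f (x j))|
      ≤ ∑ j ∈ s, (Lβ * |f (x (j + 1)) - f (x j)|
          + |β (x (j + 1)) (f (x j)) - β (x j) (f (x j))|) :=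
        sum_le_sum fun j _ => (abs_sub_le _ _ _).trans
          (add_le_add_left (hβ_lip _ _ (hfM (j + 1)) _ (hfM j)) _)
    _ ≤ _ := by
        rw [sum_add_distrib, ← mul_sum]
        exact add_le_add (mul_le_mul_of_nonneg_left
          (sum_abs_sub_le_eVariationOn hf hx (fun _ => mem_univ _) s) hLβ)
          (sum_abs_beta_shift_sub_le hx hα hc hβ_x hfM s)

theorem sum_abs_beta_sub_le_of_godunov {g α u₀ : ℝ → ℝ} {u : ℕ → ℤ → ℝ} {P Lg Lβ μ c : ℝ}
    (hg_mono : MonotoneOn g (Ici 0)) (hg_anti : AntitoneOn g (Iic 0))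
    (hg_lip : ∀ z₁ ∈ Icc (-P) P, ∀ z₂ ∈ Icc (-P) P, |g z₁ - g z₂| ≤ Lg * |z₁ - z₂|)
    (hLg : 0 ≤ Lg) (hβ_mono : ∀ y, MonotoneOn (β y) (Icc (-M) M))
    (hβ_lip : ∀ y, ∀ u ∈ Icc (-M) M, ∀ v ∈ Icc (-M) M, |β y u - β y v| ≤ Lβ * |u - v|)
    (hLβ : 0 ≤ Lβ) (hμ : 0 ≤ μ) (hCFL : μ * (Lg * Lβ) ≤ 1 / 2) (hx : Monotone x)
    (hu₀ : BoundedVariationOn u₀ univ) (hα : BoundedVariationOn α univ) (hc : 0 ≤ c)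
    (hβ_x : ∀ y z, ∀ w ∈ Icc (-M) M, |β y w - β z w| ≤ c * |α y - α z|)
    (hu : ∀ n j, u n j ∈ Icc (-M) M) (hP : ∀ n j, β (x j) (u n j) ∈ Icc (-P) P)
    (h0 : ∀ j, u 0 j = u₀ (x j))
    (hstep : ∀ n j, u (n + 1) j = u n j
      - μ * (gbar g (β (x j) (u n j)) (β (x (j + 1)) (u n (j + 1)))
        - gbar g (β (x (j - 1)) (u n (j - 1))) (β (x j) (u n j))))
    (n : ℕ) (s : Finset ℤ) :
    ∑ j ∈ s, |β (x (j + 1)) (u n (j + 1)) - β (x j) (u n j)|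
      ≤ Lβ * (eVariationOn u₀ univ).toReal + c * (eVariationOn α univ).toReal := by
  induction n generalizing s with
  | zero =>
    simpa only [h0] using sum_abs_beta_initial_sub_le hx hu₀ hα hc hLβ hβ_lip hβ_x
      (fun j => h0 j ▸ hu 0 j) s
  | succ n ih =>
    exact godunov_beta_sum_abs_sub_le hg_mono hg_anti hg_lip hLg hβ_mono hβ_lip hLβ hμ hCFL
      (hu n) (hu (n + 1)) (hP n) (hstep n) ih s

theorem abs_sub_le_of_expansive {K : ℝ} (hK : 0 < K)
    (hβ : ∀ y u v, K * |u - v| ≤ |β y u - β y v|) (y z u v : ℝ) :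
    |u - v| ≤ 1 / K * (|β z u - β y v| + |β z u - β y u|) := by
  rw [one_div_mul_eq_div, le_div_iff₀ hK, mul_comm]
  calc K * |u - v| ≤ |β y u - β y v| := hβ y u v
    _ = |(β z u - β y v) - (β z u - β y u)| := by rw [sub_sub_sub_cancel_left]
    _ ≤ |β z u - β y v| + |β z u - β y u| := abs_sub _ _

end GridFunctions

theorem godunov_spatial_variation_bound_general
    (g : ℝ → ℝ) (β : ℝ → ℝ → ℝ)
    -- (C-2)
    (zm zp : ℝ) (hzm : zm ≤ 0) (hzp : 0 ≤ zp)
    (hg_dec : StrictAntiOn g (Set.Iio zm)) (hg_inc : StrictMonoOn g (Set.Ioi zp))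
    (hg_zero : ∀ z ∈ Set.Icc zm zp, g z = 0)
    (κ : ℝ → ℝ)
    (hκ_mono : StrictMonoOn κ (Set.Ici 0)) (hκ_zero : κ 0 = 0)
    (hg_lbp : ∀ z, zp ≤ z → κ (z - zp) ≤ g z)
    (hg_lbm : ∀ z, z ≤ zm → κ (zm - z) ≤ g z)
    -- (C-3)
    (K₁ : ℝ → ℝ) (hK₁_nonneg : ∀ r, 0 ≤ K₁ r)
    (hC3 : ∀ r : ℝ, ∀ z₁ ∈ Set.Icc (-r) r, ∀ z₂ ∈ Set.Icc (-r) r,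
      |g z₁ - g z₂| ≤ K₁ r * |z₁ - z₂|)
    -- (C-4)
    (hβ_mono : ∀ x, StrictMono (β x))
    -- (C-5)
    (K₃ : ℝ → ℝ) (hK₃_nonneg : ∀ r, 0 ≤ K₃ r)
    (hC5a : ∀ r : ℝ, ∀ x : ℝ, ∀ u ∈ Set.Icc (-r) r, ∀ v ∈ Set.Icc (-r) r,
      |β x u - β x v| ≤ K₃ r * |u - v|)
    (K₄ : ℝ → ℝ) (hK₄_cont : Continuous K₄)
    (α : ℝ → ℝ) (hα_BV : BoundedVariationOn α Set.univ)
    (hC5b : ∀ x y u, |β x u - β y u| ≤ K₄ u * |α x - α y|)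
    -- (C-6)
    (K₂ : ℝ) (hK₂_pos : 0 < K₂)
    (hC6 : ∀ x u v, K₂ * |u - v| ≤ |β x u - β x v|)
    -- the Godunov scheme in β-form on the grid x_j = jΔx, λ = Δt/Δx
    (Dx Dt lam : ℝ) (hDx : 0 < Dx) (hDt : 0 < Dt) (hlam : lam = Dt / Dx)
    (u₀ : ℝ → ℝ) (u : ℕ → ℤ → ℝ)
    (h0 : ∀ j : ℤ, u 0 j = u₀ ((j : ℝ) * Dx))
    (hstep : ∀ (n : ℕ) (j : ℤ), u (n+1) j = u n j
      - lam * (gbar g (β ((j : ℝ) * Dx) (u n j)) (β (((j+1 : ℤ) : ℝ) * Dx) (u n (j+1)))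
             - gbar g (β (((j-1 : ℤ) : ℝ) * Dx) (u n (j-1))) (β ((j : ℝ) * Dx) (u n j))))
    -- ℳ bounds the approximations; 𝒫 bounds β on [-ℳ,ℳ]; CFL with L_g = K₁(𝒫), L_β = K₃(ℳ)
    (ℳ : ℝ) (hbound : ∀ (n : ℕ) (j : ℤ), |u n j| ≤ ℳ)
    (P : ℝ) (hP : ∀ x w : ℝ, |w| ≤ ℳ → |β x w| ≤ P)
    (hCFL : lam * (K₁ P * K₃ ℳ) ≤ 1/2)
    -- u₀ ∈ BV(ℝ) with u₀ - u_M compactly supported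
    (hu₀_BV : BoundedVariationOn u₀ Set.univ) :
    (∃ K₆ : ℝ, 0 < K₆ ∧ ∀ n : ℕ, ∀ s : Finset ℤ,
      ∑ j ∈ s, |u n (j+1) - u n j| ≤ K₆) ∧
    (∀ (n : ℕ) (j : ℤ),
      |u n (j+1) - u n j| ≤ (1 / K₂) *
        (|β (((j+1 : ℤ) : ℝ) * Dx) (u n (j+1)) - β ((j : ℝ) * Dx) (u n j)|
          + |β (((j+1 : ℤ) : ℝ) * Dx) (u n (j+1)) - β ((j : ℝ) * Dx) (u n (j+1))|)) := by
  obtain ⟨hg_mono, hg_anti⟩ := monotoneOn_Ici_antitoneOn_Iic_of_eq_zero hzm hzp hg_dec hg_inc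
    hg_zero hκ_mono hκ_zero hg_lbp hg_lbm
  have hu : ∀ n j, u n j ∈ Icc (-ℳ) ℳ := fun n j => abs_le.1 (hbound n j)
  obtain ⟨c, hc0, hβ_x⟩ := exists_abs_sub_le_mul_abs_sub hK₄_cont
    ((abs_nonneg _).trans (hbound 0 0)) hC5b
  have hx : Monotone fun j : ℤ => (j : ℝ) * Dx := fun i j hij =>
    mul_le_mul_of_nonneg_right (Int.cast_le.2 hij) hDx.le
  have hvar := sum_abs_beta_sub_le_of_godunov hg_mono hg_anti (hC3 P) (hK₁_nonneg P)
    (fun y => (hβ_mono y).monotone.monotoneOn _) (hC5a ℳ) (hK₃_nonneg ℳ)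
    (hlam ▸ div_nonneg hDt.le hDx.le) hCFL hx hu₀_BV hα_BV hc0 hβ_x hu
    (fun n j => abs_le.1 (hP _ _ (hbound n j))) h0 hstep
  set B := K₃ ℳ * (eVariationOn u₀ univ).toReal + c * (eVariationOn α univ).toReal
  have hpoint : ∀ n (j : ℤ), _ := fun n j =>
    abs_sub_le_of_expansive hK₂_pos hC6 ((j : ℝ) * Dx) (((j+1 : ℤ) : ℝ) * Dx) (u n (j+1)) (u n j)
  refine ⟨⟨1 / K₂ * (B + c * (eVariationOn α univ).toReal) + 1, ?_, fun n s => ?_⟩, hpoint⟩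
  · have := hK₃_nonneg ℳ
    positivity
  calc ∑ j ∈ s, |u n (j+1) - u n j|
      ≤ 1 / K₂ * (∑ j ∈ s, |β (((j+1 : ℤ) : ℝ) * Dx) (u n (j+1)) - β ((j : ℝ) * Dx) (u n j)|
        + ∑ j ∈ s, |β (((j+1 : ℤ) : ℝ) * Dx) (u n (j+1)) - β ((j : ℝ) * Dx) (u n (j+1))|) := by
        rw [← sum_add_distrib, mul_sum]; exact sum_le_sum fun j _ => hpoint n j
    _ ≤ 1 / K₂ * (B + c * (eVariationOn α univ).toReal) := by
        gcongr
        exacts [hvar n s, sum_abs_beta_shift_sub_le hx hα_BV hc0 hβ_x (fun j => hu n (j + 1)) s]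
    _ ≤ _ := le_add_of_nonneg_right zero_le_one

/-- (Lemma on the spatial variation bound for the approximations.) Under
the Panov-type assumptions (C-1)–(C-6), `u₀ ∈ BV(ℝ)` with `u₀ - u_M` compactly supported,
the uniform bound `|u_j^n| ≤ ℳ` and the CFL condition `λ L_g L_β ≤ 1/2`, there is a
mesh-independent `K₆ > 0` with `Σ_j |u_{j+1}^n - u_j^n| ≤ K₆` for every `n`; moreover
`|u_{j+1}^n - u_j^n| ≤ (1/K₂)(|β_{j+1}^n - β_j^n| + |β(x_{j+1},u_{j+1}^n) - β(x_j,u_{j+1}^n)|)`. -/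
theorem godunov_spatial_variation_bound
    -- (C-1): the flux has the form A(x,u) = g(β(x,u))
    (g : ℝ → ℝ) (β : ℝ → ℝ → ℝ) (A : ℝ → ℝ → ℝ)
    (hC1 : ∀ x u, A x u = g (β x u))
    -- (C-2)
    (zm zp : ℝ) (hzm : zm ≤ 0) (hzp : 0 ≤ zp)
    (hg_dec : StrictAntiOn g (Set.Iio zm)) (hg_inc : StrictMonoOn g (Set.Ioi zp))
    (hg_zero : ∀ z ∈ Set.Icc zm zp, g z = 0)
    (κ : ℝ → ℝ) (hκ_cont : ContinuousOn κ (Set.Ici 0))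
    (hκ_mono : StrictMonoOn κ (Set.Ici 0)) (hκ_zero : κ 0 = 0)
    (hκ_top : Tendsto κ atTop atTop)
    (hg_lbp : ∀ z, zp ≤ z → κ (z - zp) ≤ g z)
    (hg_lbm : ∀ z, z ≤ zm → κ (zm - z) ≤ g z)
    -- (C-3)
    (K₁ : ℝ → ℝ) (hK₁_cont : Continuous K₁) (hK₁_nonneg : ∀ r, 0 ≤ K₁ r)
    (hC3 : ∀ r : ℝ, ∀ z₁ ∈ Set.Icc (-r) r, ∀ z₂ ∈ Set.Icc (-r) r,
      |g z₁ - g z₂| ≤ K₁ r * |z₁ - z₂|)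
    -- (C-4)
    (Om : Set ℝ) (hOm_closed : IsClosed Om) (hOm_null : volume Om = 0)
    (hβ_cont : ContinuousOn (Function.uncurry β) (Omᶜ ×ˢ (Set.univ : Set ℝ)))
    (hβ_mono : ∀ x, StrictMono (β x))
    (hβ_inf : ∀ x, Tendsto (fun u => |β x u|) (cocompact ℝ) atTop)
    -- (C-5)
    (K₃ : ℝ → ℝ) (hK₃_cont : Continuous K₃) (hK₃_nonneg : ∀ r, 0 ≤ K₃ r)
    (hC5a : ∀ r : ℝ, ∀ x : ℝ, ∀ u ∈ Set.Icc (-r) r, ∀ v ∈ Set.Icc (-r) r,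
      |β x u - β x v| ≤ K₃ r * |u - v|)
    (K₄ : ℝ → ℝ) (hK₄_cont : Continuous K₄) (hK₄_nonneg : ∀ u, 0 ≤ K₄ u)
    (α : ℝ → ℝ) (hα_BV : BoundedVariationOn α Set.univ)
    (hC5b : ∀ x y u, |β x u - β y u| ≤ K₄ u * |α x - α y|)
    -- (C-6)
    (K₂ : ℝ) (hK₂_pos : 0 < K₂)
    (hC6 : ∀ x u v, K₂ * |u - v| ≤ |β x u - β x v|)
    -- u_M = β⁻¹(·,0)
    (uM : ℝ → ℝ) (huM : ∀ x, β x (uM x) = 0)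
    -- the Godunov scheme in β-form on the grid x_j = jΔx, λ = Δt/Δx
    (Dx Dt lam : ℝ) (hDx : 0 < Dx) (hDt : 0 < Dt) (hlam : lam = Dt / Dx)
    (u₀ : ℝ → ℝ) (u : ℕ → ℤ → ℝ)
    (h0 : ∀ j : ℤ, u 0 j = u₀ ((j : ℝ) * Dx))
    (hstep : ∀ (n : ℕ) (j : ℤ), u (n+1) j = u n j
      - lam * (gbar g (β ((j : ℝ) * Dx) (u n j)) (β (((j+1 : ℤ) : ℝ) * Dx) (u n (j+1)))
             - gbar g (β (((j-1 : ℤ) : ℝ) * Dx) (u n (j-1))) (β ((j : ℝ) * Dx) (u n j))))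
    -- ℳ bounds the approximations; 𝒫 bounds β on [-ℳ,ℳ]; CFL with L_g = K₁(𝒫), L_β = K₃(ℳ)
    (ℳ : ℝ) (hbound : ∀ (n : ℕ) (j : ℤ), |u n j| ≤ ℳ)
    (P : ℝ) (hP : ∀ x w : ℝ, |w| ≤ ℳ → |β x w| ≤ P)
    (hCFL : lam * (K₁ P * K₃ ℳ) ≤ 1/2)
    -- u₀ ∈ BV(ℝ) with u₀ - u_M compactly supported
    (hu₀_BV : BoundedVariationOn u₀ Set.univ)
    (hu₀_supp : HasCompactSupport (fun x => u₀ x - uM x)) :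
    (∃ K₆ : ℝ, 0 < K₆ ∧ ∀ n : ℕ, ∀ s : Finset ℤ,
      ∑ j ∈ s, |u n (j+1) - u n j| ≤ K₆) ∧
    (∀ (n : ℕ) (j : ℤ),
      |u n (j+1) - u n j| ≤ (1 / K₂) *
        (|β (((j+1 : ℤ) : ℝ) * Dx) (u n (j+1)) - β ((j : ℝ) * Dx) (u n j)|
          + |β (((j+1 : ℤ) : ℝ) * Dx) (u n (j+1)) - β ((j : ℝ) * Dx) (u n (j+1))|)) :=
  godunov_spatial_variation_bound_general g β zm zp hzm hzp hg_dec hg_inc hg_zero κ hκ_mono hκ_zero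
    hg_lbp hg_lbm K₁ hK₁_nonneg hC3 hβ_mono K₃ hK₃_nonneg hC5a K₄ hK₄_cont α hα_BV hC5b K₂ hK₂_pos
    hC6 Dx Dt lam hDx hDt hlam u₀ u h0 hstep ℳ hbound P hP hCFL hu₀_BV
end

section
/- Assume the Panov-type assumptions (C-1)–(C-6), u₀ ∈ BV(ℝ) with u₀ − u_M compactly supported, the uniform bound |u_j^n| ≤ ℳ, and the CFL condition λ L_g L_β ≤ 1/2. Then the Godunov approximations satisfy the discrete time-continuity estimates: for every n, Σ_{j∈ℤ} |β_j^{n+1} − β_j^n| ≤ K₅ and Σ_{j∈ℤ} |u_j^{n+1} − u_j^n| ≤ K₅/K₂, where β_j^n = β(x_j,u_j^n) and K₅ is any mesh-independent constant bounding Σ_{j∈ℤ} |β_{j+1}^n − β_j^n| for all n. -/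
open MeasureTheory Filter

lemma gbar_lip' (g : ℝ → ℝ) (K P : ℝ) (hK0 : 0 ≤ K)
    (hg : ∀ z₁ ∈ Set.Icc (-P) P, ∀ z₂ ∈ Set.Icc (-P) P, |g z₁ - g z₂| ≤ K * |z₁ - z₂|)
    (p q p' q' : ℝ) (hp : |p| ≤ P) (hq : |q| ≤ P) (hp' : |p'| ≤ P) (hq' : |q'| ≤ P) :
    |gbar g p q - gbar g p' q'| ≤ K * (|p - p'| + |q - q'|) := by
  have hP0 : 0 ≤ P := le_trans (abs_nonneg p) hp
  have memmax : ∀ r : ℝ, |r| ≤ P → max r 0 ∈ Set.Icc (-P) P := fun r hr =>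
    ⟨le_trans (neg_nonpos_of_nonneg hP0) (le_max_right r 0), max_le (abs_le.mp hr).2 hP0⟩
  have memmin : ∀ r : ℝ, |r| ≤ P → min r 0 ∈ Set.Icc (-P) P := fun r hr =>
    ⟨le_min (abs_le.mp hr).1 (neg_nonpos_of_nonneg hP0), le_trans (min_le_right r 0) hP0⟩
  have h1 : |g (max p 0) - g (max p' 0)| ≤ K * |p - p'| := by
    refine le_trans (hg _ (memmax p hp) _ (memmax p' hp')) ?_
    have h : |max p 0 - max p' 0| ≤ |p - p'| := by
      simpa using abs_max_sub_max_le_max p 0 p' 0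
    nlinarith [abs_nonneg (max p 0 - max p' 0)]
  have h2 : |g (min q 0) - g (min q' 0)| ≤ K * |q - q'| := by
    refine le_trans (hg _ (memmin q hq) _ (memmin q' hq')) ?_
    have h : |min q 0 - min q' 0| ≤ |q - q'| := by
      simpa using abs_min_sub_min_le_max q 0 q' 0
    nlinarith [abs_nonneg (min q 0 - min q' 0)]
  refine le_trans (abs_max_sub_max_le_max _ _ _ _) (max_le (h1.trans ?_) (h2.trans ?_)) <;>
    nlinarith [abs_nonneg (p - p'), abs_nonneg (q - q')]

/-- (Lemma on discrete time-continuity for the Panov-type flux.) Under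
(C-1)–(C-6), `u₀ ∈ BV(ℝ)` with `u₀ - u_M` compactly supported, the uniform bound
`|u_j^n| ≤ ℳ` and the CFL condition `λ L_g L_β ≤ 1/2`: if `K₅` is any mesh-independent
constant bounding `Σ_j |β_{j+1}^n - β_j^n|` for all `n`, then for every `n`,
`Σ_j |β_j^{n+1} - β_j^n| ≤ K₅` and `Σ_j |u_j^{n+1} - u_j^n| ≤ K₅/K₂`. -/
theorem godunov_time_continuity_panov
    -- (C-1): the flux has the form A(x,u) = g(β(x,u))
    (g : ℝ → ℝ) (β : ℝ → ℝ → ℝ) (A : ℝ → ℝ → ℝ)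
    (hC1 : ∀ x u, A x u = g (β x u))
    -- (C-2)
    (zm zp : ℝ) (hzm : zm ≤ 0) (hzp : 0 ≤ zp)
    (hg_dec : StrictAntiOn g (Set.Iio zm)) (hg_inc : StrictMonoOn g (Set.Ioi zp))
    (hg_zero : ∀ z ∈ Set.Icc zm zp, g z = 0)
    (κ : ℝ → ℝ) (hκ_cont : ContinuousOn κ (Set.Ici 0))
    (hκ_mono : StrictMonoOn κ (Set.Ici 0)) (hκ_zero : κ 0 = 0)
    (hκ_top : Tendsto κ atTop atTop)
    (hg_lbp : ∀ z, zp ≤ z → κ (z - zp) ≤ g z)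
    (hg_lbm : ∀ z, z ≤ zm → κ (zm - z) ≤ g z)
    -- (C-3)
    (K₁ : ℝ → ℝ) (hK₁_cont : Continuous K₁) (hK₁_nonneg : ∀ r, 0 ≤ K₁ r)
    (hC3 : ∀ r : ℝ, ∀ z₁ ∈ Set.Icc (-r) r, ∀ z₂ ∈ Set.Icc (-r) r,
      |g z₁ - g z₂| ≤ K₁ r * |z₁ - z₂|)
    -- (C-4)
    (Om : Set ℝ) (hOm_closed : IsClosed Om) (hOm_null : volume Om = 0)
    (hβ_cont : ContinuousOn (Function.uncurry β) (Omᶜ ×ˢ (Set.univ : Set ℝ)))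
    (hβ_mono : ∀ x, StrictMono (β x))
    (hβ_inf : ∀ x, Tendsto (fun u => |β x u|) (cocompact ℝ) atTop)
    -- (C-5)
    (K₃ : ℝ → ℝ) (hK₃_cont : Continuous K₃) (hK₃_nonneg : ∀ r, 0 ≤ K₃ r)
    (hC5a : ∀ r : ℝ, ∀ x : ℝ, ∀ u ∈ Set.Icc (-r) r, ∀ v ∈ Set.Icc (-r) r,
      |β x u - β x v| ≤ K₃ r * |u - v|)
    (K₄ : ℝ → ℝ) (hK₄_cont : Continuous K₄) (hK₄_nonneg : ∀ u, 0 ≤ K₄ u)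
    (α : ℝ → ℝ) (hα_BV : BoundedVariationOn α Set.univ)
    (hC5b : ∀ x y u, |β x u - β y u| ≤ K₄ u * |α x - α y|)
    -- (C-6)
    (K₂ : ℝ) (hK₂_pos : 0 < K₂)
    (hC6 : ∀ x u v, K₂ * |u - v| ≤ |β x u - β x v|)
    -- u_M = β⁻¹(·,0)
    (uM : ℝ → ℝ) (huM : ∀ x, β x (uM x) = 0)
    -- the Godunov scheme in β-form on the grid x_j = jΔx, λ = Δt/Δx
    (Dx Dt lam : ℝ) (hDx : 0 < Dx) (hDt : 0 < Dt) (hlam : lam = Dt / Dx)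
    (u₀ : ℝ → ℝ) (u : ℕ → ℤ → ℝ)
    (h0 : ∀ j : ℤ, u 0 j = u₀ ((j : ℝ) * Dx))
    (hstep : ∀ (n : ℕ) (j : ℤ), u (n+1) j = u n j
      - lam * (gbar g (β ((j : ℝ) * Dx) (u n j)) (β (((j+1 : ℤ) : ℝ) * Dx) (u n (j+1)))
             - gbar g (β (((j-1 : ℤ) : ℝ) * Dx) (u n (j-1))) (β ((j : ℝ) * Dx) (u n j))))
    -- ℳ bounds the approximations; 𝒫 bounds β on [-ℳ,ℳ]; CFL with L_g = K₁(𝒫), L_β = K₃(ℳ)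
    (ℳ : ℝ) (hbound : ∀ (n : ℕ) (j : ℤ), |u n j| ≤ ℳ)
    (P : ℝ) (hP : ∀ x w : ℝ, |w| ≤ ℳ → |β x w| ≤ P)
    (hCFL : lam * (K₁ P * K₃ ℳ) ≤ 1/2)
    -- u₀ ∈ BV(ℝ) with u₀ - u_M compactly supported
    (hu₀_BV : BoundedVariationOn u₀ Set.univ)
    (hu₀_supp : HasCompactSupport (fun x => u₀ x - uM x)) :
    ∀ K₅ : ℝ,
      (∀ n : ℕ, ∀ s : Finset ℤ,
        ∑ j ∈ s, |β (((j+1 : ℤ) : ℝ) * Dx) (u n (j+1)) - β ((j : ℝ) * Dx) (u n j)| ≤ K₅) →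
      ∀ n : ℕ,
        (∀ s : Finset ℤ,
          ∑ j ∈ s, |β ((j : ℝ) * Dx) (u (n+1) j) - β ((j : ℝ) * Dx) (u n j)| ≤ K₅) ∧
        (∀ s : Finset ℤ, ∑ j ∈ s, |u (n+1) j - u n j| ≤ K₅ / K₂) := by
  intro K₅ hK₅ n
  have hK₅0 : 0 ≤ K₅ := by simpa using hK₅ 0 ∅
  have hlam0 : 0 ≤ lam := by rw [hlam]; positivity
  set a : ℤ → ℝ := fun j =>
    |β (((j+1 : ℤ) : ℝ) * Dx) (u n (j+1)) - β ((j : ℝ) * Dx) (u n j)| with ha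
  have haj : ∀ k : ℤ,
      a k = |β (((k+1 : ℤ) : ℝ) * Dx) (u n (k+1)) - β ((k : ℝ) * Dx) (u n k)| :=
    fun k => by rw [ha]
  have hsumA : ∀ s : Finset ℤ, ∑ j ∈ s, a j ≤ K₅ := fun s => hK₅ n s
  have hsumB : ∀ s : Finset ℤ, ∑ j ∈ s, a (j - 1) ≤ K₅ := by
    intro s
    have hinj : ∀ x ∈ s, ∀ y ∈ s, x - 1 = y - 1 → x = y := fun x _ y _ h => by omega
    calc ∑ j ∈ s, a (j - 1) = ∑ j ∈ s.image (fun j => j - 1), a j :=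
          (Finset.sum_image hinj).symm
      _ ≤ K₅ := hsumA _
  have hc0 : 0 ≤ lam * (K₁ P * K₃ ℳ) :=
    mul_nonneg hlam0 (mul_nonneg (hK₁_nonneg P) (hK₃_nonneg ℳ))
  have hmem : ∀ (m : ℕ) (k : ℤ), u m k ∈ Set.Icc (-ℳ) ℳ := fun m k => by
    have := abs_le.mp (hbound m k); exact ⟨this.1, this.2⟩
  have key : ∀ j : ℤ, |β ((j : ℝ) * Dx) (u (n+1) j) - β ((j : ℝ) * Dx) (u n j)|
      ≤ lam * (K₁ P * K₃ ℳ) * (a j + a (j - 1)) := by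
    intro j
    have haj1 : a (j - 1)
        = |β ((j : ℝ) * Dx) (u n j) - β (((j-1 : ℤ) : ℝ) * Dx) (u n (j-1))| := by
      rw [haj (j - 1), show j - 1 + 1 = j from by ring]
    have hβlip := hC5a ℳ ((j : ℝ) * Dx) (u (n+1) j) (hmem (n+1) j) (u n j) (hmem n j)
    have hgl := gbar_lip' g (K₁ P) P (hK₁_nonneg P) (hC3 P)
        (β ((j : ℝ) * Dx) (u n j)) (β (((j+1 : ℤ) : ℝ) * Dx) (u n (j+1)))
        (β (((j-1 : ℤ) : ℝ) * Dx) (u n (j-1))) (β ((j : ℝ) * Dx) (u n j))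
        (hP _ _ (hbound n j)) (hP _ _ (hbound n (j+1)))
        (hP _ _ (hbound n (j-1))) (hP _ _ (hbound n j))
    rw [← haj1, ← haj j] at hgl
    have habs : |u (n+1) j - u n j|
        = lam * |gbar g (β ((j : ℝ) * Dx) (u n j)) (β (((j+1 : ℤ) : ℝ) * Dx) (u n (j+1)))
             - gbar g (β (((j-1 : ℤ) : ℝ) * Dx) (u n (j-1))) (β ((j : ℝ) * Dx) (u n j))| := by
      rw [hstep n j]
      rw [show u n j - lam * (gbar g (β ((j : ℝ) * Dx) (u n j))
            (β (((j+1 : ℤ) : ℝ) * Dx) (u n (j+1)))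
          - gbar g (β (((j-1 : ℤ) : ℝ) * Dx) (u n (j-1))) (β ((j : ℝ) * Dx) (u n j))) - u n j
        = -(lam * (gbar g (β ((j : ℝ) * Dx) (u n j)) (β (((j+1 : ℤ) : ℝ) * Dx) (u n (j+1)))
          - gbar g (β (((j-1 : ℤ) : ℝ) * Dx) (u n (j-1))) (β ((j : ℝ) * Dx) (u n j)))) from by
          ring]
      rw [abs_neg, abs_mul, abs_of_nonneg hlam0]
    calc |β ((j : ℝ) * Dx) (u (n+1) j) - β ((j : ℝ) * Dx) (u n j)|
        ≤ K₃ ℳ * |u (n+1) j - u n j| := hβlip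
      _ ≤ K₃ ℳ * (lam * (K₁ P * (a (j - 1) + a j))) := by
          rw [habs]
          exact mul_le_mul_of_nonneg_left
            (mul_le_mul_of_nonneg_left hgl hlam0) (hK₃_nonneg ℳ)
      _ = lam * (K₁ P * K₃ ℳ) * (a j + a (j - 1)) := by ring
  have part1 : ∀ s : Finset ℤ,
      ∑ j ∈ s, |β ((j : ℝ) * Dx) (u (n+1) j) - β ((j : ℝ) * Dx) (u n j)| ≤ K₅ := by
    intro s
    calc ∑ j ∈ s, |β ((j : ℝ) * Dx) (u (n+1) j) - β ((j : ℝ) * Dx) (u n j)|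
        ≤ ∑ j ∈ s, lam * (K₁ P * K₃ ℳ) * (a j + a (j - 1)) :=
          Finset.sum_le_sum fun j _ => key j
      _ = lam * (K₁ P * K₃ ℳ) * ((∑ j ∈ s, a j) + ∑ j ∈ s, a (j - 1)) := by
          rw [← Finset.mul_sum, Finset.sum_add_distrib]
      _ ≤ K₅ := by
          have h1 := hsumA s
          have h2 := hsumB s
          nlinarith [mul_le_mul_of_nonneg_left (add_le_add h1 h2) hc0]
  refine ⟨part1, fun s => ?_⟩
  have hpt : ∀ j : ℤ, |u (n+1) j - u n j|
      ≤ |β ((j : ℝ) * Dx) (u (n+1) j) - β ((j : ℝ) * Dx) (u n j)| / K₂ := by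
    intro j
    rw [le_div_iff₀ hK₂_pos]
    have := hC6 ((j : ℝ) * Dx) (u (n+1) j) (u n j)
    linarith
  calc ∑ j ∈ s, |u (n+1) j - u n j|
      ≤ ∑ j ∈ s, |β ((j : ℝ) * Dx) (u (n+1) j) - β ((j : ℝ) * Dx) (u n j)| / K₂ :=
        Finset.sum_le_sum fun j _ => hpt j
    _ = (∑ j ∈ s, |β ((j : ℝ) * Dx) (u (n+1) j) - β ((j : ℝ) * Dx) (u n j)|) / K₂ :=
        (Finset.sum_div _ _ _).symm
    _ ≤ K₅ / K₂ := by gcongr; exact part1 s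
end
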